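/- arXiv:math/0509207 — 6 statements merged into one kernel-verified Lean document; each statement's English description precedes it below -/
import Mathlib

section
/- If P(x) = Σ_{i=0}^n a_i x^i is a real polynomial with positive coefficients having only real zeros, then for 1 ≤ i ≤ n−1 one has a_i^2 ≥ a_{i−1} a_{i+1} (1 + 1/i)(1 + 1/(n−i)). -/
open Polynomial Finset

/-- A real polynomial has only real zeros (all its zeros are real):
the number of real roots (with multiplicity) equals the degree. -/
def RealRooted (f : Polynomial ℝ) : Prop := f.roots.card = f.natDegree

/-- A real polynomial is standard if it is zero or has positive leading coefficient. -/
def Standard (f : Polynomial ℝ) : Prop := f = 0 ∨ 0 < f.leadingCoeff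

/-- `g` alternates left of `f`: both have the same degree `n`, both are real-rooted,
and with zeros listed in nonincreasing order `r 0 ≥ r 1 ≥ …` (for `f`) and
`s 0 ≥ s 1 ≥ …` (for `g`) we have `s n ≤ r n ≤ s (n-1) ≤ … ≤ s 0 ≤ r 0`. -/
def AltLeft (g f : Polynomial ℝ) : Prop :=
  ∃ n : ℕ, ∃ r s : Fin n → ℝ,
    f = Polynomial.C f.leadingCoeff * ∏ i, (Polynomial.X - Polynomial.C (r i)) ∧
    g = Polynomial.C g.leadingCoeff * ∏ i, (Polynomial.X - Polynomial.C (s i)) ∧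
    (∀ i : Fin n, s i ≤ r i) ∧
    (∀ (i : ℕ) (h : i + 1 < n), r ⟨i + 1, h⟩ ≤ s ⟨i, Nat.lt_of_succ_lt h⟩)

/-- `g` interlaces `f`: `deg f = deg g + 1` and the zeros weakly interleave. -/
def Interlaces (g f : Polynomial ℝ) : Prop :=
  ∃ n : ℕ, ∃ r : Fin (n + 1) → ℝ, ∃ s : Fin n → ℝ,
    f = Polynomial.C f.leadingCoeff * ∏ i, (Polynomial.X - Polynomial.C (r i)) ∧
    g = Polynomial.C g.leadingCoeff * ∏ i, (Polynomial.X - Polynomial.C (s i)) ∧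
    ∀ i : Fin n, r i.succ ≤ s i ∧ s i ≤ r i.castSucc

/-- `g ⪯ f` : `g` alternates left of `f` or `g` interlaces `f`. -/
def Prec (g f : Polynomial ℝ) : Prop := AltLeft g f ∨ Interlaces g f

/-- strict alternation -/
def StrictAltLeft (g f : Polynomial ℝ) : Prop :=
  ∃ n : ℕ, ∃ r s : Fin n → ℝ,
    f = Polynomial.C f.leadingCoeff * ∏ i, (Polynomial.X - Polynomial.C (r i)) ∧
    g = Polynomial.C g.leadingCoeff * ∏ i, (Polynomial.X - Polynomial.C (s i)) ∧
    (∀ i : Fin n, s i < r i) ∧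
    (∀ (i : ℕ) (h : i + 1 < n), r ⟨i + 1, h⟩ < s ⟨i, Nat.lt_of_succ_lt h⟩)

/-- strict interlacing -/
def StrictInterlaces (g f : Polynomial ℝ) : Prop :=
  ∃ n : ℕ, ∃ r : Fin (n + 1) → ℝ, ∃ s : Fin n → ℝ,
    f = Polynomial.C f.leadingCoeff * ∏ i, (Polynomial.X - Polynomial.C (r i)) ∧
    g = Polynomial.C g.leadingCoeff * ∏ i, (Polynomial.X - Polynomial.C (s i)) ∧
    ∀ i : Fin n, r i.succ < s i ∧ s i < r i.castSucc

/-- `g ≺ f` : strict alternation or strict interlacing. -/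
def SPrec (g f : Polynomial ℝ) : Prop := StrictAltLeft g f ∨ StrictInterlaces g f

/-- PF: nonnegative coefficients and only real zeros. -/
def PFpoly (f : Polynomial ℝ) : Prop := (∀ i, 0 ≤ f.coeff i) ∧ RealRooted f

/-!
Differentiation (by Rolle's theorem) and reversal of the coefficients (which inverts the
nonzero roots) both preserve real-rootedness. Starting from `P` of degree `n`, differentiate
`i - 1` times, reverse, and differentiate `n - i - 1` more times: what is left is a
real-rooted quadratic whose coefficients are, up to factorials, `a (i + 1)`, `a i`,
`a (i - 1)`. Its discriminant is nonnegative, and clearing the factorials gives Newton's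
inequality.
-/

open scoped Polynomial Nat

namespace Polynomial

theorem Splits.reverse {K : Type*} [Field K] {f : K[X]} (hf : f.Splits) :
    f.reverse.Splits := by
  induction hf using Submonoid.closure_induction with
  | mem g hg =>
    refine Splits.of_natDegree_le_one ((reverse_natDegree_le g).trans ?_)
    rcases hg with ⟨a, rfl⟩ | ⟨a, rfl⟩
    · simp
    · exact (natDegree_X_add_C a).le
  | one => rw [← C_1, reverse_C]; exact Splits.C 1
  | mul f g _ _ hf hg => rw [reverse_mul_of_domain]; exact hf.mul hg

section IterateDerivative

variable {R : Type*} [Semiring R]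

theorem natDegree_iterate_derivative_eq [Module.IsTorsionFree ℕ R] (p : R[X]) {k : ℕ}
    (hk : k ≤ p.natDegree) : (derivative^[k] p).natDegree = p.natDegree - k := by
  rcases eq_or_ne p 0 with rfl | hp
  · simp
  refine natDegree_eq_of_le_of_coeff_ne_zero (natDegree_iterate_derivative p k) ?_
  rw [coeff_iterate_derivative, Nat.sub_add_cancel hk]
  exact smul_ne_zero (Nat.descFactorial_pos.mpr hk).ne' (leadingCoeff_ne_zero.mpr hp)

theorem factorial_mul_coeff_iterate_derivative (p : R[X]) (k j : ℕ) :
    (j ! : R) * (derivative^[k] p).coeff j = ((j + k)! : R) * p.coeff (j + k) := by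
  rw [coeff_iterate_derivative, nsmul_eq_mul, ← mul_assoc, ← Nat.cast_mul,
    ← Nat.factorial_mul_descFactorial (Nat.le_add_left k j), Nat.add_sub_cancel]

theorem coeff_zero_iterate_derivative (p : R[X]) (k : ℕ) :
    (derivative^[k] p).coeff 0 = k ! * p.coeff k := by
  simpa using factorial_mul_coeff_iterate_derivative p k 0

theorem coeff_one_iterate_derivative (p : R[X]) (k : ℕ) :
    (derivative^[k] p).coeff 1 = (k + 1)! * p.coeff (k + 1) := by
  simpa [add_comm 1 k] using factorial_mul_coeff_iterate_derivative p k 1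

theorem two_mul_coeff_two_iterate_derivative (p : R[X]) (k : ℕ) :
    2 * (derivative^[k] p).coeff 2 = (k + 2)! * p.coeff (k + 2) := by
  simpa [add_comm 2 k] using factorial_mul_coeff_iterate_derivative p k 2

end IterateDerivative

section SumRange

variable {R : Type*} [Semiring R]

theorem coeff_sum_range_C_mul_X_pow (a : ℕ → R) (n j : ℕ) :
    (∑ i ∈ Finset.range (n + 1), C (a i) * X ^ i).coeff j = if j ≤ n then a j else 0 := by
  simp

theorem natDegree_sum_range_C_mul_X_pow (a : ℕ → R) {n : ℕ} (hn : a n ≠ 0) :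
    (∑ i ∈ Finset.range (n + 1), C (a i) * X ^ i).natDegree = n := by
  refine natDegree_eq_of_le_of_coeff_ne_zero (natDegree_le_iff_coeff_eq_zero.mpr fun j hj => ?_)
    (by rwa [coeff_sum_range_C_mul_X_pow, if_pos le_rfl])
  rw [coeff_sum_range_C_mul_X_pow, if_neg (by omega)]

end SumRange

end Polynomial

theorem realRooted_iff_splits {f : ℝ[X]} : RealRooted f ↔ f.Splits :=
  splits_iff_card_roots.symm

namespace RealRooted

variable {f : ℝ[X]}

theorem derivative (hf : RealRooted f) : RealRooted (derivative f) := by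
  rcases eq_or_ne f.natDegree 0 with h0 | h0
  · simp [derivative_of_natDegree_zero h0, RealRooted]
  · have hlt := natDegree_derivative_lt h0
    have hle := f.card_roots_le_derivative
    have hroots := card_roots' (Polynomial.derivative f)
    unfold RealRooted at *
    omega

theorem iterate_derivative (hf : RealRooted f) (k : ℕ) :
    RealRooted (Polynomial.derivative^[k] f) := by
  induction k with
  | zero => exact hf
  | succ k ih => rw [Function.iterate_succ_apply']; exact ih.derivative

theorem reverse (hf : RealRooted f) : RealRooted f.reverse :=
  realRooted_iff_splits.mpr (realRooted_iff_splits.mp hf).reverse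

theorem discrim_nonneg (hf : RealRooted f) (h2 : f.natDegree = 2) :
    0 ≤ discrim (f.coeff 2) (f.coeff 1) (f.coeff 0) := by
  obtain ⟨x, hx⟩ : ∃ x, x ∈ f.roots :=
    Multiset.card_pos_iff_exists_mem.mp (by rw [hf, h2]; norm_num)
  have hquad : f.coeff 2 * (x * x) + f.coeff 1 * x + f.coeff 0 = 0 := by
    have hroot := (isRoot_of_mem_roots hx).eq_zero
    rw [eval_eq_sum_range, h2] at hroot
    simp only [Finset.sum_range_succ, Finset.sum_range_zero] at hroot
    linear_combination hroot
  rw [discrim_eq_sq_of_quadratic_eq_zero hquad]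
  positivity

theorem newton_leading (hf : RealRooted f) {m : ℕ} (hdeg : f.natDegree = m + 2) :
    2 * (m + 2) * f.coeff (m + 2) * f.coeff m ≤ (m + 1) * f.coeff (m + 1) ^ 2 := by
  have hQ : (Polynomial.derivative^[m] f).natDegree = 2 := by
    rw [natDegree_iterate_derivative_eq f (by omega), hdeg]; omega
  have hdisc := (hf.iterate_derivative m).discrim_nonneg hQ
  have h2 := two_mul_coeff_two_iterate_derivative f m
  rw [discrim, coeff_zero_iterate_derivative, coeff_one_iterate_derivative] at hdisc
  simp only [Nat.factorial_succ, Nat.cast_mul] at hdisc h2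
  push_cast at hdisc h2
  have hM : (0 : ℝ) < (m + 1) * m ! ^ 2 := by positivity
  have key : 0 ≤ (m + 1) * m ! ^ 2 *
      ((m + 1) * f.coeff (m + 1) ^ 2 - 2 * (m + 2) * f.coeff (m + 2) * f.coeff m) := by
    linear_combination hdisc - 2 * m ! * f.coeff m * h2
  exact sub_nonneg.mp ((mul_nonneg_iff_of_pos_left hM).mp key)

theorem newton_trailing (hf : RealRooted f) {m : ℕ} (hdeg : f.natDegree = m + 2)
    (h0 : f.coeff 0 ≠ 0) :
    2 * (m + 2) * f.coeff 0 * f.coeff 2 ≤ (m + 1) * f.coeff 1 ^ 2 := by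
  have hrev : f.reverse.natDegree = m + 2 := by
    rw [reverse_natDegree, natTrailingDegree_eq_zero.mpr (Or.inr h0), hdeg, Nat.sub_zero]
  have hcoeff : ∀ j ≤ m + 2, f.reverse.coeff j = f.coeff (m + 2 - j) := fun j hj => by
    rw [coeff_reverse, hdeg, revAt_le hj]
  have := hf.reverse.newton_leading hrev
  rwa [hcoeff _ le_rfl, hcoeff _ (by omega), hcoeff _ (by omega), Nat.sub_self,
    show m + 2 - (m + 1) = 1 by omega, show m + 2 - m = 2 by omega] at this

theorem newton (hf : RealRooted f) {k m : ℕ} (hdeg : f.natDegree = k + m + 2)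
    (hk : f.coeff k ≠ 0) :
    (k + 2) * (m + 2) * f.coeff k * f.coeff (k + 2) ≤
      (k + 1) * (m + 1) * f.coeff (k + 1) ^ 2 := by
  have hg : (Polynomial.derivative^[k] f).natDegree = m + 2 := by
    rw [natDegree_iterate_derivative_eq f (by omega), hdeg]; omega
  have hg0 : (Polynomial.derivative^[k] f).coeff 0 ≠ 0 := by
    rw [coeff_zero_iterate_derivative]; exact mul_ne_zero (by positivity) hk
  have := (hf.iterate_derivative k).newton_trailing hg hg0
  have h2 := two_mul_coeff_two_iterate_derivative f k
  rw [coeff_zero_iterate_derivative, coeff_one_iterate_derivative] at this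
  simp only [Nat.factorial_succ, Nat.cast_mul] at this h2
  push_cast at this h2
  have hK : (0 : ℝ) < (k + 1) * k ! ^ 2 := by positivity
  have key : 0 ≤ (k + 1) * k ! ^ 2 * ((k + 1) * (m + 1) * f.coeff (k + 1) ^ 2 -
      (k + 2) * (m + 2) * f.coeff k * f.coeff (k + 2)) := by
    linear_combination this - (m + 2) * k ! * f.coeff k * h2
  exact sub_nonneg.mp ((mul_nonneg_iff_of_pos_left hK).mp key)

end RealRooted

theorem newton_inequality (n : ℕ) (a : ℕ → ℝ) (P : Polynomial ℝ)
    (hP : P = ∑ i ∈ Finset.range (n + 1), Polynomial.C (a i) * Polynomial.X ^ i)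
    (hpos : ∀ i ≤ n, 0 < a i) (hrr : RealRooted P) :
    ∀ i, 1 ≤ i → i < n →
      a (i - 1) * a (i + 1) * (1 + 1 / (i : ℝ)) * (1 + 1 / ((n : ℝ) - (i : ℝ))) ≤ a i ^ 2 := by
  intro i hi hin
  obtain ⟨k, rfl⟩ : ∃ k, i = k + 1 := ⟨i - 1, by omega⟩
  obtain ⟨m, rfl⟩ : ∃ m, n = k + m + 2 := ⟨n - k - 2, by omega⟩
  have hcoeff : ∀ j ≤ k + m + 2, P.coeff j = a j := fun j hj => by
    rw [hP, coeff_sum_range_C_mul_X_pow, if_pos hj]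
  have hdeg : P.natDegree = k + m + 2 :=
    hP ▸ natDegree_sum_range_C_mul_X_pow a (hpos _ le_rfl).ne'
  have key := hrr.newton hdeg (by rw [hcoeff k (by omega)]; exact (hpos k (by omega)).ne')
  rw [hcoeff k (by omega), hcoeff (k + 1) (by omega), hcoeff (k + 2) (by omega)] at key
  rw [Nat.add_sub_cancel]
  push_cast
  rw [show (k : ℝ) + m + 2 - (k + 1) = m + 1 by ring]
  field_simp
  linear_combination key
end

section
/- If a real polynomial with positive coefficients has only real zeros, then its coefficient sequence is log-concave: a_{i−1} a_{i+1} ≤ a_i^2 for 1 ≤ i ≤ n−1, and hence unimodal. -/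
open Polynomial Finset

-- auxiliary lemmas

lemma coeff_linmul_zero (b : ℝ) (Q : Polynomial ℝ) :
    ((X + C b) * Q).coeff 0 = b * Q.coeff 0 := by
  simp [mul_coeff_zero]

lemma coeff_linmul_succ (b : ℝ) (Q : Polynomial ℝ) (k : ℕ) :
    ((X + C b) * Q).coeff (k + 1) = Q.coeff k + b * Q.coeff (k + 1) := by
  simp [add_mul, coeff_X_mul]

lemma key (S : Multiset ℝ) (hS : ∀ b ∈ S, 0 < b) :
    (∀ i, i ≤ Multiset.card S → 0 < ((S.map fun b => X + C b).prod).coeff i) ∧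
    (∀ i, Multiset.card S < i → ((S.map fun b => X + C b).prod).coeff i = 0) ∧
    (∀ i, ((S.map fun b => X + C b).prod).coeff i * ((S.map fun b => X + C b).prod).coeff (i + 2)
      ≤ ((S.map fun b => X + C b).prod).coeff (i + 1) ^ 2) := by
  induction S using Multiset.induction_on with
  | empty =>
    refine ⟨?_, ?_, ?_⟩
    · intro i hi
      have h0 : i = 0 := by simpa using hi
      subst h0; simp
    · intro i hi
      have h0 : i ≠ 0 := by simp at hi; omega
      rw [Multiset.map_zero, Multiset.prod_zero, coeff_one, if_neg h0]
    · intro i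
      simp only [Multiset.map_zero, Multiset.prod_zero, coeff_one]
      split_ifs <;> norm_num
  | cons b s ih =>
    have hb : 0 < b := hS b (Multiset.mem_cons_self b s)
    have hs : ∀ x ∈ s, 0 < x := fun x hx => hS x (Multiset.mem_cons_of_mem hx)
    obtain ⟨h1, h2, h3⟩ := ih hs
    set Q := (s.map fun b => X + C b).prod with hQ
    set c : ℕ → ℝ := Q.coeff with hc
    have hnn : ∀ i, 0 ≤ c i := by
      intro i
      rcases le_or_gt i (Multiset.card s) with h | h
      · exact (h1 i h).le
      · exact (h2 i h).ge
    have hprod : ((b ::ₘ s).map fun b => X + C b).prod = (X + C b) * Q := by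
      rw [Multiset.map_cons, Multiset.prod_cons]
    have hcard : Multiset.card (b ::ₘ s) = Multiset.card s + 1 := by simp
    rw [hprod, hcard]
    -- three-term lemma
    have h4 : ∀ k, c k * c (k + 3) ≤ c (k + 1) * c (k + 2) := by
      intro k
      rcases le_or_gt (k + 2) (Multiset.card s) with h | h
      · have p1 : 0 < c (k + 1) := h1 _ (by omega)
        have p2 : 0 < c (k + 2) := h1 _ h
        have m1 := h3 k
        have m2 := h3 (k + 1)
        have key : (c k * c (k + 2)) * (c (k + 1) * c (k + 3)) ≤ c (k + 1) ^ 2 * c (k + 2) ^ 2 :=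
          mul_le_mul m1 (by linarith [h3 (k+1)]) (mul_nonneg (hnn _) (hnn _)) (by positivity)
        nlinarith [mul_pos p1 p2, hnn k, hnn (k + 3)]
      · have : c (k + 3) = 0 := h2 _ (by omega)
        rw [this, mul_zero]
        exact mul_nonneg (hnn _) (hnn _)
    refine ⟨?_, ?_, ?_⟩
    · intro i hi
      rcases i with _ | k
      · rw [coeff_linmul_zero]
        exact mul_pos hb (h1 0 (Nat.zero_le _))
      · rw [coeff_linmul_succ]
        simp only [← hc]
        have : 0 < c k := h1 k (by omega)
        have := hnn (k + 1)
        nlinarith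
    · intro i hi
      rcases i with _ | k
      · omega
      · rw [coeff_linmul_succ]
        simp only [← hc]
        rw [h2 k (by omega), h2 (k + 1) (by omega)]
        ring
    · intro i
      rcases i with _ | k
      · rw [coeff_linmul_zero, coeff_linmul_succ, coeff_linmul_succ]
        simp only [← hc]
        nlinarith [sq_nonneg (c 0), mul_nonneg hb.le (mul_nonneg (hnn 0) (hnn 1)),
          mul_nonneg (mul_nonneg hb.le hb.le) (sub_nonneg.mpr (h3 0))]
      · rw [coeff_linmul_succ, coeff_linmul_succ, coeff_linmul_succ]
        simp only [← hc]
        nlinarith [sub_nonneg.mpr (h3 k), mul_nonneg hb.le (sub_nonneg.mpr (h4 k)),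
          mul_nonneg (mul_nonneg hb.le hb.le) (sub_nonneg.mpr (h3 (k + 1)))]

theorem log_concave_and_unimodal (n : ℕ) (a : ℕ → ℝ) (P : Polynomial ℝ)
    (hP : P = ∑ i ∈ Finset.range (n + 1), Polynomial.C (a i) * Polynomial.X ^ i)
    (hpos : ∀ i ≤ n, 0 < a i) (hrr : RealRooted P) :
    (∀ i, 1 ≤ i → i < n → a (i - 1) * a (i + 1) ≤ a i ^ 2) ∧
    (∃ m ≤ n, (∀ i j, i ≤ j → j ≤ m → a i ≤ a j) ∧
      (∀ i j, m ≤ i → i ≤ j → j ≤ n → a j ≤ a i)) := by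
    classical
  have hcoeff : ∀ k, P.coeff k = if k ≤ n then a k else 0 := by
    intro k
    rw [hP]
    rw [finset_sum_coeff]
    simp only [coeff_C_mul, coeff_X_pow, mul_ite, mul_one, mul_zero]
    rw [Finset.sum_ite_eq (Finset.range (n+1)) k a]
    simp [Nat.lt_succ_iff]
  have hPn : P.coeff n = a n := by rw [hcoeff]; simp
  have hP0 : P ≠ 0 := fun h => by
    have := hpos n le_rfl; rw [h] at hPn; simp at hPn; linarith [hPn ▸ this]
  have hdeg : P.natDegree = n := by
    apply le_antisymm
    · apply Polynomial.natDegree_le_iff_coeff_eq_zero.mpr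
      intro k hk
      rw [hcoeff]; simp [Nat.not_le.mpr hk]
    · exact Polynomial.le_natDegree_of_ne_zero (by rw [hPn]; exact (hpos n le_rfl).ne')
  have hlead : P.leadingCoeff = a n := by rw [Polynomial.leadingCoeff, hdeg, hPn]
  -- roots are negative
  have hroots_neg : ∀ r ∈ P.roots, r < 0 := by
    intro r hr
    by_contra hge
    push_neg at hge
    have hev : P.eval r = 0 := (Polynomial.isRoot_of_mem_roots hr)
    rw [hP] at hev
    simp only [Polynomial.eval_finset_sum, Polynomial.eval_mul, Polynomial.eval_C,
      Polynomial.eval_pow, Polynomial.eval_X] at hev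
    have : 0 < ∑ i ∈ Finset.range (n + 1), a i * r ^ i := by
      apply Finset.sum_pos'
      · intro i hi
        exact mul_nonneg (hpos i (Nat.lt_succ_iff.mp (Finset.mem_range.mp hi))).le
          (pow_nonneg hge i)
      · exact ⟨0, Finset.mem_range.mpr (Nat.succ_pos n), by
          simpa using (hpos 0 (Nat.zero_le n))⟩
    linarith [hev ▸ this]
  set S : Multiset ℝ := P.roots.map (fun r => -r) with hSdef
  have hScard : Multiset.card S = n := by
    rw [hSdef, Multiset.card_map]; rw [hrr, hdeg]
  have hSpos : ∀ b ∈ S, 0 < b := by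
    intro b hb
    rw [hSdef] at hb
    obtain ⟨r, hr, rfl⟩ := Multiset.mem_map.mp hb
    linarith [hroots_neg r hr]
  have hmap : S.map (fun b => X + C b) = P.roots.map (fun r => X - C r) := by
    rw [hSdef, Multiset.map_map]
    apply Multiset.map_congr rfl
    intro r _
    simp [sub_eq_add_neg]
  have hfact : P = Polynomial.C (a n) * (S.map fun b => X + C b).prod := by
    have h := Polynomial.C_leadingCoeff_mul_prod_multiset_X_sub_C (p := P) (by rw [hrr])
    rw [hmap, ← hlead]
    exact h.symm
  set Q := (S.map fun b => X + C b).prod with hQdef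
  obtain ⟨k1, k2, k3⟩ := key S hSpos
  rw [hScard] at k1 k2
  have hac : ∀ i ≤ n, a i = a n * Q.coeff i := by
    intro i hi
    have : P.coeff i = a i := by rw [hcoeff, if_pos hi]
    rw [← this, hfact, Polynomial.coeff_C_mul]
  have han : 0 < a n := hpos n le_rfl
  -- log concavity
  have hlc : ∀ i, 1 ≤ i → i < n → a (i - 1) * a (i + 1) ≤ a i ^ 2 := by
    intro i h1 h2
    obtain ⟨j, rfl⟩ : ∃ j, i = j + 1 := ⟨i - 1, by omega⟩
    simp only [Nat.add_sub_cancel]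
    rw [hac j (by omega), hac (j + 1) (by omega), hac (j + 2) (by omega)]
    have := k3 j
    nlinarith [sq_nonneg (a n)]
  refine ⟨hlc, ?_⟩
  -- chain lemma
  have hchain : ∀ i j, i ≤ j → j + 1 ≤ n → a i * a (j + 1) ≤ a (i + 1) * a j := by
    intro i j hij hjn
    induction j, hij using Nat.le_induction with
    | base => ring_nf; rfl
    | succ j hij IH =>
      have IH' := IH (by omega)
      have hl := hlc (j + 1) (by omega) (by omega)
      simp only [Nat.add_sub_cancel] at hl
      have pj : 0 < a j := hpos j (by omega)
      have pj1 : 0 < a (j + 1) := hpos (j + 1) (by omega)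
      have pi : 0 < a i := hpos i (by omega)
      have pi1 : 0 < a (i + 1) := hpos (i + 1) (by omega)
      have pj2 : 0 < a (j + 2) := hpos (j + 2) (by omega)
      nlinarith [mul_le_mul IH' hl (mul_nonneg pj.le pj2.le) (mul_nonneg pi1.le pj.le),
        mul_pos pj pj1]
  -- unimodality
  have hex : ∃ m, m = n ∨ a (m + 1) < a m := ⟨n, Or.inl rfl⟩
  set m := Nat.find hex with hm
  have hmn : m ≤ n := Nat.find_min' hex (Or.inl rfl)
  refine ⟨m, hmn, ?_, ?_⟩
  · intro i j hij hjm
    induction j, hij using Nat.le_induction with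
    | base => exact le_refl _
    | succ j hij IH =>
      have hjm' : j < m := by omega
      have := Nat.find_min hex hjm'
      push_neg at this
      have h2 := this.2
      exact le_trans (IH (by omega)) h2
  · intro i j hmi hij hjn
    have hstep : ∀ k, m ≤ k → k < n → a (k + 1) ≤ a k := by
      intro k hmk hkn
      have hspec := Nat.find_spec hex
      rw [← hm] at hspec
      rcases hspec with h | h
      · omega
      · have hc := hchain m k hmk (by omega)
        have pm : 0 < a m := hpos m (by omega)
        have pk : 0 < a k := hpos k (by omega)
        nlinarith
    induction j, hij using Nat.le_induction with
    | base => exact le_refl _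
    | succ j hij IH =>
      exact le_trans (hstep j (by omega) (by omega)) (IH (by omega))
end

section
/- Let F(x) = a(x) f(x) + b(x) g(x) where a, b are real polynomials, f and g have only real zeros with g interlacing or alternating left of f, deg F equals deg f or deg f + 1, and F and g have leading coefficients of the same sign. If b(r) ≤ 0 for every real zero r of f, then F has only real zeros and f interlaces or alternates left of F. -/
open Polynomial Finset

open Filter

noncomputable def cge (M : Multiset ℝ) (x : ℝ) : ℕ := (M.filter (fun m => x ≤ m)).card
noncomputable def cgt (M : Multiset ℝ) (x : ℝ) : ℕ := (M.filter (fun m => x < m)).card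
def tupMS {n : ℕ} (ρ : Fin n → ℝ) : Multiset ℝ := Multiset.map ρ Finset.univ.val


lemma cgt_le_cge (M : Multiset ℝ) (x : ℝ) : cgt M x ≤ cge M x :=
  Multiset.card_le_card (Multiset.monotone_filter_right M (fun a h => le_of_lt h))

lemma cge_le_card (M : Multiset ℝ) (x : ℝ) : cge M x ≤ Multiset.card M :=
  Multiset.card_le_card (Multiset.filter_le _ M)

lemma cgt_le_card (M : Multiset ℝ) (x : ℝ) : cgt M x ≤ Multiset.card M :=
  Multiset.card_le_card (Multiset.filter_le _ M)

lemma cge_anti {x y : ℝ} (M : Multiset ℝ) (h : x ≤ y) : cge M y ≤ cge M x :=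
  Multiset.card_le_card (Multiset.monotone_filter_right M (fun a ha => le_trans h ha))

lemma cgt_anti {x y : ℝ} (M : Multiset ℝ) (h : x ≤ y) : cgt M y ≤ cgt M x :=
  Multiset.card_le_card (Multiset.monotone_filter_right M (fun a ha => lt_of_le_of_lt h ha))

lemma cge_le_cgt {x y : ℝ} (M : Multiset ℝ) (h : x < y) : cge M y ≤ cgt M x :=
  Multiset.card_le_card (Multiset.monotone_filter_right M (fun a ha => lt_of_lt_of_le h ha))

lemma cge_eq_cgt_add_count (M : Multiset ℝ) (x : ℝ) : cge M x = cgt M x + M.count x := by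
  unfold cge cgt
  rw [Multiset.count, Multiset.countP_eq_card_filter, ← Multiset.card_add]
  congr 1
  have h := Multiset.filter_add_filter (fun m => x < m) (fun m => x = m) M
  have h1 : Multiset.filter (fun m => x < m ∨ x = m) M = Multiset.filter (fun m => x ≤ m) M := by
    apply Multiset.filter_congr; intro y _; constructor
    · rintro (h|h) <;> simp [le_of_lt, h]
    · intro h; rcases lt_or_eq_of_le h with h'|h'; exact Or.inl h'; exact Or.inr h'
  have h2 : Multiset.filter (fun m => x < m ∧ x = m) M = 0 := by
    apply Multiset.filter_eq_nil.mpr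
    rintro y _ ⟨h1, h2⟩; exact absurd h2 (ne_of_lt h1)
  rw [h2, add_zero, h1] at h
  exact h.symm

lemma cge_cons (a x : ℝ) (M : Multiset ℝ) :
    cge (a ::ₘ M) x = cge M x + if x ≤ a then 1 else 0 := by
  unfold cge; rw [Multiset.filter_cons]; split <;> simp [add_comm]

lemma cgt_cons (a x : ℝ) (M : Multiset ℝ) :
    cgt (a ::ₘ M) x = cgt M x + if x < a then 1 else 0 := by
  unfold cgt; rw [Multiset.filter_cons]; split <;> simp [add_comm]

lemma card_tupMS {n : ℕ} (ρ : Fin n → ℝ) : Multiset.card (tupMS ρ) = n := by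
  simp [tupMS]

lemma cge_tup {n : ℕ} (ρ : Fin n → ℝ) (x : ℝ) :
    cge (tupMS ρ) x = (univ.filter (fun i => x ≤ ρ i)).card := by
  unfold cge tupMS
  rw [Multiset.filter_map, Multiset.card_map]
  rfl

lemma cgt_tup {n : ℕ} (ρ : Fin n → ℝ) (x : ℝ) :
    cgt (tupMS ρ) x = (univ.filter (fun i => x < ρ i)).card := by
  unfold cgt tupMS
  rw [Multiset.filter_map, Multiset.card_map]
  rfl

lemma mem_tupMS {n : ℕ} (ρ : Fin n → ℝ) (i : Fin n) : ρ i ∈ tupMS ρ := by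
  exact Multiset.mem_map_of_mem ρ (by simp [Finset.mem_univ])

-- order statistics bridge
lemma cge_of_le {n : ℕ} {ρ : Fin n → ℝ} (hρ : Antitone ρ) {x : ℝ} {i : Fin n}
    (h : x ≤ ρ i) : (i : ℕ) + 1 ≤ cge (tupMS ρ) x := by
  rw [cge_tup]
  calc (i:ℕ) + 1 = (Finset.Iic i).card := (Fin.card_Iic i).symm
    _ ≤ _ := by
      apply Finset.card_le_card
      intro j hj
      simp only [Finset.mem_Iic] at hj
      simp only [Finset.mem_filter, Finset.mem_univ, true_and]
      exact le_trans h (hρ hj)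

lemma cgt_of_lt {n : ℕ} {ρ : Fin n → ℝ} (hρ : Antitone ρ) {x : ℝ} {i : Fin n}
    (h : x < ρ i) : (i : ℕ) + 1 ≤ cgt (tupMS ρ) x := by
  rw [cgt_tup]
  calc (i:ℕ) + 1 = (Finset.Iic i).card := (Fin.card_Iic i).symm
    _ ≤ _ := by
      apply Finset.card_le_card
      intro j hj
      simp only [Finset.mem_Iic] at hj
      simp only [Finset.mem_filter, Finset.mem_univ, true_and]
      exact lt_of_lt_of_le h (hρ hj)

lemma le_of_cge {n : ℕ} {ρ : Fin n → ℝ} (hρ : Antitone ρ) {x : ℝ} {i : Fin n}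
    (h : (i : ℕ) + 1 ≤ cge (tupMS ρ) x) : x ≤ ρ i := by
  by_contra hc
  push_neg at hc
  rw [cge_tup] at h
  have hsub : univ.filter (fun j => x ≤ ρ j) ⊆ Finset.Iio i := by
    intro j hj
    simp only [Finset.mem_filter, Finset.mem_univ, true_and] at hj
    simp only [Finset.mem_Iio]
    by_contra hji
    push_neg at hji
    exact absurd (le_trans hj (hρ hji)) (not_le.mpr hc)
  have := Finset.card_le_card hsub
  rw [Fin.card_Iio] at this
  omega

lemma lt_of_cgt {n : ℕ} {ρ : Fin n → ℝ} (hρ : Antitone ρ) {x : ℝ} {i : Fin n}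
    (h : (i : ℕ) + 1 ≤ cgt (tupMS ρ) x) : x < ρ i := by
  by_contra hc
  push_neg at hc
  rw [cgt_tup] at h
  have hsub : univ.filter (fun j => x < ρ j) ⊆ Finset.Iio i := by
    intro j hj
    simp only [Finset.mem_filter, Finset.mem_univ, true_and] at hj
    simp only [Finset.mem_Iio]
    by_contra hji
    push_neg at hji
    exact absurd (lt_of_lt_of_le hj (hρ hji)) (not_lt.mpr hc)
  have := Finset.card_le_card hsub
  rw [Fin.card_Iio] at this
  omega

-- sorted enumerations for strictly antitone counts
lemma cge_self_of_strictAnti {n : ℕ} {ρ : Fin n → ℝ} (hρ : StrictAnti ρ) (i : Fin n) :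
    cge (tupMS ρ) (ρ i) = (i : ℕ) + 1 := by
  rw [cge_tup]
  have : univ.filter (fun j => ρ i ≤ ρ j) = Finset.Iic i := by
    ext j
    simp only [Finset.mem_filter, Finset.mem_univ, true_and, Finset.mem_Iic]
    constructor
    · intro h
      by_contra hj
      push_neg at hj
      exact absurd (hρ hj) (not_lt.mpr h)
    · intro h; exact hρ.antitone h
  rw [this, Fin.card_Iic]

lemma cgt_self_of_strictAnti {n : ℕ} {ρ : Fin n → ℝ} (hρ : StrictAnti ρ) (i : Fin n) :
    cgt (tupMS ρ) (ρ i) = (i : ℕ) := by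
  rw [cgt_tup]
  have : univ.filter (fun j => ρ i < ρ j) = Finset.Iio i := by
    ext j
    simp only [Finset.mem_filter, Finset.mem_univ, true_and, Finset.mem_Iio]
    constructor
    · intro h
      by_contra hj
      push_neg at hj
      exact absurd (hρ.antitone hj) (not_le.mpr h)
    · intro h; exact hρ h
  rw [this, Fin.card_Iio]

lemma tupMS_eq_ofFn {n : ℕ} (ρ : Fin n → ℝ) : tupMS ρ = ↑(List.ofFn ρ) := by
  unfold tupMS
  have : (Finset.univ.val : Multiset (Fin n)) = ↑(List.finRange n) := rfl
  rw [this, Multiset.map_coe, List.ofFn_eq_map]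

lemma exists_sorted_tuple (M : Multiset ℝ) :
    ∃ ρ : Fin (Multiset.card M) → ℝ, Antitone ρ ∧ tupMS ρ = M := by
  classical
  set L := M.sort (· ≥ ·) with hL
  have hlen : L.length = Multiset.card M := Multiset.length_sort _
  have hsorted : L.Pairwise (· ≥ ·) := Multiset.pairwise_sort (s := M) (r := (· ≥ ·))
  refine ⟨fun i => L.get (Fin.cast hlen.symm i), ?_, ?_⟩
  · intro i j hij
    rcases eq_or_lt_of_le hij with h|h
    · subst h; exact le_refl _
    · exact List.pairwise_iff_get.mp hsorted _ _ h
  · rw [tupMS_eq_ofFn]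
    have : List.ofFn (fun i => L.get (Fin.cast hlen.symm i)) = L := by
      apply List.ext_get
      · simp [hlen]
      · intro k h1 h2
        simp [List.get_ofFn]
    rw [this]; exact Multiset.sort_eq (s := M) (r := (· ≥ ·))

lemma prod_tup {n : ℕ} (ρ : Fin n → ℝ) :
    (∏ i, (X - C (ρ i)) : ℝ[X]) = ((tupMS ρ).map (fun a => X - C a)).prod := by
  unfold tupMS
  rw [Multiset.map_map]
  rfl

lemma tupMS_cast {m n : ℕ} (h : m = n) (ρ : Fin m → ℝ) :
    tupMS (ρ ∘ Fin.cast h.symm) = tupMS ρ := by subst h; rfl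

lemma exists_sorted_tuple' (M : Multiset ℝ) {n : ℕ} (h : Multiset.card M = n) :
    ∃ ρ : Fin n → ℝ, Antitone ρ ∧ tupMS ρ = M := by
  obtain ⟨ρ, h1, h2⟩ := exists_sorted_tuple M
  exact ⟨ρ ∘ Fin.cast h.symm, h1.comp_monotone (fun i j hij => hij), by rw [tupMS_cast h ρ, h2]⟩

lemma factor_of_realrooted {f : ℝ[X]} (hf : RealRooted f) :
    ∃ ρ : Fin f.natDegree → ℝ, Antitone ρ ∧ tupMS ρ = f.roots ∧
      f = C f.leadingCoeff * ∏ i, (X - C (ρ i)) := by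
  obtain ⟨ρ, h1, h2⟩ := exists_sorted_tuple' f.roots hf
  refine ⟨ρ, h1, h2, ?_⟩
  rw [prod_tup, h2, C_leadingCoeff_mul_prod_multiset_X_sub_C hf]

lemma roots_of_factor {n : ℕ} {f : ℝ[X]} {c : ℝ} (hc : c ≠ 0) (r : Fin n → ℝ)
    (hf : f = C c * ∏ i, (X - C (r i))) : f.roots = tupMS r ∧ f.natDegree = n ∧ f ≠ 0 := by
  have hprod : ((tupMS r).map (fun a => X - C a)).prod ≠ 0 :=
    (monic_multiset_prod_of_monic _ _ (fun a _ => monic_X_sub_C a)).ne_zero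
  have hf0 : f ≠ 0 := by
    rw [hf, prod_tup]
    exact mul_ne_zero (by simpa using hc) hprod
  refine ⟨?_, ?_, hf0⟩
  · rw [hf, prod_tup, roots_C_mul _ hc, roots_multiset_prod_X_sub_C]
  · rw [hf, prod_tup, natDegree_C_mul hc, natDegree_multiset_prod_X_sub_C_eq_card]
    simp [tupMS]

lemma multiset_sign_prod (M : Multiset ℝ) (h : ∀ a ∈ M, a ≠ 0) :
    0 < (-1 : ℝ) ^ ((M.filter (fun m => m < 0)).card) * M.prod := by
  induction M using Multiset.induction_on with
  | empty => simp
  | cons a M ih =>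
    have ha : a ≠ 0 := h a (Multiset.mem_cons_self a M)
    have ih' := ih (fun b hb => h b (Multiset.mem_cons_of_mem hb))
    rw [Multiset.filter_cons, Multiset.prod_cons]
    rcases lt_or_gt_of_ne ha with hlt|hgt
    · simp only [hlt, if_pos]
      rw [Multiset.card_add, Multiset.card_singleton, pow_add, pow_one]
      nlinarith
    · rw [if_neg (not_lt.mpr hgt.le)]
      rw [zero_add]
      nlinarith

lemma eval_multiset_prod_sign (P : Multiset ℝ) (x : ℝ) (hx : x ∉ P) :
    0 < (-1 : ℝ) ^ (cgt P x) * ((P.map (fun a => x - a)).prod) := by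
  have h := multiset_sign_prod (P.map (fun a => x - a)) ?_
  · convert h using 3
    unfold cgt
    rw [Multiset.filter_map, Multiset.card_map]
    congr 1
    apply Multiset.filter_congr
    intro y _
    simp only [Function.comp]
    constructor
    · intro h; linarith
    · intro h; linarith
  · intro t ht
    rw [Multiset.mem_map] at ht
    obtain ⟨a, haP, rfl⟩ := ht
    intro hc
    have : x = a := by linarith [sub_eq_zero.mp hc]
    exact hx (this ▸ haP)

lemma exists_pos_eval {Q : ℝ[X]} (hQ : Q ≠ 0) (hlc : 0 < Q.leadingCoeff) : ∃ x, 0 < Q.eval x := by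
  rcases Nat.eq_zero_or_pos Q.natDegree with h0 | hpos
  · refine ⟨0, ?_⟩
    have := Polynomial.eq_C_of_natDegree_eq_zero h0
    rw [this, eval_C]
    rwa [this, leadingCoeff_C] at hlc
  · have hdeg : 0 < Q.degree := natDegree_pos_iff_degree_pos.mp hpos
    have := Polynomial.tendsto_atTop_of_leadingCoeff_nonneg Q hdeg hlc.le
    obtain ⟨x, hx⟩ := (this.eventually_gt_atTop 0).exists
    exact ⟨x, hx⟩

lemma pos_of_no_root {Q : ℝ[X]} (hQ : Q ≠ 0) (hr : Q.roots = 0) (hlc : 0 < Q.leadingCoeff) :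
    ∀ x, 0 < Q.eval x := by
  have hne : ∀ x, Q.eval x ≠ 0 := by
    intro x hx
    have : x ∈ Q.roots := by rw [mem_roots hQ]; exact hx
    rw [hr] at this
    exact absurd this (Multiset.notMem_zero x)
  obtain ⟨y, hy⟩ := exists_pos_eval hQ hlc
  intro x
  rcases lt_trichotomy (Q.eval x) 0 with h|h|h
  · exfalso
    rcases le_total x y with hxy | hxy
    · obtain ⟨z, _, hz⟩ := intermediate_value_Icc hxy (Q.continuousOn (s := Set.Icc x y))
        (Set.mem_Icc.mpr ⟨h.le, hy.le⟩ : (0:ℝ) ∈ Set.Icc (Q.eval x) (Q.eval y))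
      exact hne z hz
    · obtain ⟨z, _, hz⟩ := intermediate_value_Icc' hxy (Q.continuousOn (s := Set.Icc y x))
        (Set.mem_Icc.mpr ⟨h.le, hy.le⟩)
      exact hne z hz
  · exact absurd h (hne x)
  · exact h

lemma exists_root_of_odd_natDegree_pos {p : ℝ[X]} (h : Odd p.natDegree)
    (hlc : 0 < p.leadingCoeff) : ∃ x, p.eval x = 0 := by
  have hdegpos : 0 < p.natDegree := by
    rcases h with ⟨k, hk⟩; omega
  have hdeg : 0 < p.degree := natDegree_pos_iff_degree_pos.mp hdegpos
  obtain ⟨y, hy⟩ : ∃ y, 0 < p.eval y := by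
    have := Polynomial.tendsto_atTop_of_leadingCoeff_nonneg p hdeg hlc.le
    obtain ⟨x, hx⟩ := (this.eventually_gt_atTop 0).exists
    exact ⟨x, hx⟩
  obtain ⟨x, hx⟩ : ∃ x, p.eval x < 0 := by
    set q : ℝ[X] := p.comp (-X) with hq
    have hqdeg : q.natDegree = p.natDegree := by
      rw [hq, natDegree_comp]
      simp
    have hqlc : q.leadingCoeff = -p.leadingCoeff := by
      rw [hq, leadingCoeff_comp (by simp)]
      simp [h.neg_one_pow]
    have hqd : 0 < q.degree := by
      rw [← natDegree_pos_iff_degree_pos, hqdeg]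
      exact hdegpos
    have := Polynomial.tendsto_atBot_of_leadingCoeff_nonpos q hqd (by rw [hqlc]; linarith)
    obtain ⟨x, hx⟩ := (this.eventually_lt_atBot 0).exists
    refine ⟨-x, ?_⟩
    have : q.eval x = p.eval (-x) := by rw [hq, eval_comp]; simp
    linarith [this ▸ hx]
  rcases le_total x y with hxy | hxy
  · obtain ⟨z, _, hz⟩ := intermediate_value_Icc hxy (p.continuousOn (s := Set.Icc x y))
      (Set.mem_Icc.mpr ⟨hx.le, hy.le⟩ : (0:ℝ) ∈ Set.Icc (p.eval x) (p.eval y))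
    exact ⟨z, hz⟩
  · obtain ⟨z, _, hz⟩ := intermediate_value_Icc' hxy (p.continuousOn (s := Set.Icc y x))
      (Set.mem_Icc.mpr ⟨hx.le, hy.le⟩)
    exact ⟨z, hz⟩

lemma exists_root_of_odd_natDegree {p : ℝ[X]} (h : Odd p.natDegree) : ∃ x, p.eval x = 0 := by
  have hp0 : p ≠ 0 := by rintro rfl; simp at h
  have hlc := leadingCoeff_ne_zero.mpr hp0
  rcases lt_or_gt_of_ne hlc with hneg | hpos
  · obtain ⟨x, hx⟩ := exists_root_of_odd_natDegree_pos (p := -p) (by simpa using h)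
      (by rw [leadingCoeff_neg]; linarith)
    exact ⟨x, by simpa using hx⟩
  · exact exists_root_of_odd_natDegree_pos h hpos

lemma Qdecomp {F : ℝ[X]} (hF : F ≠ 0) :
    ∃ Q : ℝ[X], F = (F.roots.map (fun a => X - C a)).prod * Q ∧ Q ≠ 0 ∧ Q.roots = 0 ∧
      Q.leadingCoeff = F.leadingCoeff ∧ F.natDegree = F.roots.card + Q.natDegree := by
  obtain ⟨Q, hQ⟩ := F.prod_multiset_X_sub_C_dvd
  have hmonic : ((F.roots.map (fun a => X - C a)).prod).Monic :=
    monic_multiset_prod_of_monic _ _ (fun a _ => monic_X_sub_C a)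
  have hQ0 : Q ≠ 0 := by rintro rfl; rw [mul_zero] at hQ; exact hF hQ
  have hroots : Q.roots = 0 := by
    have := roots_mul (hQ ▸ hF)
    rw [← hQ, roots_multiset_prod_X_sub_C] at this
    exact (left_eq_add.mp this).symm ▸ rfl
  refine ⟨Q, hQ, hQ0, hroots, ?_, ?_⟩
  · rw [hQ, leadingCoeff_mul, hmonic.leadingCoeff, one_mul]
  · conv_lhs => rw [hQ]
    rw [natDegree_mul hmonic.ne_zero hQ0, natDegree_multiset_prod_X_sub_C_eq_card]

lemma sign_eval {F : ℝ[X]} (hF : F ≠ 0) (hlc : 0 < F.leadingCoeff) {x : ℝ}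
    (hx : x ∉ F.roots) : 0 < (-1 : ℝ) ^ (cgt F.roots x) * F.eval x := by
  obtain ⟨Q, hQ, hQ0, hQr, hQlc, -⟩ := Qdecomp hF
  have h1 := eval_multiset_prod_sign F.roots x hx
  have h2 := pos_of_no_root hQ0 hQr (hQlc ▸ hlc) x
  have : F.eval x = ((F.roots.map (fun a => x - a)).prod) * Q.eval x := by
    conv_lhs => rw [hQ]
    rw [eval_mul, eval_multiset_prod]
    congr 1
    rw [Multiset.map_map]
    congr 1
    ext a
    simp
  rw [this]
  nlinarith

lemma parity_card {F : ℝ[X]} (hF : F ≠ 0) : ∃ k, F.natDegree = F.roots.card + 2 * k := by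
  obtain ⟨Q, hQ, hQ0, hQr, hQlc, hdeg⟩ := Qdecomp hF
  rcases Nat.even_or_odd Q.natDegree with he | ho
  · obtain ⟨k, hk⟩ := he
    exact ⟨k, by omega⟩
  · exfalso
    obtain ⟨x, hx⟩ := exists_root_of_odd_natDegree ho
    have : x ∈ Q.roots := by rw [mem_roots hQ0]; exact hx
    rw [hQr] at this
    exact absurd this (Multiset.notMem_zero x)

lemma countcore {F : ℝ[X]} {n : ℕ} {r : Fin n → ℝ} (hr : StrictAnti r)
    (hF : F ≠ 0) (hlc : 0 < F.leadingCoeff)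
    (hdeg : F.natDegree = n ∨ F.natDegree = n + 1)
    (hsign : ∀ i : Fin n, 0 ≤ (-1 : ℝ) ^ ((i : ℕ) + 1) * F.eval (r i)) :
    RealRooted F ∧ (∀ i : Fin n, (i:ℕ) + 1 ≤ cge F.roots (r i)) ∧
      (∀ i : Fin n, cgt F.roots (r i) ≤ (i:ℕ) + 1) := by
  have hpar : ∀ k, ∀ (hk : k < n), r ⟨k, hk⟩ ∉ F.roots →
      (cgt F.roots (r ⟨k, hk⟩)) % 2 = (k + 1) % 2 := by
    intro k hk hv
    have h1 := sign_eval hF hlc hv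
    have hne : F.eval (r ⟨k, hk⟩) ≠ 0 := fun h0 => hv ((mem_roots hF).mpr h0)
    have h2 : 0 < (-1 : ℝ) ^ (k + 1) * F.eval (r ⟨k, hk⟩) := by
      have h2' : 0 ≤ (-1 : ℝ) ^ (k + 1) * F.eval (r ⟨k, hk⟩) := hsign ⟨k, hk⟩
      rcases h2'.lt_or_eq with h | h
      · exact h
      · exfalso
        apply hne
        rcases mul_eq_zero.mp h.symm with h' | h'
        · exact absurd h' (by positivity)
        · exact h'
    have hsq : 0 < F.eval (r ⟨k, hk⟩) * F.eval (r ⟨k, hk⟩) := mul_self_pos.mpr hne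
    have h3 : 0 < (-1 : ℝ) ^ (cgt F.roots (r ⟨k, hk⟩)) * (-1 : ℝ) ^ (k + 1) := by
      nlinarith [h1, h2, hsq]
    rw [← pow_add] at h3
    rcases Nat.even_or_odd (cgt F.roots (r ⟨k, hk⟩) + (k + 1)) with he | ho
    · obtain ⟨t, ht⟩ := he
      omega
    · rw [ho.neg_one_pow] at h3
      linarith
  have hC : ∀ k, ∀ (hk : k < n), k + 1 ≤ cge F.roots (r ⟨k, hk⟩) := by
    intro k
    induction k with
    | zero =>
      intro hk
      have hee := cge_eq_cgt_add_count F.roots (r ⟨0, hk⟩)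
      by_cases hv : r ⟨0, hk⟩ ∈ F.roots
      · have := Multiset.one_le_count_iff_mem.mpr hv
        omega
      · have hp := hpar 0 hk hv
        have := cgt_le_cge F.roots (r ⟨0, hk⟩)
        omega
    | succ k ih =>
      intro hk
      have hk' : k < n := by omega
      have hprev := ih hk'
      have hlt : r ⟨k + 1, hk⟩ < r ⟨k, hk'⟩ := hr (Fin.mk_lt_mk.mpr (by omega))
      have h1 : k + 1 ≤ cgt F.roots (r ⟨k + 1, hk⟩) :=
        le_trans hprev (cge_le_cgt F.roots hlt)
      have hee := cge_eq_cgt_add_count F.roots (r ⟨k + 1, hk⟩)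
      by_cases hv : r ⟨k + 1, hk⟩ ∈ F.roots
      · have := Multiset.one_le_count_iff_mem.mpr hv
        omega
      · have hp := hpar (k + 1) hk hv
        have hcount : F.roots.count (r ⟨k + 1, hk⟩) = 0 := Multiset.count_eq_zero.mpr hv
        omega
  have hcardle : Multiset.card F.roots ≤ F.natDegree := F.card_roots'
  obtain ⟨k0, hk0⟩ := parity_card hF
  have hnle : n ≤ Multiset.card F.roots := by
    rcases Nat.eq_zero_or_pos n with h0 | hpos
    · omega
    · have hidx : n - 1 < n := by omega
      have h1 := hC (n - 1) hidx
      have h2 := cge_le_card F.roots (r ⟨n - 1, hidx⟩)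
      omega
  have hcard : Multiset.card F.roots = F.natDegree := by omega
  have hD : ∀ d k, ∀ (hk : k < n), k + d + 1 = n → cgt F.roots (r ⟨k, hk⟩) ≤ k + 1 := by
    intro d
    induction d with
    | zero =>
      intro k hk hkn
      have hee := cge_eq_cgt_add_count F.roots (r ⟨k, hk⟩)
      have hcc := cge_le_card F.roots (r ⟨k, hk⟩)
      rcases hdeg with hm | hm
      · have := cgt_le_cge F.roots (r ⟨k, hk⟩)
        omega
      · by_cases hv : r ⟨k, hk⟩ ∈ F.roots
        · have := Multiset.one_le_count_iff_mem.mpr hv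
          omega
        · have hp := hpar k hk hv
          have hcount : F.roots.count (r ⟨k, hk⟩) = 0 := Multiset.count_eq_zero.mpr hv
          omega
    | succ d ih =>
      intro k hk hkn
      have hk1 : k + 1 < n := by omega
      have hnext := ih (k + 1) hk1 (by omega)
      have hlt : r ⟨k + 1, hk1⟩ < r ⟨k, hk⟩ := hr (Fin.mk_lt_mk.mpr (by omega))
      have h1 : cge F.roots (r ⟨k, hk⟩) ≤ cgt F.roots (r ⟨k + 1, hk1⟩) := cge_le_cgt F.roots hlt
      have hee := cge_eq_cgt_add_count F.roots (r ⟨k, hk⟩)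
      by_cases hv : r ⟨k, hk⟩ ∈ F.roots
      · have := Multiset.one_le_count_iff_mem.mpr hv
        omega
      · have hp := hpar k hk hv
        have hcount : F.roots.count (r ⟨k, hk⟩) = 0 := Multiset.count_eq_zero.mpr hv
        omega
  refine ⟨hcard, fun i => ?_, fun i => ?_⟩
  · have := hC i.1 i.2
    simpa using this
  · have := hD (n - 1 - i.1) i.1 i.2 (by omega)
    simpa using this

lemma antitone_of_adj {n : ℕ} {ρ : Fin n → ℝ}
    (h : ∀ (k : ℕ) (hk : k + 1 < n), ρ ⟨k + 1, hk⟩ ≤ ρ ⟨k, Nat.lt_of_succ_lt hk⟩) :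
    Antitone ρ := by
  have key : ∀ d i (hi : i < n) (hid : i + d < n), ρ ⟨i + d, hid⟩ ≤ ρ ⟨i, hi⟩ := by
    intro d
    induction d with
    | zero => intro i hi hid; exact le_of_eq rfl
    | succ d ih =>
      intro i hi hid
      have h1 : i + d < n := by omega
      have h2 : i + d + 1 < n := by omega
      calc ρ ⟨i + d + 1, h2⟩ ≤ ρ ⟨i + d, h1⟩ := h (i + d) h2
        _ ≤ ρ ⟨i, hi⟩ := ih i hi h1
  intro i j hij
  have : ρ ⟨i.1 + (j.1 - i.1), by omega⟩ ≤ ρ ⟨i.1, i.2⟩ := key (j.1 - i.1) i.1 i.2 (by omega)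
  have hj : (⟨i.1 + (j.1 - i.1), by omega⟩ : Fin n) = j := by
    apply Fin.ext
    simp
    omega
  rw [hj] at this
  simpa using this

lemma two_le_count_of_eq {n : ℕ} {ρ : Fin n → ℝ} {i j : Fin n} (hij : i ≠ j)
    (h : ρ i = ρ j) : 2 ≤ (tupMS ρ).count (ρ i) := by
  classical
  unfold tupMS
  rw [Multiset.count_map]
  have hsub : ({i, j} : Finset (Fin n)) ⊆ (univ.filter (fun a => ρ i = ρ a)) := by
    intro k hk
    simp only [Finset.mem_insert, Finset.mem_singleton] at hk
    rcases hk with rfl | rfl <;> simp [h]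
  have hcard : ({i, j} : Finset (Fin n)).card = 2 := Finset.card_pair hij
  have := Finset.card_le_card hsub
  rw [hcard] at this
  exact le_trans this (le_of_eq rfl)

lemma strictAnti_of_nodup {n : ℕ} {ρ : Fin n → ℝ} (ha : Antitone ρ)
    (hd : ∀ v, (tupMS ρ).count v ≤ 1) : StrictAnti ρ := by
  intro i j hij
  rcases eq_or_lt_of_le (ha hij.le) with h | h
  · exfalso
    have := two_le_count_of_eq (ne_of_lt hij) h.symm
    have h2 := hd (ρ i)
    omega
  · exact h

lemma prec_package {g f : ℝ[X]} (h : Prec g f) (hf0 : f ≠ 0) (hg0 : g ≠ 0) :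
    (∀ x, cge g.roots x ≤ cge f.roots x) ∧ (∀ x, cgt g.roots x ≤ cgt f.roots x) ∧
    (∀ x, cgt f.roots x ≤ cgt g.roots x + 1) ∧ (∀ x, cge f.roots x ≤ cge g.roots x + 1) := by
  have hlf : f.leadingCoeff ≠ 0 := leadingCoeff_ne_zero.mpr hf0
  have hlg : g.leadingCoeff ≠ 0 := leadingCoeff_ne_zero.mpr hg0
  rcases h with ⟨n, r, s, hfe, hge, hrs1, hrs2⟩ | ⟨n, r, s, hfe, hge, hI⟩
  · obtain ⟨hfr, hfd, -⟩ := roots_of_factor hlf r hfe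
    obtain ⟨hgr, hgd, -⟩ := roots_of_factor hlg s hge
    have hradj : ∀ (k : ℕ) (hk : k + 1 < n), r ⟨k + 1, hk⟩ ≤ r ⟨k, Nat.lt_of_succ_lt hk⟩ :=
      fun k hk => le_trans (hrs2 k hk) (hrs1 ⟨k, Nat.lt_of_succ_lt hk⟩)
    have hsadj : ∀ (k : ℕ) (hk : k + 1 < n), s ⟨k + 1, hk⟩ ≤ s ⟨k, Nat.lt_of_succ_lt hk⟩ :=
      fun k hk => le_trans (hrs1 ⟨k + 1, hk⟩) (hrs2 k hk)
    have har : Antitone r := antitone_of_adj hradj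
    have has : Antitone s := antitone_of_adj hsadj
    rw [hfr, hgr]
    refine ⟨?_, ?_, ?_, ?_⟩
    · intro x
      rw [cge_tup, cge_tup]
      apply Finset.card_le_card
      intro i hi
      simp only [Finset.mem_filter, Finset.mem_univ, true_and] at hi ⊢
      exact le_trans hi (hrs1 i)
    · intro x
      rw [cgt_tup, cgt_tup]
      apply Finset.card_le_card
      intro i hi
      simp only [Finset.mem_filter, Finset.mem_univ, true_and] at hi ⊢
      exact lt_of_lt_of_le hi (hrs1 i)
    · intro x
      by_contra hc
      push_neg at hc
      set k := cgt (tupMS s) x with hk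
      have hkn : k + 2 ≤ n := by
        have := cgt_le_card (tupMS r) x
        rw [card_tupMS] at this
        omega
      have hlt : x < r ⟨k + 1, by omega⟩ :=
        lt_of_cgt har (i := ⟨k + 1, by omega⟩) (by simpa using by omega : (k + 1 : ℕ) + 1 ≤ cgt (tupMS r) x)
      have hlt2 : x < s ⟨k, by omega⟩ := lt_of_lt_of_le hlt (hrs2 k (by omega))
      have := cgt_of_lt has (i := ⟨k, by omega⟩) hlt2
      simp only at this
      omega
    · intro x
      by_contra hc
      push_neg at hc
      set k := cge (tupMS s) x with hk
      have hkn : k + 2 ≤ n := by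
        have := cge_le_card (tupMS r) x
        rw [card_tupMS] at this
        omega
      have hle : x ≤ r ⟨k + 1, by omega⟩ :=
        le_of_cge har (i := ⟨k + 1, by omega⟩) (by simpa using by omega : (k + 1 : ℕ) + 1 ≤ cge (tupMS r) x)
      have hle2 : x ≤ s ⟨k, by omega⟩ := le_trans hle (hrs2 k (by omega))
      have := cge_of_le has (i := ⟨k, by omega⟩) hle2
      simp only at this
      omega
  · obtain ⟨hfr, hfd, -⟩ := roots_of_factor hlf r hfe
    obtain ⟨hgr, hgd, -⟩ := roots_of_factor hlg s hge
    have hradj : ∀ (k : ℕ) (hk : k + 1 < n + 1), r ⟨k + 1, hk⟩ ≤ r ⟨k, Nat.lt_of_succ_lt hk⟩ := by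
      intro k hk
      have hkn : k < n := by omega
      have h1 := (hI ⟨k, hkn⟩).1
      have h2 := (hI ⟨k, hkn⟩).2
      exact le_trans h1 h2
    have har : Antitone r := antitone_of_adj hradj
    rw [hfr, hgr]
    refine ⟨?_, ?_, ?_, ?_⟩
    · intro x
      rw [cge_tup, cge_tup]
      apply Finset.card_le_card_of_injOn (fun i => Fin.castSucc i)
      · intro i hi
        simp only [Finset.mem_coe, Finset.mem_filter, Finset.mem_univ, true_and] at hi ⊢
        exact le_trans hi (hI i).2
      · exact fun a _ b _ hab => Fin.castSucc_injective n hab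
    · intro x
      rw [cgt_tup, cgt_tup]
      apply Finset.card_le_card_of_injOn (fun i => Fin.castSucc i)
      · intro i hi
        simp only [Finset.mem_coe, Finset.mem_filter, Finset.mem_univ, true_and] at hi ⊢
        exact lt_of_lt_of_le hi (hI i).2
      · exact fun a _ b _ hab => Fin.castSucc_injective n hab
    · intro x
      by_contra hc
      push_neg at hc
      set k := cgt (tupMS s) x with hk
      have hkn : k + 2 ≤ n + 1 := by
        have := cgt_le_card (tupMS r) x
        rw [card_tupMS] at this
        omega
      have hkn' : k < n := by
        have := cgt_le_card (tupMS s) x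
        rw [card_tupMS] at this
        omega
      have hlt : x < r ⟨k + 1, by omega⟩ :=
        lt_of_cgt har (i := ⟨k + 1, by omega⟩) (by simpa using by omega : (k + 1 : ℕ) + 1 ≤ cgt (tupMS r) x)
      have hsucc : r ⟨k + 1, by omega⟩ = r (Fin.succ ⟨k, hkn'⟩) := rfl
      have hlt2 : x < s ⟨k, hkn'⟩ := lt_of_lt_of_le (hsucc ▸ hlt) (hI ⟨k, hkn'⟩).1
      have := cgt_of_lt (ρ := s) (by
        apply antitone_of_adj
        intro k2 hk2
        have hkn2 : k2 + 1 < n := hk2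
        calc s ⟨k2+1, hk2⟩ ≤ r (Fin.castSucc ⟨k2+1, hk2⟩) := (hI ⟨k2+1, hk2⟩).2
          _ = r (Fin.succ ⟨k2, by omega⟩) := rfl
          _ ≤ s ⟨k2, by omega⟩ := (hI ⟨k2, by omega⟩).1) (i := ⟨k, hkn'⟩) hlt2
      simp only at this
      omega
    · intro x
      by_contra hc
      push_neg at hc
      set k := cge (tupMS s) x with hk
      have hkn : k + 2 ≤ n + 1 := by
        have := cge_le_card (tupMS r) x
        rw [card_tupMS] at this
        omega
      have hkn' : k < n := by
        have := cge_le_card (tupMS s) x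
        rw [card_tupMS] at this
        omega
      have hle : x ≤ r ⟨k + 1, by omega⟩ :=
        le_of_cge har (i := ⟨k + 1, by omega⟩) (by simpa using by omega : (k + 1 : ℕ) + 1 ≤ cge (tupMS r) x)
      have hsucc : r ⟨k + 1, by omega⟩ = r (Fin.succ ⟨k, hkn'⟩) := rfl
      have hle2 : x ≤ s ⟨k, hkn'⟩ := le_trans (hsucc ▸ hle) (hI ⟨k, hkn'⟩).1
      have := cge_of_le (ρ := s) (by
        apply antitone_of_adj
        intro k2 hk2
        have hkn2 : k2 + 1 < n := hk2
        calc s ⟨k2+1, hk2⟩ ≤ r (Fin.castSucc ⟨k2+1, hk2⟩) := (hI ⟨k2+1, hk2⟩).2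
          _ = r (Fin.succ ⟨k2, by omega⟩) := rfl
          _ ≤ s ⟨k2, by omega⟩ := (hI ⟨k2, by omega⟩).1) (i := ⟨k, hkn'⟩) hle2
      simp only at this
      omega

lemma core_counts {F f g a b : ℝ[X]} (hFe : F = a * f + b * g) (hf0 : f ≠ 0) (hg0 : g ≠ 0)
    (hf : RealRooted f) (hg : RealRooted g)
    (hdisj : ∀ v, v ∈ f.roots → v ∉ g.roots)
    (h2 : ∀ x, cgt g.roots x ≤ cgt f.roots x)
    (h4 : ∀ x, cge f.roots x ≤ cge g.roots x + 1)
    (hdeg : F.natDegree = f.natDegree ∨ F.natDegree = f.natDegree + 1)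
    (hlcg : 0 < g.leadingCoeff) (hlcF : 0 < F.leadingCoeff)
    (hb : ∀ x, f.IsRoot x → b.eval x ≤ 0) :
    RealRooted F ∧ (∀ x, cge f.roots x ≤ cge F.roots x) ∧
      (∀ x, cgt F.roots x ≤ cgt f.roots x + 1) := by
  have hF0 : F ≠ 0 := fun h => by simp [h] at hlcF
  set n := f.natDegree with hn
  -- f.roots has no repeated elements
  have hnodup : ∀ v, f.roots.count v ≤ 1 := by
    intro v
    by_contra hc
    push_neg at hc
    have hvf : v ∈ f.roots := by
      rw [← Multiset.count_pos]; omega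
    have hvg : v ∉ g.roots := hdisj v hvf
    have hcg : g.roots.count v = 0 := Multiset.count_eq_zero.mpr hvg
    have e1 := cge_eq_cgt_add_count f.roots v
    have e2 := cge_eq_cgt_add_count g.roots v
    have e3 := h4 v
    have e4 := h2 v
    omega
  obtain ⟨r, har, hrt⟩ := exists_sorted_tuple' f.roots hf
  have hstrict : StrictAnti r := strictAnti_of_nodup har (by rw [hrt]; exact hnodup)
  -- the sign condition
  have hsign : ∀ i : Fin n, 0 ≤ (-1 : ℝ) ^ ((i : ℕ) + 1) * F.eval (r i) := by
    intro i
    set v := r i with hv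
    have hvR : v ∈ f.roots := by rw [← hrt]; exact mem_tupMS r i
    have hroot : f.IsRoot v := (mem_roots hf0).mp hvR
    have hvS : v ∉ g.roots := hdisj v hvR
    have hFev : F.eval v = b.eval v * g.eval v := by
      rw [hFe]
      simp [hroot.eq_zero]
    -- sign of g at v
    have hgfact : C g.leadingCoeff * (g.roots.map fun a => X - C a).prod = g :=
      C_leadingCoeff_mul_prod_multiset_X_sub_C hg
    have hgev : g.eval v = g.leadingCoeff * ((g.roots.map fun a => v - a)).prod := by
      conv_lhs => rw [← hgfact]
      rw [eval_mul, eval_C, eval_multiset_prod, Multiset.map_map]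
      congr 2
      ext w
      simp
    have hsgng : 0 < (-1 : ℝ) ^ (cgt g.roots v) * g.eval v := by
      have := eval_multiset_prod_sign g.roots v hvS
      rw [hgev]
      nlinarith
    -- cgt g.roots v = i
    have hcgtr : cgt f.roots v = (i : ℕ) := by rw [← hrt]; exact cgt_self_of_strictAnti hstrict i
    have hcger : cge f.roots v = (i : ℕ) + 1 := by rw [← hrt]; exact cge_self_of_strictAnti hstrict i
    have hcountS : g.roots.count v = 0 := Multiset.count_eq_zero.mpr hvS
    have heS := cge_eq_cgt_add_count g.roots v
    have hgi : cgt g.roots v = (i : ℕ) := by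
      have := h2 v
      have := h4 v
      omega
    rw [hgi] at hsgng
    have hbv : b.eval v ≤ 0 := hb v hroot
    rw [hFev, pow_succ]
    nlinarith
  obtain ⟨hcard, hCi, hDi⟩ := countcore hstrict hF0 hlcF (by rw [← hn]; exact hdeg) hsign
  refine ⟨hcard, ?_, ?_⟩
  · intro x
    set k := cge f.roots x with hk
    rcases Nat.eq_zero_or_pos k with h0 | hpos
    · omega
    · have hkn : k ≤ n := by
        have := cge_le_card f.roots x
        rw [hf] at this
        omega
      have hidx : k - 1 < n := by omega
      have hxle : x ≤ r ⟨k - 1, hidx⟩ := by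
        apply le_of_cge har
        rw [hrt]
        simp only [Fin.val_mk]
        omega
      have := hCi ⟨k - 1, hidx⟩
      have hanti := cge_anti F.roots hxle
      simp only [Fin.val_mk] at this
      omega
  · intro x
    set k := cgt f.roots x with hk
    have hkn : k ≤ n := by
      have := cgt_le_card f.roots x
      rw [hf] at this
      omega
    rcases eq_or_lt_of_le hkn with heq | hlt
    · have := cgt_le_card F.roots x
      rw [hcard] at this
      omega
    · have hrk : r ⟨k, hlt⟩ ≤ x := by
        by_contra hc
        push_neg at hc
        have := cgt_of_lt har (i := ⟨k, hlt⟩) hc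
        rw [hrt] at this
        simp only [Fin.val_mk] at this
        omega
      have := hDi ⟨k, hlt⟩
      have hanti := cgt_anti F.roots hrk
      simp only [Fin.val_mk] at this
      omega

lemma main_counts : ∀ (N : ℕ) (F f g a b : ℝ[X]), F = a * f + b * g → f ≠ 0 → g ≠ 0 →
    RealRooted f → RealRooted g →
    Multiset.card (f.roots ∩ g.roots) ≤ N →
    (∀ x, cge g.roots x ≤ cge f.roots x) → (∀ x, cgt g.roots x ≤ cgt f.roots x) →
    (∀ x, cgt f.roots x ≤ cgt g.roots x + 1) → (∀ x, cge f.roots x ≤ cge g.roots x + 1) →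
    (F.natDegree = f.natDegree ∨ F.natDegree = f.natDegree + 1) →
    0 < g.leadingCoeff → 0 < F.leadingCoeff →
    (∀ x, f.IsRoot x → b.eval x ≤ 0) →
    RealRooted F ∧ (∀ x, cge f.roots x ≤ cge F.roots x) ∧
      (∀ x, cgt F.roots x ≤ cgt f.roots x + 1) := by
  intro N
  induction N with
  | zero =>
    intro F f g a b hFe hf0 hg0 hf hg hcard h1 h2 h3 h4 hdeg hlcg hlcF hb
    apply core_counts hFe hf0 hg0 hf hg ?_ h2 h4 hdeg hlcg hlcF hb
    intro v hvf hvg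
    have : v ∈ f.roots ∩ g.roots := Multiset.mem_inter.mpr ⟨hvf, hvg⟩
    have := Multiset.card_pos_iff_exists_mem.mpr ⟨v, this⟩
    omega
  | succ N ih =>
    intro F f g a b hFe hf0 hg0 hf hg hcard h1 h2 h3 h4 hdeg hlcg hlcF hb
    by_cases hint : f.roots ∩ g.roots = 0
    · apply core_counts hFe hf0 hg0 hf hg ?_ h2 h4 hdeg hlcg hlcF hb
      intro v hvf hvg
      have : v ∈ f.roots ∩ g.roots := Multiset.mem_inter.mpr ⟨hvf, hvg⟩
      rw [hint] at this
      exact Multiset.notMem_zero v this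
    · -- remove a common root t
      obtain ⟨t, ht⟩ := Multiset.exists_mem_of_ne_zero hint
      have htf : t ∈ f.roots := (Multiset.mem_inter.mp ht).1
      have htg : t ∈ g.roots := (Multiset.mem_inter.mp ht).2
      obtain ⟨f₁, hf₁⟩ := (dvd_iff_isRoot.mpr ((mem_roots hf0).mp htf))
      obtain ⟨g₁, hg₁⟩ := (dvd_iff_isRoot.mpr ((mem_roots hg0).mp htg))
      have hXt : (X - C t : ℝ[X]) ≠ 0 := X_sub_C_ne_zero t
      have hf₁0 : f₁ ≠ 0 := fun h => hf0 (by rw [hf₁, h, mul_zero])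
      have hg₁0 : g₁ ≠ 0 := fun h => hg0 (by rw [hg₁, h, mul_zero])
      set F₁ := a * f₁ + b * g₁ with hF₁def
      have hF₁e : F = (X - C t) * F₁ := by rw [hFe, hF₁def, hf₁, hg₁]; ring
      have hF0 : F ≠ 0 := fun h => by simp [h] at hlcF
      have hF₁0 : F₁ ≠ 0 := fun h => hF0 (by rw [hF₁e, h, mul_zero])
      -- roots relations
      have hfr : f.roots = t ::ₘ f₁.roots := by
        rw [hf₁, roots_mul (by rw [← hf₁]; exact hf0), roots_X_sub_C, Multiset.singleton_add]
      have hgr : g.roots = t ::ₘ g₁.roots := by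
        rw [hg₁, roots_mul (by rw [← hg₁]; exact hg0), roots_X_sub_C, Multiset.singleton_add]
      have hFr : F.roots = t ::ₘ F₁.roots := by
        rw [hF₁e, roots_mul (by rw [← hF₁e]; exact hF0), roots_X_sub_C, Multiset.singleton_add]
      -- degrees
      have hfd : f.natDegree = f₁.natDegree + 1 := by
        rw [hf₁, natDegree_mul hXt hf₁0, natDegree_X_sub_C]; ring
      have hgd : g.natDegree = g₁.natDegree + 1 := by
        rw [hg₁, natDegree_mul hXt hg₁0, natDegree_X_sub_C]; ring
      have hFd : F.natDegree = F₁.natDegree + 1 := by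
        rw [hF₁e, natDegree_mul hXt hF₁0, natDegree_X_sub_C]; ring
      -- leading coefficients
      have hglc : g₁.leadingCoeff = g.leadingCoeff := by
        rw [hg₁, leadingCoeff_mul, leadingCoeff_X_sub_C, one_mul]
      have hFlc : F₁.leadingCoeff = F.leadingCoeff := by
        rw [hF₁e, leadingCoeff_mul, leadingCoeff_X_sub_C, one_mul]
      -- real-rootedness
      have hf₁r : RealRooted f₁ := by
        unfold RealRooted at hf ⊢
        rw [hfr, Multiset.card_cons] at hf
        omega
      have hg₁r : RealRooted g₁ := by
        unfold RealRooted at hg ⊢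
        rw [hgr, Multiset.card_cons] at hg
        omega
      -- intersection card decreases
      have hintcard : Multiset.card (f₁.roots ∩ g₁.roots) ≤ N := by
        have : f.roots ∩ g.roots = t ::ₘ (f₁.roots ∩ g₁.roots) := by
          rw [hfr, hgr]
          ext v
          rw [Multiset.count_inter]
          by_cases hv : v = t
          · subst hv
            rw [Multiset.count_cons_self, Multiset.count_cons_self, Multiset.count_cons_self,
              Multiset.count_inter]
            omega
          · rw [Multiset.count_cons_of_ne hv, Multiset.count_cons_of_ne hv,
              Multiset.count_cons_of_ne hv, Multiset.count_inter]
        rw [this, Multiset.card_cons] at hcard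
        omega
      -- count hypotheses transfer
      have key := ih F₁ f₁ g₁ a b rfl hf₁0 hg₁0 hf₁r hg₁r hintcard
        (fun x => by
          have := h1 x
          rw [hfr, hgr, cge_cons, cge_cons] at this
          split at this <;> omega)
        (fun x => by
          have := h2 x
          rw [hfr, hgr, cgt_cons, cgt_cons] at this
          split at this <;> omega)
        (fun x => by
          have := h3 x
          rw [hfr, hgr, cgt_cons, cgt_cons] at this
          split at this <;> omega)
        (fun x => by
          have := h4 x
          rw [hfr, hgr, cge_cons, cge_cons] at this
          split at this <;> omega)
        (by omega)
        (hglc ▸ hlcg) (hFlc ▸ hlcF)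
        (fun x hx => hb x (by
          unfold IsRoot at hx ⊢
          rw [hf₁, eval_mul, hx, mul_zero]))
      obtain ⟨hRR, hc1, hc2⟩ := key
      refine ⟨?_, ?_, ?_⟩
      · unfold RealRooted at hRR ⊢
        rw [hFr, Multiset.card_cons, hRR, hFd]
      · intro x
        have := hc1 x
        rw [hfr, hFr, cge_cons, cge_cons]
        split <;> omega
      · intro x
        have := hc2 x
        rw [hfr, hFr, cgt_cons, cgt_cons]
        split <;> omega

lemma prod_cast {m n : ℕ} (h : m = n) (q : Fin m → ℝ[X]) :
    (∏ i : Fin n, q (Fin.cast h.symm i)) = ∏ i, q i := by subst h; rfl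

lemma prec_of_counts {f F : ℝ[X]} (hf0 : f ≠ 0) (hF0 : F ≠ 0)
    (hf : RealRooted f) (hF : RealRooted F)
    (hdeg : F.natDegree = f.natDegree ∨ F.natDegree = f.natDegree + 1)
    (hc1 : ∀ x, cge f.roots x ≤ cge F.roots x)
    (hc2 : ∀ x, cgt F.roots x ≤ cgt f.roots x + 1) : Prec f F := by
  obtain ⟨s, has, hst, hsf⟩ := factor_of_realrooted hf
  obtain ⟨r, har, hrt, hrF⟩ := factor_of_realrooted hF
  have key1 : ∀ (i : Fin f.natDegree) (j : Fin F.natDegree), (i : ℕ) = (j : ℕ) → s i ≤ r j := by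
    intro i j hij
    apply le_of_cge har
    rw [hrt]
    have e1 : (i : ℕ) + 1 ≤ cge f.roots (s i) := by
      rw [← hst]
      exact cge_of_le has (le_refl _)
    have := hc1 (s i)
    omega
  have key2 : ∀ (i : Fin f.natDegree) (j : Fin F.natDegree), (j : ℕ) = (i : ℕ) + 1 →
      r j ≤ s i := by
    intro i j hij
    by_contra hcon
    push_neg at hcon
    have e1 : (j : ℕ) + 1 ≤ cgt F.roots (s i) := by
      rw [← hrt]
      exact cgt_of_lt har hcon
    have e2 : cgt f.roots (s i) ≤ (i : ℕ) := by
      by_contra he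
      push_neg at he
      have : s i < s i := by
        apply lt_of_cgt has (i := i)
        rw [hst]
        omega
      exact lt_irrefl _ this
    have := hc2 (s i)
    omega
  rcases hdeg with heq | hsucc
  · left
    refine ⟨f.natDegree, fun i => r (Fin.cast heq.symm i), s, ?_, hsf, ?_, ?_⟩
    · rw [← prod_cast heq (fun i => X - C (r i))] at hrF
      exact hrF
    · intro i
      exact key1 i _ (by simp)
    · intro k hk
      exact key2 ⟨k, Nat.lt_of_succ_lt hk⟩ _ (by simp)
  · right
    refine ⟨f.natDegree, fun i => r (Fin.cast hsucc.symm i), s, ?_, hsf, ?_⟩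
    · rw [← prod_cast hsucc (fun i => X - C (r i))] at hrF
      exact hrF
    · intro i
      constructor
      · exact key2 i _ (by simp)
      · exact key1 i _ (by simp)

lemma zero_prec {F : ℝ[X]} (hF : RealRooted F) : Prec 0 F := by
  obtain ⟨r, har, hrt, hrF⟩ := factor_of_realrooted hF
  left
  refine ⟨F.natDegree, r, r, hrF, ?_, fun i => le_refl _, ?_⟩
  · simp
  · intro k hk
    exact har (Fin.mk_le_mk.mpr (by omega))

lemma main_all (F f g a b : ℝ[X])
    (hFe : F = a * f + b * g)
    (hf : RealRooted f) (hg : RealRooted g) (hgf : Prec g f)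
    (hdeg : F.natDegree = f.natDegree ∨ F.natDegree = f.natDegree + 1)
    (hlcg : 0 < g.leadingCoeff) (hlcF : 0 < F.leadingCoeff)
    (hb : ∀ x : ℝ, f.IsRoot x → b.eval x ≤ 0) :
    RealRooted F ∧ Prec f F := by
  have hF0 : F ≠ 0 := fun h => by simp [h] at hlcF
  have hg0 : g ≠ 0 := fun h => by simp [h] at hlcg
  by_cases hf0 : f = 0
  · subst hf0
    have hd0 : F.natDegree ≤ 1 := by
      simp only [natDegree_zero] at hdeg
      omega
    obtain ⟨k, hk⟩ := parity_card hF0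
    have hcle : Multiset.card F.roots ≤ F.natDegree := F.card_roots'
    have hRR : RealRooted F := by
      unfold RealRooted
      omega
    exact ⟨hRR, zero_prec hRR⟩
  · obtain ⟨h1, h2, h3, h4⟩ := prec_package hgf hf0 hg0
    obtain ⟨hRR, hc1, hc2⟩ := main_counts (Multiset.card (f.roots ∩ g.roots)) F f g a b hFe
      hf0 hg0 hf hg (le_refl _) h1 h2 h3 h4 hdeg hlcg hlcF hb
    exact ⟨hRR, prec_of_counts hf0 hF0 hf hRR hdeg hc1 hc2⟩

lemma realrooted_neg {p : ℝ[X]} (h : RealRooted (-p)) : RealRooted p := by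
  unfold RealRooted at h ⊢
  rwa [roots_neg, natDegree_neg] at h

lemma altleft_neg_left {g f : ℝ[X]} (h : AltLeft g f) : AltLeft (-g) f := by
  obtain ⟨n, r, s, h1, h2, h3, h4⟩ := h
  refine ⟨n, r, s, h1, ?_, h3, h4⟩
  rw [leadingCoeff_neg, map_neg, neg_mul, ← h2]

lemma interlaces_neg_left {g f : ℝ[X]} (h : Interlaces g f) : Interlaces (-g) f := by
  obtain ⟨n, r, s, h1, h2, h3⟩ := h
  refine ⟨n, r, s, h1, ?_, h3⟩
  rw [leadingCoeff_neg, map_neg, neg_mul, ← h2]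

lemma prec_neg_left {g f : ℝ[X]} (h : Prec g f) : Prec (-g) f := by
  rcases h with h | h
  · exact Or.inl (altleft_neg_left h)
  · exact Or.inr (interlaces_neg_left h)

lemma altleft_of_neg_right {f F : ℝ[X]} (h : AltLeft f (-F)) : AltLeft f F := by
  obtain ⟨n, r, s, h1, h2, h3, h4⟩ := h
  refine ⟨n, r, s, ?_, h2, h3, h4⟩
  rw [leadingCoeff_neg, map_neg, neg_mul] at h1
  have := congrArg Neg.neg h1
  simpa using this

lemma interlaces_of_neg_right {f F : ℝ[X]} (h : Interlaces f (-F)) : Interlaces f F := by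
  obtain ⟨n, r, s, h1, h2, h3⟩ := h
  refine ⟨n, r, s, ?_, h2, h3⟩
  rw [leadingCoeff_neg, map_neg, neg_mul] at h1
  have := congrArg Neg.neg h1
  simpa using this

lemma prec_of_neg_right {f F : ℝ[X]} (h : Prec f (-F)) : Prec f F := by
  rcases h with h | h
  · exact Or.inl (altleft_of_neg_right h)
  · exact Or.inr (interlaces_of_neg_right h)


theorem thm_Ffg (F f g a b : Polynomial ℝ)
    (hF : F = a * f + b * g)
    (hf : RealRooted f) (hg : RealRooted g) (hgf : Prec g f)
    (hdeg : F.natDegree = f.natDegree ∨ F.natDegree = f.natDegree + 1)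
    (hsign : 0 < F.leadingCoeff * g.leadingCoeff)
    (hb : ∀ r : ℝ, f.IsRoot r → b.eval r ≤ 0) :
    RealRooted F ∧ Prec f F := by
  have hg0 : g.leadingCoeff ≠ 0 := by
    intro h
    rw [h, mul_zero] at hsign
    exact lt_irrefl _ hsign
  rcases lt_or_gt_of_ne hg0 with hneg | hpos
  · have hlcF : F.leadingCoeff < 0 := by nlinarith
    have key := main_all (-F) f (-g) (-a) b (by rw [hF]; ring) hf
      (by unfold RealRooted at hg ⊢; rwa [roots_neg, natDegree_neg])
      (prec_neg_left hgf)
      (by rwa [natDegree_neg])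
      (by rwa [leadingCoeff_neg, neg_pos])
      (by rwa [leadingCoeff_neg, neg_pos])
      hb
    exact ⟨realrooted_neg key.1, prec_of_neg_right key.2⟩
  · have hlcF : 0 < F.leadingCoeff := by nlinarith
    exact main_all F f g a b hF hf hg hgf hdeg hpos hlcF hb
end

section
/- Let F(x) = a(x) f(x) + b(x) g(x), where f and g have only real zeros, g strictly alternates or strictly interlaces f, deg F = deg f or deg f + 1, F and g have leading coefficients of the same sign, and b(r) < 0 for every zero r of f. Then F has only real simple zeros and f strictly interlaces or strictly alternates left of F. -/
open Polynomial Finset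

/-! Let `r 0 > r 1 > ⋯ > r (m-1)` be the zeros of `f`. Exactly `i` zeros of `g` lie above `r i`,
so `g (r i)` has the sign of `(-1)^i lc(g)`; as `F (r i) = b (r i) g (r i)` with `b (r i) < 0`, the
sign of `F (r i)` is that of `(-1)^(i+1) lc(F)`. Hence `F` changes sign on each gap
`(r i, r (i-1))` and on `(r 0, ∞)`, giving `m` distinct zeros, and when `deg F = m + 1` the sign
of `F` at `-∞` gives one more zero below `r (m-1)`. These are all the zeros of `F`, and their
position in the gaps of `r` is exactly the strict interlacing `f ≺ F`. -/

/-- `x` lies in the `k`-th gap of a decreasing sequence `s`, i.e. in `(s k, s (k - 1))`,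
where `s (-1) = ∞` and `s n = -∞`. -/
def InGap {n : ℕ} (s : Fin n → ℝ) (k : ℕ) (x : ℝ) : Prop :=
  ∀ j : Fin n, ((j : ℕ) < k → x < s j) ∧ (k ≤ j → s j < x)

lemma Fin.strictAnti_of_val_succ_lt {n : ℕ} {u : Fin n → ℝ}
    (h : ∀ (i : ℕ) (hi : i + 1 < n), u ⟨i + 1, hi⟩ < u ⟨i, Nat.lt_of_succ_lt hi⟩) :
    StrictAnti u := by
  cases n with
  | zero => exact fun i => i.elim0
  | succ n => exact Fin.strictAnti_iff_succ_lt.mpr fun i => h i (by omega)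

section InGap

variable {n k : ℕ} {s : Fin n → ℝ} {x : ℝ}

lemma inGap_of_antitone (hs : Antitone s) (hk : k ≤ n) (hlo : ∀ h : k < n, s ⟨k, h⟩ < x)
    (hhi : ∀ j : Fin n, (j : ℕ) + 1 = k → x < s j) : InGap s k x := by
  intro j
  constructor
  · intro hjk
    exact (hhi ⟨k - 1, by omega⟩ (by simp; omega)).trans_le (hs (Fin.mk_le_mk.mpr (by omega)))
  · intro hkj
    exact (hs (Fin.mk_le_mk.mpr hkj : (⟨k, by omega⟩ : Fin n) ≤ j)).trans_lt (hlo _)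

lemma InGap.lt_of_lt {k' : ℕ} {y : ℝ} (hx : InGap s k x) (hy : InGap s k' y) (hkk' : k < k')
    (hk : k < n) : y < x :=
  ((hy ⟨k, hk⟩).1 hkk').trans ((hx ⟨k, hk⟩).2 le_rfl)

lemma strictAnti_of_inGap {N : ℕ} {t : Fin N → ℝ} (hN : N ≤ n + 1)
    (ht : ∀ i : Fin N, InGap s i (t i)) : StrictAnti t :=
  fun i j hij => (ht i).lt_of_lt (ht j) hij (by omega)

lemma InGap.neg_one_pow_mul_prod_pos (hx : InGap s k x) (hk : k ≤ n) :
    0 < (-1) ^ k * ∏ j, (x - s j) := by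
  have hsign : (-1 : ℝ) ^ k = ∏ _j ∈ univ.filter (fun j : Fin n => (j : ℕ) < k), (-1) := by
    rw [prod_const, Fin.card_filter_val_lt, min_eq_right hk]
  rw [hsign, ← prod_filter_mul_prod_filter_not univ (fun j : Fin n => (j : ℕ) < k), ← mul_assoc,
    ← prod_mul_distrib]
  refine mul_pos (prod_pos fun j hj => ?_) (prod_pos fun j hj => ?_)
  · have := (hx j).1 (mem_filter.mp hj).2
    linarith
  · have := (hx j).2 (not_lt.mp (mem_filter.mp hj).2)
    linarith

lemma InGap.leadingCoeff_mul_neg_one_pow_mul_eval_pos {g : ℝ[X]}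
    (hg : g = C g.leadingCoeff * ∏ j, (X - C (s j))) (hlc : g.leadingCoeff ≠ 0)
    (hx : InGap s k x) (hk : k ≤ n) : 0 < g.leadingCoeff * (-1) ^ k * g.eval x := by
  have hgx : g.eval x = g.leadingCoeff * ∏ j, (x - s j) := by
    conv_lhs => rw [hg]
    simp only [eval_mul, eval_C, eval_prod, eval_sub, eval_X]
  rw [hgx, show ∀ c p : ℝ, c * (-1) ^ k * (c * p) = c ^ 2 * ((-1) ^ k * p) by intros; ring]
  exact mul_pos (by positivity) (hx.neg_one_pow_mul_prod_pos hk)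

end InGap

lemma SPrec.exists_inGap {g f : ℝ[X]} (h : SPrec g f) :
    ∃ (m n : ℕ) (r : Fin m → ℝ) (s : Fin n → ℝ),
      f = C f.leadingCoeff * ∏ i, (X - C (r i)) ∧ g = C g.leadingCoeff * ∏ j, (X - C (s j)) ∧
      StrictAnti r ∧ m ≤ n + 1 ∧ ∀ i : Fin m, InGap s i (r i) := by
  rcases h with ⟨n, r, s, hf, hg, hsr, hrs⟩ | ⟨n, r, s, hf, hg, hrsr⟩
  · have hr : StrictAnti r := Fin.strictAnti_of_val_succ_lt fun i hi => (hrs i hi).trans (hsr _)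
    have hs : StrictAnti s := Fin.strictAnti_of_val_succ_lt fun j hj => (hsr _).trans (hrs j hj)
    refine ⟨n, n, r, s, hf, hg, hr, by omega, fun i =>
      inGap_of_antitone hs.antitone i.isLt.le (fun _ => hsr i) fun j hj => ?_⟩
    convert hrs j (by omega)
    exact hj.symm
  · have hs : StrictAnti s := Fin.strictAnti_of_val_succ_lt fun j hj =>
      (hrsr ⟨j + 1, hj⟩).2.trans (hrsr ⟨j, by omega⟩).1
    have hr : StrictAnti r := Fin.strictAnti_iff_succ_lt.mpr fun i => (hrsr i).1.trans (hrsr i).2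
    refine ⟨n + 1, n, r, s, hf, hg, hr, le_rfl, fun i =>
      inGap_of_antitone hs.antitone (by omega) (fun h => (hrsr ⟨i, h⟩).2) fun j hj => ?_⟩
    convert (hrsr j).1
    exact Fin.ext hj.symm

lemma Polynomial.exists_isRoot_Ioo_of_eval_mul_neg (p : ℝ[X]) {x y : ℝ} (hxy : x < y)
    (h : p.eval x * p.eval y < 0) : ∃ z, x < z ∧ z < y ∧ p.IsRoot z := by
  rcases mul_neg_iff.mp h with ⟨hx, hy⟩ | ⟨hx, hy⟩
  · obtain ⟨z, hz, hz0⟩ := intermediate_value_Ioo' hxy.le p.continuousOn ⟨hy, hx⟩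
    exact ⟨z, hz.1, hz.2, hz0⟩
  · obtain ⟨z, hz, hz0⟩ := intermediate_value_Ioo hxy.le p.continuousOn ⟨hx, hy⟩
    exact ⟨z, hz.1, hz.2, hz0⟩

lemma Polynomial.exists_isRoot_gt {p : ℝ[X]} {x : ℝ} (hx : p.leadingCoeff * p.eval x < 0) :
    ∃ y, x < y ∧ p.IsRoot y := by
  have hlc : p.leadingCoeff ≠ 0 := by rintro h; simp [h] at hx
  -- `q = lc(p) * p` has positive leading coefficient, so it becomes positive to the right of `x`.
  set q := C p.leadingCoeff * p with hq
  have hdeg : 0 < q.degree := by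
    rw [hq, degree_C_mul hlc]
    by_contra! h
    rw [eq_C_of_degree_le_zero h, eval_C, leadingCoeff_C] at hx
    nlinarith
  have hlim := q.tendsto_atTop_of_leadingCoeff_nonneg hdeg
    (by rw [hq, leadingCoeff_mul, leadingCoeff_C]; exact mul_self_nonneg _)
  obtain ⟨y, hy, hxy⟩ := ((hlim.eventually_gt_atTop 0).and (Filter.eventually_gt_atTop x)).exists
  obtain ⟨z, hxz, -, hz⟩ := q.exists_isRoot_Ioo_of_eval_mul_neg hxy
    (mul_neg_of_neg_of_pos (by simpa [hq] using hx) hy)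
  exact ⟨z, hxz, by simpa [hq, hlc] using hz⟩

lemma Polynomial.exists_isRoot_lt {p : ℝ[X]} {x : ℝ}
    (hx : (-1) ^ p.natDegree * p.leadingCoeff * p.eval x < 0) : ∃ y, y < x ∧ p.IsRoot y := by
  obtain ⟨y, hxy, hy⟩ := exists_isRoot_gt (p := p.comp (-X)) (x := -x) (by simpa using hx)
  exact ⟨-y, by linarith, by simpa using hy⟩

section Roots

variable {R : Type*} [CommRing R] [IsDomain R] {p : R[X]} {N : ℕ} {t : Fin N → R}

lemma Polynomial.map_le_roots_of_injective (hp : p ≠ 0) (ht : Function.Injective t)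
    (hroot : ∀ i, p.IsRoot (t i)) : univ.val.map t ≤ p.roots := by
  refine (Multiset.le_iff_subset (univ.nodup.map ht)).mpr fun x hx => ?_
  obtain ⟨i, -, rfl⟩ := Multiset.mem_map.mp hx
  exact (mem_roots hp).mpr (hroot i)

lemma Polynomial.card_le_natDegree_of_injective (hp : p ≠ 0) (ht : Function.Injective t)
    (hroot : ∀ i, p.IsRoot (t i)) : N ≤ p.natDegree := by
  simpa using (Multiset.card_le_card (map_le_roots_of_injective hp ht hroot)).trans
    (card_roots' p)

lemma Polynomial.roots_eq_map_of_injective (hp : p ≠ 0) (ht : Function.Injective t)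
    (hroot : ∀ i, p.IsRoot (t i)) (hN : p.natDegree ≤ N) : p.roots = univ.val.map t :=
  (Multiset.eq_of_le_of_card_le (map_le_roots_of_injective hp ht hroot)
    (by simpa using (card_roots' p).trans hN)).symm

lemma Polynomial.eq_C_leadingCoeff_mul_prod_of_roots_eq (h : p.roots = univ.val.map t)
    (hN : p.natDegree = N) : p = C p.leadingCoeff * ∏ i, (X - C (t i)) := by
  have := C_leadingCoeff_mul_prod_multiset_X_sub_C (p := p) (by simp [h, hN])
  rw [h, Multiset.map_map] at this
  exact this.symm

end Roots

section SignAlternation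

variable {m : ℕ} {r : Fin m → ℝ} {F : ℝ[X]}

lemma exists_isRoot_inGap (hr : StrictAnti r)
    (hsgn : ∀ i : Fin m, 0 < F.leadingCoeff * (-1) ^ ((i : ℕ) + 1) * F.eval (r i))
    {k : ℕ} (hk : k < m ∨ k = m ∧ F.natDegree = m + 1) : ∃ x, F.IsRoot x ∧ InGap r k x := by
  rcases hk with hk | ⟨rfl, hdeg⟩
  · cases k with
    | zero =>
      obtain ⟨x, hx, hroot⟩ := exists_isRoot_gt (p := F) (x := r ⟨0, hk⟩)
        (by linear_combination hsgn ⟨0, hk⟩)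
      exact ⟨x, hroot, inGap_of_antitone hr.antitone hk.le (fun _ => hx) fun j hj => by omega⟩
    | succ k =>
      have hsign : F.eval (r ⟨k + 1, hk⟩) * F.eval (r ⟨k, by omega⟩) < 0 := by
        have key : F.eval (r ⟨k + 1, hk⟩) * F.eval (r ⟨k, by omega⟩) *
            (F.leadingCoeff * (-1) ^ (k + 1)) ^ 2 =
            -((F.leadingCoeff * (-1) ^ (k + 1 + 1) * F.eval (r ⟨k + 1, hk⟩)) *
              (F.leadingCoeff * (-1) ^ (k + 1) * F.eval (r ⟨k, by omega⟩))) := by ring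
        nlinarith [mul_pos (hsgn ⟨k + 1, hk⟩) (hsgn ⟨k, by omega⟩),
          sq_nonneg (F.leadingCoeff * (-1) ^ (k + 1))]
      obtain ⟨x, hx₁, hx₂, hroot⟩ :=
        F.exists_isRoot_Ioo_of_eval_mul_neg (hr (Fin.mk_lt_mk.mpr k.lt_succ_self)) hsign
      refine ⟨x, hroot, inGap_of_antitone hr.antitone hk.le (fun _ => hx₁) fun j hj => ?_⟩
      rwa [show j = ⟨k, by omega⟩ from Fin.ext (Nat.succ_injective hj)]
  · cases k with
    | zero =>
      obtain ⟨x, hx⟩ :=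
        exists_root_of_degree_eq_one ((degree_eq_iff_natDegree_eq_of_pos one_pos).mpr hdeg)
      exact ⟨x, hx, fun j => j.elim0⟩
    | succ m =>
      have hlast := hsgn (Fin.last m)
      rw [Fin.val_last] at hlast
      obtain ⟨x, hx, hroot⟩ := exists_isRoot_lt (p := F) (x := r (Fin.last m))
        (by rw [hdeg]; linear_combination hlast)
      refine ⟨x, hroot, inGap_of_antitone hr.antitone le_rfl (fun h => absurd h (lt_irrefl _))
        fun j hj => ?_⟩
      rwa [show j = Fin.last m from Fin.ext (Nat.succ_injective hj)]

lemma sPrec_of_roots_inGap {N : ℕ} {t : Fin N → ℝ} {f : ℝ[X]}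
    (hf : f = C f.leadingCoeff * ∏ i, (X - C (r i))) (hF0 : F ≠ 0) (hN : F.natDegree = N)
    (hmN : N = m ∨ N = m + 1) (hroot : ∀ k, F.IsRoot (t k))
    (hgap : ∀ k : Fin N, InGap r k (t k)) : RealRooted F ∧ F.roots.Nodup ∧ SPrec f F := by
  have ht : Function.Injective t := (strictAnti_of_inGap (by omega) hgap).injective
  have hroots := roots_eq_map_of_injective hF0 ht hroot hN.le
  have hFt := eq_C_leadingCoeff_mul_prod_of_roots_eq hroots hN
  refine ⟨by simp [RealRooted, hroots, hN], hroots ▸ univ.nodup.map ht, ?_⟩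
  rcases hmN with rfl | rfl
  · exact Or.inl ⟨N, t, r, hFt, hf, fun i => (hgap i i).2 le_rfl,
      fun i h => (hgap ⟨i + 1, h⟩ ⟨i, by omega⟩).1 i.lt_succ_self⟩
  · exact Or.inr ⟨m, t, r, hFt, hf, fun i =>
      ⟨(hgap i.succ i).1 (by simp), (hgap i.castSucc i).2 le_rfl⟩⟩

theorem sPrec_of_sign_alternation {f : ℝ[X]} (hr : StrictAnti r)
    (hf : f = C f.leadingCoeff * ∏ i, (X - C (r i))) (hF0 : F ≠ 0) (hdeg : F.natDegree ≤ m + 1)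
    (hsgn : ∀ i : Fin m, 0 < F.leadingCoeff * (-1) ^ ((i : ℕ) + 1) * F.eval (r i)) :
    RealRooted F ∧ F.roots.Nodup ∧ SPrec f F := by
  choose t hroot hgap using fun k : Fin m => exists_isRoot_inGap hr hsgn (Or.inl k.isLt)
  have hmF : m ≤ F.natDegree :=
    card_le_natDegree_of_injective hF0 (strictAnti_of_inGap (by omega) hgap).injective hroot
  rcases (by omega : F.natDegree = m ∨ F.natDegree = m + 1) with hN | hN
  · exact sPrec_of_roots_inGap hf hF0 hN (Or.inl rfl) hroot hgap
  · obtain ⟨w, hw, hwgap⟩ := exists_isRoot_inGap hr hsgn (Or.inr ⟨rfl, hN⟩)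
    exact sPrec_of_roots_inGap (t := Fin.snoc t w) hf hF0 hN (Or.inr rfl)
      (Fin.lastCases (by simpa using hw) fun k => by simpa using hroot k)
      (Fin.lastCases (by simpa using hwgap) fun k => by simpa using hgap k)

end SignAlternation

theorem thm_Ffg_strict_general (F f g a b : Polynomial ℝ)
    (hF : F = a * f + b * g)
    (hgf : SPrec g f)
    (hdeg : F.natDegree = f.natDegree ∨ F.natDegree = f.natDegree + 1)
    (hsign : 0 < F.leadingCoeff * g.leadingCoeff)
    (hb : ∀ r : ℝ, f.IsRoot r → b.eval r < 0) :
    RealRooted F ∧ F.roots.Nodup ∧ SPrec f F := by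
  obtain ⟨m, n, r, s, hfr, hgs, hr, hmn, hgap⟩ := hgf.exists_inGap
  have hlcg : g.leadingCoeff ≠ 0 := right_ne_zero_of_mul hsign.ne'
  have hF0 : F ≠ 0 := leadingCoeff_ne_zero.mp (left_ne_zero_of_mul hsign.ne')
  have hfm : f.natDegree ≤ m := by
    rw [hfr]
    exact (natDegree_C_mul_le _ _).trans (by simp)
  refine sPrec_of_sign_alternation hr hfr hF0 (by omega) fun i => ?_
  have hfi : f.IsRoot (r i) := by
    rw [IsRoot, hfr, eval_mul, eval_prod, prod_eq_zero (mem_univ i) (by simp), mul_zero]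
  have hFi : F.eval (r i) = b.eval (r i) * g.eval (r i) := by simp [hF, hfi.eq_zero]
  have hgi := (hgap i).leadingCoeff_mul_neg_one_pow_mul_eval_pos hgs hlcg (by omega)
  have key : g.leadingCoeff ^ 2 * (F.leadingCoeff * (-1) ^ ((i : ℕ) + 1) * F.eval (r i)) =
      F.leadingCoeff * g.leadingCoeff * -b.eval (r i) *
        (g.leadingCoeff * (-1) ^ (i : ℕ) * g.eval (r i)) := by
    rw [hFi]; ring
  refine pos_of_mul_pos_right ?_ (sq_nonneg g.leadingCoeff)
  rw [key]
  exact mul_pos (mul_pos hsign (neg_pos.mpr (hb _ hfi))) hgi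

theorem thm_Ffg_strict (F f g a b : Polynomial ℝ)
    (hF : F = a * f + b * g)
    (hf : RealRooted f) (hg : RealRooted g) (hgf : SPrec g f)
    (hdeg : F.natDegree = f.natDegree ∨ F.natDegree = f.natDegree + 1)
    (hsign : 0 < F.leadingCoeff * g.leadingCoeff)
    (hb : ∀ r : ℝ, f.IsRoot r → b.eval r < 0) :
    RealRooted F ∧ F.roots.Nodup ∧ SPrec f F :=
  thm_Ffg_strict_general F f g a b hF hgf hdeg hsign hb
end

section
/- Let F(x) = a(x) f(x) + Σ_{j=1}^k b_j(x) g_j(x), where f and each g_j have only real zeros with g_j ⪯ f for all j, deg F = deg f or deg f + 1, and F and all g_j have leading coefficients of the same sign. If b_j(r) ≤ 0 for every j and every real zero r of f, then F has only real zeros and f ⪯ F. -/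
open Polynomial Finset

namespace ThmAux

noncomputable local instance : DecidableEq ℝ := Classical.decEq ℝ
noncomputable local instance (p : ℝ → Prop) : DecidablePred p := Classical.decPred p

/-- number of elements of M that are ≥ t -/
noncomputable def cge (M : Multiset ℝ) (t : ℝ) : ℕ := (M.filter (t ≤ ·)).card
/-- number of elements of M that are > t -/
noncomputable def cgt (M : Multiset ℝ) (t : ℝ) : ℕ := (M.filter (t < ·)).card
/-- number of elements of M that are ≤ t -/
noncomputable def cle (M : Multiset ℝ) (t : ℝ) : ℕ := (M.filter (· ≤ t)).card

lemma cgt_le_cge (M : Multiset ℝ) (t : ℝ) : cgt M t ≤ cge M t :=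
  Multiset.card_le_card (M.monotone_filter_right (fun a h => le_of_lt h))

lemma cge_eq_cgt_add_count (M : Multiset ℝ) (t : ℝ) :
    cge M t = cgt M t + M.count t := by
  classical
  unfold cge cgt
  rw [Multiset.count, Multiset.countP_eq_card_filter]
  rw [← Multiset.card_add]
  congr 1
  have key := Multiset.filter_add_filter (fun a => t < a) (fun a => t = a) M
  have h1 : Multiset.filter (fun a => t < a ∨ t = a) M = Multiset.filter (t ≤ ·) M := by
    apply Multiset.filter_congr; intro a _
    constructor
    · rintro (h | rfl); exact le_of_lt h; exact le_refl _
    · intro h; rcases lt_or_eq_of_le h with h | h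
      · exact Or.inl h
      · exact Or.inr h
  have h2 : Multiset.filter (fun a => t < a ∧ t = a) M = 0 := by
    rw [Multiset.filter_eq_nil]; rintro a _ ⟨h1, rfl⟩; exact lt_irrefl _ h1
  rw [h1, h2, add_zero] at key
  exact key.symm

lemma cle_eq_clt_add_count (M : Multiset ℝ) (t : ℝ) :
    cle M t = (M.filter (· < t)).card + M.count t := by
  classical
  unfold cle
  rw [Multiset.count, Multiset.countP_eq_card_filter]
  rw [← Multiset.card_add]
  congr 1
  have key := Multiset.filter_add_filter (fun a => a < t) (fun a => t = a) M
  have h1 : Multiset.filter (fun a => a < t ∨ t = a) M = Multiset.filter (· ≤ t) M := by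
    apply Multiset.filter_congr; intro a _
    constructor
    · rintro (h | rfl); exact le_of_lt h; exact le_refl _
    · intro h; rcases lt_or_eq_of_le h with h | h
      · exact Or.inl h
      · exact Or.inr h.symm
  have h2 : Multiset.filter (fun a => a < t ∧ t = a) M = 0 := by
    rw [Multiset.filter_eq_nil]; rintro a _ ⟨h1, h2⟩; subst h2; exact lt_irrefl _ h1
  rw [h1, h2, add_zero] at key
  exact key.symm

lemma cgt_add_cle (M : Multiset ℝ) (t : ℝ) : cgt M t + cle M t = M.card := by
  classical
  unfold cgt cle
  rw [← Multiset.card_add]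
  have : Multiset.filter (· ≤ t) M = Multiset.filter (fun a => ¬ t < a) M := by
    apply Multiset.filter_congr; intro a _; simp [not_lt]
  rw [this, Multiset.filter_add_not]

lemma count_le_cge (M : Multiset ℝ) (t : ℝ) : M.count t ≤ cge M t := by
  rw [cge_eq_cgt_add_count]; omega

/-- parity from signs -/
lemma parity_of_sign {x : ℝ} {c d : ℕ} (h1 : 0 < x * (-1) ^ c) (h2 : 0 < x * (-1) ^ d) :
    Even c ↔ Even d := by
  rcases Nat.even_or_odd c with hc | hc <;> rcases Nat.even_or_odd d with hd | hd
  · simp [hc, hd]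
  · exfalso; rw [hc.neg_one_pow] at h1; rw [hd.neg_one_pow] at h2; nlinarith
  · exfalso; rw [hc.neg_one_pow] at h1; rw [hd.neg_one_pow] at h2; nlinarith
  · simp [Nat.not_even_iff_odd.2 hc, Nat.not_even_iff_odd.2 hd]

/-- A downward-closed finset of `Fin n` is an initial segment. -/
lemma mem_iff_lt_card_of_downclosed {n : ℕ} (S : Finset (Fin n))
    (hS : ∀ i j : Fin n, i ≤ j → j ∈ S → i ∈ S) (i : Fin n) : i ∈ S ↔ i.val < S.card := by
  constructor
  · intro hi
    have h1 : Finset.Iic i ⊆ S := fun j hj => hS j i (Finset.mem_Iic.1 hj) hi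
    have := Finset.card_le_card h1
    rw [Fin.card_Iic] at this; omega
  · intro hi
    by_contra hns
    have h2 : S ⊆ Finset.Iio i := by
      intro j hj
      rw [Finset.mem_Iio]
      rcases lt_or_ge j i with h | h
      · exact h
      · exact absurd (hS i j h hj) hns
    have := Finset.card_le_card h2
    rw [Fin.card_Iio] at this; omega

/-- antitone from adjacent comparisons -/
lemma antitone_of_adjacent {n : ℕ} (r : Fin n → ℝ)
    (h : ∀ i : ℕ, (hi : i + 1 < n) → r ⟨i + 1, hi⟩ ≤ r ⟨i, Nat.lt_of_succ_lt hi⟩) :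
    ∀ i j : Fin n, i ≤ j → r j ≤ r i := by
  have key : ∀ d : ℕ, ∀ i : ℕ, ∀ hd : i + d < n, ∀ hi : i < n, r ⟨i + d, hd⟩ ≤ r ⟨i, hi⟩ := by
    intro d
    induction d with
    | zero => intro i hd hi; exact le_of_eq (congrArg r (Fin.ext (by simp)))
    | succ m ih =>
      intro i hd hi
      have h1 : i + m + 1 < n := by omega
      have step := h (i + m) h1
      have e : (⟨i + (m+1), hd⟩ : Fin n) = ⟨i + m + 1, h1⟩ := Fin.ext (by simp; omega)
      rw [e]
      exact le_trans step (ih i (by omega) hi)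
  intro i j hij
  have e1 : j = ⟨i.val + (j.val - i.val), by omega⟩ := Fin.ext (by simp; omega)
  rw [e1]
  exact key (j.val - i.val) i.val (by omega) i.isLt

lemma filter_map_card {n : ℕ} (r : Fin n → ℝ) (p : ℝ → Prop) [DecidablePred p] :
    ((Finset.univ.val.map r).filter p).card = (Finset.univ.filter (fun i => p (r i))).card := by
  classical
  rw [Multiset.filter_map, Multiset.card_map]
  rfl

/-- counting characterization for antitone tuples: weak version -/
lemma antitone_count {n : ℕ} (r : Fin n → ℝ) (anti : ∀ i j : Fin n, i ≤ j → r j ≤ r i)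
    (p : ℝ → Prop) [DecidablePred p] (hp : ∀ x y : ℝ, x ≤ y → p x → p y) (i : Fin n) :
    p (r i) ↔ i.val < ((Finset.univ.val.map r).filter p).card := by
  classical
  rw [filter_map_card]
  have := mem_iff_lt_card_of_downclosed (Finset.univ.filter (fun i => p (r i)))
    (fun a b hab hb => by
      simp only [Finset.mem_filter, Finset.mem_univ, true_and] at *
      exact hp _ _ (anti a b hab) hb) i
  simpa using this

lemma univ_val_map_equiv {m c : ℕ} (e : Fin c ≃ Fin m) :
    Finset.univ.val.map e = Finset.univ.val := by
  have := Finset.map_univ_equiv e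
  rw [← this, Finset.map_val]
  rfl

/-- antitone enumeration of a real multiset -/
lemma exists_antitone_enum (M : Multiset ℝ) (c : ℕ) (hc : Multiset.card M = c) :
    ∃ r : Fin c → ℝ, (∀ i j : Fin c, i ≤ j → r j ≤ r i) ∧ Finset.univ.val.map r = M := by
  classical
  set L := M.sort (· ≤ ·) with hL
  have hsort : L.Pairwise (· ≤ ·) := M.pairwise_sort _
  have hlen : L.length = c := by rw [hL, Multiset.length_sort]; exact hc
  refine ⟨fun i => L.get ((Fin.cast hlen.symm i).rev), ?_, ?_⟩
  · intro i j hij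
    rcases eq_or_lt_of_le hij with rfl | hlt
    · exact le_refl _
    · apply hsort.rel_get_of_le
      apply Fin.le_def.2
      simp [Fin.rev]
      omega
  · have h1 : Finset.univ.val.map (fun i : Fin c => L.get ((Fin.cast hlen.symm i).rev))
        = (Finset.univ.val.map (fun i : Fin c => (Fin.cast hlen.symm i).rev)).map L.get := by
      rw [Multiset.map_map]; rfl
    have h2 : Finset.univ.val.map (fun i : Fin c => (Fin.cast hlen.symm i).rev)
        = Finset.univ.val :=
      univ_val_map_equiv ((finCongr hlen.symm).trans (Fin.revPerm))
    rw [h1, h2, Fin.univ_val_map, List.ofFn_get, hL, Multiset.sort_eq]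

section PolySign

open Filter

lemma noRoots_pos (q : Polynomial ℝ) (hq : q.roots = 0) (hlc : 0 < q.leadingCoeff) (x : ℝ) :
    0 < q.eval x := by
  have hq0 : q ≠ 0 := fun h => by simp [h] at hlc
  have hnr : ∀ y : ℝ, q.eval y ≠ 0 := by
    intro y hy
    have : y ∈ q.roots := (Polynomial.mem_roots hq0).2 hy
    rw [hq] at this; exact absurd this (Multiset.notMem_zero y)
  by_contra hle
  push_neg at hle
  have hlt : q.eval x < 0 := lt_of_le_of_ne hle (hnr x)
  rcases le_or_gt q.degree 0 with hdeg | hdeg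
  · have : q = Polynomial.C (q.coeff 0) := Polynomial.eq_C_of_degree_le_zero hdeg
    rw [this] at hlt
    simp at hlt
    rw [this] at hlc
    simp [Polynomial.leadingCoeff] at hlc
    linarith
  · have htt := Polynomial.tendsto_atTop_of_leadingCoeff_nonneg q hdeg (le_of_lt hlc)
    have h1 : ∀ᶠ y in atTop, (1 : ℝ) ≤ q.eval y := htt.eventually_ge_atTop 1
    have h2 : ∀ᶠ y in atTop, x ≤ y := eventually_ge_atTop x
    obtain ⟨y, hy1, hy2⟩ := (h1.and h2).exists
    have key := intermediate_value_Icc hy2 (q.continuousOn (s := Set.Icc x y))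
    have h0 : (0 : ℝ) ∈ Set.Icc (q.eval x) (q.eval y) := Set.mem_Icc.2 ⟨le_of_lt hlt, by linarith⟩
    obtain ⟨z, _, hz⟩ := key h0
    exact hnr z hz

lemma even_aux (q : Polynomial ℝ) (hq : q.roots = 0) (hlc : 0 < q.leadingCoeff)
    (hodd : Odd q.natDegree) : False := by
  have hq0 : q ≠ 0 := fun h => by simp [h] at hlc
  have hnr : ∀ y : ℝ, q.eval y ≠ 0 := by
    intro y hy
    have : y ∈ q.roots := (Polynomial.mem_roots hq0).2 hy
    rw [hq] at this; exact absurd this (Multiset.notMem_zero y)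
  have hnd0 : q.natDegree ≠ 0 := by
    intro h; rw [h] at hodd; exact (Nat.not_odd_iff_even.2 Even.zero) hodd
  have hdeg : 0 < q.degree := Polynomial.natDegree_pos_iff_degree_pos.1 (Nat.pos_of_ne_zero hnd0)
  set r : Polynomial ℝ := q.comp (-Polynomial.X) with hr
  have hndX : (-Polynomial.X : Polynomial ℝ).natDegree = 1 := by
    rw [Polynomial.natDegree_neg, Polynomial.natDegree_X]
  have hlcr : r.leadingCoeff = -q.leadingCoeff := by
    rw [hr, Polynomial.leadingCoeff_comp (by rw [hndX]; exact one_ne_zero)]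
    have : (-Polynomial.X : Polynomial ℝ).leadingCoeff = -1 := by
      rw [Polynomial.leadingCoeff_neg, Polynomial.leadingCoeff_X]
    rw [this, hodd.neg_one_pow, mul_neg_one]
  have hdegr : 0 < r.degree := by
    apply Polynomial.natDegree_pos_iff_degree_pos.1
    rw [hr, Polynomial.natDegree_comp, hndX, mul_one]
    exact Nat.pos_of_ne_zero hnd0
  have htb := Polynomial.tendsto_atBot_of_leadingCoeff_nonpos r hdegr
    (by rw [hlcr]; linarith)
  have htt := Polynomial.tendsto_atTop_of_leadingCoeff_nonneg q hdeg (le_of_lt hlc)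
  have h1 : ∀ᶠ y in atTop, q.eval y ≥ 1 := htt.eventually_ge_atTop 1
  have h2 : ∀ᶠ y in atTop, r.eval y ≤ -1 := htb.eventually_le_atBot (-1)
  have h3 : ∀ᶠ y : ℝ in atTop, (0:ℝ) ≤ y := eventually_ge_atTop 0
  obtain ⟨y, ⟨hy1, hy2⟩, hy3⟩ := ((h1.and h2).and h3).exists
  have hcomp : r.eval y = q.eval (-y) := by
    rw [hr, Polynomial.eval_comp]; simp
  have key := intermediate_value_Icc (by linarith : -y ≤ y) (q.continuousOn (s := Set.Icc (-y) y))
  have h0 : (0 : ℝ) ∈ Set.Icc (q.eval (-y)) (q.eval y) := by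
    rw [← hcomp]; exact Set.mem_Icc.2 ⟨by linarith, by linarith⟩
  obtain ⟨z, _, hz⟩ := key h0
  exact hnr z hz

lemma even_natDegree_of_noRoots (q : Polynomial ℝ) (hq : q.roots = 0) (hq0 : q ≠ 0) :
    Even q.natDegree := by
  by_contra h
  have hodd : Odd q.natDegree := Nat.not_even_iff_odd.1 h
  have hlc : q.leadingCoeff ≠ 0 := Polynomial.leadingCoeff_ne_zero.2 hq0
  rcases lt_or_gt_of_ne hlc with hneg | hpos
  · apply even_aux (-q) (by rw [Polynomial.roots_neg]; exact hq)
      (by rw [Polynomial.leadingCoeff_neg]; linarith)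
      (by rw [Polynomial.natDegree_neg]; exact hodd)
  · exact even_aux q hq hpos hodd

lemma noRoots_sign (q : Polynomial ℝ) (hq : q.roots = 0) (hq0 : q ≠ 0) (x : ℝ) :
    0 < q.eval x * q.leadingCoeff := by
  have hlc : q.leadingCoeff ≠ 0 := Polynomial.leadingCoeff_ne_zero.2 hq0
  rcases lt_or_gt_of_ne hlc with hneg | hpos
  · have := noRoots_pos (-q) (by rw [Polynomial.roots_neg]; exact hq)
      (by rw [Polynomial.leadingCoeff_neg]; linarith) x
    rw [Polynomial.eval_neg] at this
    nlinarith
  · have := noRoots_pos q hq hpos x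
    nlinarith

lemma prod_sign (M : Multiset ℝ) (t : ℝ) (h : ∀ a ∈ M, a ≠ t) :
    0 < (-1 : ℝ) ^ (cgt M t) * (M.map (fun a => t - a)).prod := by
  classical
  induction M using Multiset.induction with
  | empty => simp [cgt]
  | cons a M ih =>
    have ha : a ≠ t := h a (Multiset.mem_cons_self a M)
    have ih' := ih (fun b hb => h b (Multiset.mem_cons_of_mem hb))
    rw [Multiset.map_cons, Multiset.prod_cons]
    rcases lt_or_gt_of_ne ha with hlt | hgt
    · -- a < t, factor positive, count unchanged
      have hc : cgt (a ::ₘ M) t = cgt M t := by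
        unfold cgt
        rw [Multiset.filter_cons_of_neg M (show ¬ t < a from not_lt.2 (le_of_lt hlt))]
      rw [hc]
      have hf : 0 < t - a := by linarith
      nlinarith
    · -- a > t, factor negative, count increments
      have hc : cgt (a ::ₘ M) t = cgt M t + 1 := by
        unfold cgt
        rw [Multiset.filter_cons_of_pos M (show t < a from hgt)]
        simp
      rw [hc, pow_succ]
      have hf : t - a < 0 := by linarith
      nlinarith

lemma eval_sign (p : Polynomial ℝ) (hp : p ≠ 0) (t : ℝ) (hnr : ¬ p.IsRoot t) :
    0 < p.eval t * p.leadingCoeff * (-1 : ℝ) ^ (cgt p.roots t) := by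
  classical
  obtain ⟨q, hpq, hdq, hq0⟩ := p.exists_prod_multiset_X_sub_C_mul
  have hqne : q ≠ 0 := by
    intro h; rw [h, mul_zero] at hpq; exact hp hpq.symm
  have hlc : p.leadingCoeff = q.leadingCoeff := by
    rw [← hpq, Polynomial.leadingCoeff_mul, (Polynomial.monic_multiset_prod_of_monic _ _ (fun a _ => Polynomial.monic_X_sub_C a)).leadingCoeff,
      one_mul]
  have heval : p.eval t = (p.roots.map (fun a => t - a)).prod * q.eval t := by
    conv_lhs => rw [← hpq]
    rw [Polynomial.eval_mul, Polynomial.eval_multiset_prod, Multiset.map_map]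
    congr 2
    apply Multiset.map_congr rfl
    intro a _
    simp
  have hq := noRoots_sign q hq0 hqne t
  have hroots : ∀ a ∈ p.roots, a ≠ t := by
    intro a ha heq
    subst heq
    exact hnr ((Polynomial.mem_roots hp).1 ha)
  have hprod := prod_sign p.roots t hroots
  rw [heval, hlc]
  nlinarith

end PolySign

section Counting

lemma cge_le_cgt_of_lt (M : Multiset ℝ) {x y : ℝ} (h : y < x) : cge M x ≤ cgt M y :=
  Multiset.card_le_card (M.monotone_filter_right (fun a ha => lt_of_lt_of_le h ha))

lemma cle_le_clt_of_lt (M : Multiset ℝ) {x y : ℝ} (h : x < y) :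
    cle M x ≤ (M.filter (· < y)).card :=
  Multiset.card_le_card (M.monotone_filter_right (fun a ha => lt_of_le_of_lt ha h))

lemma clt_le_cle (M : Multiset ℝ) (t : ℝ) : (M.filter (· < t)).card ≤ cle M t :=
  Multiset.card_le_card (M.monotone_filter_right (fun a ha => le_of_lt ha))

lemma pos_of_nonneg_ne {x : ℝ} (c : ℕ) (h1 : 0 ≤ x * (-1) ^ c) (h2 : x ≠ 0) :
    0 < x * (-1) ^ c := by
  rcases Nat.even_or_odd c with hc | hc
  · rw [hc.neg_one_pow] at *; rcases lt_or_gt_of_ne h2 with h | h <;> nlinarith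
  · rw [hc.neg_one_pow] at *; rcases lt_or_gt_of_ne h2 with h | h <;> nlinarith

lemma count_roots_pos (p : Polynomial ℝ) (hp : p ≠ 0) {t : ℝ} (h : p.eval t = 0) :
    1 ≤ p.roots.count t := by
  rw [Nat.one_le_iff_ne_zero]
  intro hc
  have : t ∉ p.roots := Multiset.count_eq_zero.1 hc
  exact this ((Polynomial.mem_roots hp).2 h)

lemma count_roots_zero (p : Polynomial ℝ) {t : ℝ} (h : p.eval t ≠ 0) :
    p.roots.count t = 0 := by
  apply Multiset.count_eq_zero.2
  intro hmem
  exact h (Polynomial.isRoot_of_mem_roots hmem)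

lemma countUp (p : Polynomial ℝ) (hp : p ≠ 0) (N : ℕ) (u : ℕ → ℝ)
    (hu : ∀ i, i + 1 < N → u (i + 1) < u i)
    (hs : ∀ i, i < N → 0 ≤ p.eval (u i) * p.leadingCoeff * (-1 : ℝ) ^ (i + 1)) :
    ∀ i, i < N → i + 1 ≤ cge p.roots (u i) := by
  intro i
  induction i with
  | zero =>
    intro hiN
    rcases eq_or_ne (p.eval (u 0)) 0 with he | he
    · calc 1 ≤ p.roots.count (u 0) := count_roots_pos p hp he
        _ ≤ cge p.roots (u 0) := count_le_cge _ _
    · have hsign := eval_sign p hp (u 0) he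
      have hcond := pos_of_nonneg_ne (x := p.eval (u 0) * p.leadingCoeff) 1 (hs 0 hiN)
        (mul_ne_zero he (Polynomial.leadingCoeff_ne_zero.2 hp))
      have hpar := parity_of_sign hsign hcond
      have hcge : cge p.roots (u 0) = cgt p.roots (u 0) := by
        rw [cge_eq_cgt_add_count, count_roots_zero p he, add_zero]
      rw [hcge]
      rw [Nat.even_iff, Nat.even_iff] at hpar
      omega
  | succ i ih =>
    intro hiN
    have hIH := ih (by omega)
    have hmono : cge p.roots (u i) ≤ cgt p.roots (u (i + 1)) :=
      cge_le_cgt_of_lt _ (hu i hiN)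
    rcases eq_or_ne (p.eval (u (i + 1))) 0 with he | he
    · have h1 : 1 ≤ p.roots.count (u (i + 1)) := count_roots_pos p hp he
      have := cge_eq_cgt_add_count p.roots (u (i + 1))
      omega
    · have hsign := eval_sign p hp (u (i + 1)) he
      have hcond := pos_of_nonneg_ne (x := p.eval (u (i + 1)) * p.leadingCoeff) (i + 2)
        (hs (i + 1) hiN) (mul_ne_zero he (Polynomial.leadingCoeff_ne_zero.2 hp))
      have hpar := parity_of_sign hsign hcond
      have hcge : cge p.roots (u (i + 1)) = cgt p.roots (u (i + 1)) := by
        rw [cge_eq_cgt_add_count, count_roots_zero p he, add_zero]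
      rw [hcge]
      rw [Nat.even_iff, Nat.even_iff] at hpar
      omega

lemma countLow (p : Polynomial ℝ) (hp : p ≠ 0) (N : ℕ) (ε : ℕ) (hε : ε ≤ 1) (w : ℕ → ℝ)
    (hw : ∀ j, j + 1 < N → w j < w (j + 1))
    (hs : ∀ j, j < N →
      0 ≤ p.eval (w j) * p.leadingCoeff * (-1 : ℝ) ^ (Multiset.card p.roots + j + ε)) :
    ∀ j, j < N → j + ε ≤ cle p.roots (w j) := by
  have hRtot : ∀ t, cgt p.roots t + cle p.roots t = Multiset.card p.roots := fun t =>
    cgt_add_cle p.roots t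
  intro j
  induction j with
  | zero =>
    intro hjN
    rcases eq_or_ne (p.eval (w 0)) 0 with he | he
    · have h1 : 1 ≤ p.roots.count (w 0) := count_roots_pos p hp he
      have := cle_eq_clt_add_count p.roots (w 0)
      omega
    · have hsign := eval_sign p hp (w 0) he
      have hcond := pos_of_nonneg_ne (x := p.eval (w 0) * p.leadingCoeff)
        (Multiset.card p.roots + 0 + ε) (hs 0 hjN)
        (mul_ne_zero he (Polynomial.leadingCoeff_ne_zero.2 hp))
      have hpar := parity_of_sign hsign hcond
      have htot := hRtot (w 0)
      rw [Nat.even_iff, Nat.even_iff] at hpar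
      omega
  | succ j ih =>
    intro hjN
    have hIH := ih (by omega)
    have hmono : cle p.roots (w j) ≤ (p.roots.filter (· < w (j + 1))).card :=
      cle_le_clt_of_lt _ (hw j hjN)
    have hsplit := cle_eq_clt_add_count p.roots (w (j + 1))
    rcases eq_or_ne (p.eval (w (j + 1))) 0 with he | he
    · have h1 : 1 ≤ p.roots.count (w (j + 1)) := count_roots_pos p hp he
      omega
    · have hsign := eval_sign p hp (w (j + 1)) he
      have hcond := pos_of_nonneg_ne (x := p.eval (w (j + 1)) * p.leadingCoeff)
        (Multiset.card p.roots + (j + 1) + ε) (hs (j + 1) hjN)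
        (mul_ne_zero he (Polynomial.leadingCoeff_ne_zero.2 hp))
      have hpar := parity_of_sign hsign hcond
      have htot := hRtot (w (j + 1))
      have hcnt := count_roots_zero p he
      rw [Nat.even_iff, Nat.even_iff] at hpar
      omega

end Counting

section KeyE

lemma card_val_lt {n' : ℕ} (K : ℕ) (hK : K ≤ n') :
    (Finset.univ.filter (fun l : Fin n' => l.val < K)).card = K := by
  have h := Finset.card_bij'
    (fun (a : Fin n') (ha : a ∈ Finset.univ.filter (fun l => l.val < K)) =>
      (⟨a.val, (Finset.mem_filter.1 ha).2⟩ : Fin K))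
    (fun (b : Fin K) (_ : b ∈ (Finset.univ : Finset (Fin K))) =>
      (⟨b.val, lt_of_lt_of_le b.isLt hK⟩ : Fin n'))
    (fun a ha => Finset.mem_univ _)
    (fun b hb => Finset.mem_filter.2 ⟨Finset.mem_univ _, b.isLt⟩)
    (fun a ha => rfl) (fun b hb => rfl)
  rw [h, Finset.card_fin]

lemma keyE {n' M m : ℕ} (t : ℝ) (s : Fin n' → ℝ)
    (hm : 1 ≤ m) (hMm : M + m ≤ n' + 1)
    (h1 : ∀ l : Fin n', l.val + 1 < M → t < s l)
    (h2 : ∀ l : Fin n', M ≤ l.val → s l ≤ t)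
    (h3 : ∀ l : Fin n', l.val + 1 ≤ M → t ≤ s l)
    (h4 : ∀ l : Fin n', M ≤ l.val → l.val + 2 ≤ M + m → s l = t) :
    (m - 1 ≤ (Finset.univ.filter (fun l => s l = t)).card) ∧
    ((Finset.univ.filter (fun l => t < s l)).card = M ∨
      ((Finset.univ.filter (fun l => t < s l)).card + 1 = M ∧
        m ≤ (Finset.univ.filter (fun l => s l = t)).card)) := by
  classical
  have hMn : M ≤ n' := by omega
  set Sgt := Finset.univ.filter (fun l : Fin n' => t < s l) with hSgt
  set Eq := Finset.univ.filter (fun l : Fin n' => s l = t) with hEq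
  set Ge := Finset.univ.filter (fun l : Fin n' => l.val < M + m - 1) with hGe
  set Gt := Finset.univ.filter (fun l : Fin n' => l.val < M - 1) with hGt
  set Lt := Finset.univ.filter (fun l : Fin n' => l.val < M) with hLt
  have hGe_card : Ge.card = M + m - 1 := card_val_lt _ (by omega)
  have hGt_card : Gt.card = M - 1 := card_val_lt _ (by omega)
  have hLt_card : Lt.card = M := card_val_lt _ hMn
  have hGtSgt : Gt ⊆ Sgt := by
    intro l hl
    rw [hGt, Finset.mem_filter] at hl
    exact Finset.mem_filter.2 ⟨Finset.mem_univ _, h1 l (by omega)⟩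
  have hSgtLt : Sgt ⊆ Lt := by
    intro l hl
    rw [hSgt, Finset.mem_filter] at hl
    refine Finset.mem_filter.2 ⟨Finset.mem_univ _, ?_⟩
    by_contra hge
    push_neg at hge
    exact absurd (h2 l hge) (not_le.2 hl.2)
  have hGe_le : ∀ l ∈ Ge, t ≤ s l := by
    intro l hl
    rw [hGe, Finset.mem_filter] at hl
    rcases le_or_gt (l.val + 1) M with hc | hc
    · exact h3 l hc
    · exact le_of_eq (h4 l (by omega) (by omega)).symm
  have hsdiff : Ge \ Sgt ⊆ Eq := by
    intro l hl
    rw [Finset.mem_sdiff] at hl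
    have ht1 : t ≤ s l := hGe_le l hl.1
    have ht2 : ¬ t < s l := by
      intro hlt
      exact hl.2 (Finset.mem_filter.2 ⟨Finset.mem_univ _, hlt⟩)
    exact Finset.mem_filter.2 ⟨Finset.mem_univ _, le_antisymm (not_lt.1 ht2) ht1⟩
  have hcard1 : Ge.card - Sgt.card ≤ Eq.card :=
    le_trans (Finset.le_card_sdiff _ _) (Finset.card_le_card hsdiff)
  have hub : Sgt.card ≤ M := hLt_card ▸ Finset.card_le_card hSgtLt
  have hlb : M - 1 ≤ Sgt.card := hGt_card ▸ Finset.card_le_card hGtSgt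
  constructor
  · omega
  · rcases eq_or_ne Sgt.card M with h | h
    · exact Or.inl h
    · exact Or.inr ⟨by omega, by omega⟩

end KeyE

section EFacts

lemma roots_of_rep {p : Polynomial ℝ} {n : ℕ} {r : Fin n → ℝ} (hp : p ≠ 0)
    (h : p = Polynomial.C p.leadingCoeff * ∏ i, (Polynomial.X - Polynomial.C (r i))) :
    p.roots = Finset.univ.val.map r := by
  have hlc : p.leadingCoeff ≠ 0 := Polynomial.leadingCoeff_ne_zero.2 hp
  have hprod : (∏ i, (Polynomial.X - Polynomial.C (r i)))
      = ((Finset.univ.val.map r).map (fun a => Polynomial.X - Polynomial.C a)).prod := by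
    rw [Multiset.map_map]
    rfl
  conv_lhs => rw [h]
  rw [Polynomial.roots_C_mul _ hlc, hprod, Polynomial.roots_multiset_prod_X_sub_C]

lemma cgt_map_eq {n : ℕ} (r : Fin n → ℝ) (t : ℝ) :
    cgt (Finset.univ.val.map r) t = (Finset.univ.filter (fun i => t < r i)).card :=
  filter_map_card r _

lemma cge_map_eq {n : ℕ} (r : Fin n → ℝ) (t : ℝ) :
    cge (Finset.univ.val.map r) t = (Finset.univ.filter (fun i => t ≤ r i)).card :=
  filter_map_card r _

lemma count_map_eq {n : ℕ} (r : Fin n → ℝ) (t : ℝ) :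
    (Finset.univ.val.map r).count t = (Finset.univ.filter (fun i => r i = t)).card := by
  classical
  rw [Multiset.count_map]
  have : Multiset.filter (fun i => t = r i) Finset.univ.val
      = Multiset.filter (fun i => r i = t) Finset.univ.val := by
    apply Multiset.filter_congr
    intro a _
    exact eq_comm
  rw [this]
  rfl

/-- the key fact about positions of the roots of `g` relative to those of `f`, when
`Prec g f`. -/
lemma E_facts {g f : Polynomial ℝ} (hPrec : Prec g f) (hf0 : f ≠ 0) (hg0 : g ≠ 0)
    {t : ℝ} (ht : f.IsRoot t) :
    (f.roots.count t - 1 ≤ g.roots.count t) ∧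
    (cgt g.roots t = cgt f.roots t ∨
      (cgt g.roots t + 1 = cgt f.roots t ∧ f.roots.count t ≤ g.roots.count t)) := by
  classical
  have htmem : t ∈ f.roots := (Polynomial.mem_roots hf0).2 ht
  have hm1 : 1 ≤ f.roots.count t := Multiset.one_le_count_iff_mem.2 htmem
  have hcge : cge f.roots t = cgt f.roots t + f.roots.count t := cge_eq_cgt_add_count f.roots t
  rcases hPrec with ⟨n', r, sfn, hfrep, hgrep, hsr, hadj⟩ | ⟨n', r, sfn, hfrep, hgrep, hrs⟩
  · -- AltLeft case
    have hfr : f.roots = Finset.univ.val.map r := roots_of_rep hf0 hfrep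
    have hgr : g.roots = Finset.univ.val.map sfn := roots_of_rep hg0 hgrep
    have hanti : ∀ i j : Fin n', i ≤ j → r j ≤ r i := by
      apply antitone_of_adjacent
      intro i hi
      exact le_trans (hadj i hi) (hsr _)
    have hchar_gt : ∀ i : Fin n', t < r i ↔ i.val < cgt f.roots t := by
      intro i
      rw [hfr]
      show _ ↔ i.val < Multiset.card (Multiset.filter (fun x => t < x) (Finset.univ.val.map r))
      exact antitone_count r hanti (fun x => t < x) (fun x y hxy hx => lt_of_lt_of_le hx hxy) i
    have hchar_ge : ∀ i : Fin n', t ≤ r i ↔ i.val < cgt f.roots t + f.roots.count t := by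
      intro i
      rw [← hcge, hfr]
      show _ ↔ i.val < Multiset.card (Multiset.filter (fun x => t ≤ x) (Finset.univ.val.map r))
      exact antitone_count r hanti (fun x => t ≤ x) (fun x y hxy hx => le_trans hx hxy) i
    have hcge_le : cge f.roots t ≤ n' := by
      rw [hfr, cge_map_eq]
      exact le_trans (Finset.card_filter_le _ _) (by simp)
    have hMm_le : cgt f.roots t + f.roots.count t ≤ n' := by rw [← hcge]; exact hcge_le
    have hlo : ∀ l : Fin n', l.val + 1 < cgt f.roots t + f.roots.count t → t ≤ sfn l := by
      intro l hl
      have hlt : l.val + 1 < n' := by omega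
      have hstep := hadj l.val hlt
      have hr : t ≤ r ⟨l.val + 1, hlt⟩ := by
        rw [hchar_ge]
        exact hl
      have : sfn ⟨l.val, Nat.lt_of_succ_lt hlt⟩ = sfn l := by congr 1
      rw [← this]
      exact le_trans hr hstep
    have hup : ∀ l : Fin n', cgt f.roots t ≤ l.val → sfn l ≤ t := by
      intro l hl
      have hnlt : ¬ t < r l := by rw [hchar_gt]; omega
      exact le_trans (hsr l) (not_lt.1 hnlt)
    have key := keyE t sfn hm1 (by omega)
      (fun l hl => by
        have hlt : l.val + 1 < n' := by omega
        have hstep := hadj l.val hlt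
        have hr : t < r ⟨l.val + 1, hlt⟩ := by
          rw [hchar_gt]
          exact hl
        have heq : sfn ⟨l.val, Nat.lt_of_succ_lt hlt⟩ = sfn l := by congr 1
        rw [← heq]
        exact lt_of_lt_of_le hr hstep)
      hup
      (fun l hl => hlo l (by omega))
      (fun l hl1 hl2 => le_antisymm (hup l hl1) (hlo l (by omega)))
    rw [hgr, cgt_map_eq, count_map_eq]
    exact key
  · -- Interlaces case
    have hfr : f.roots = Finset.univ.val.map r := roots_of_rep hf0 hfrep
    have hgr : g.roots = Finset.univ.val.map sfn := roots_of_rep hg0 hgrep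
    have hanti : ∀ i j : Fin (n' + 1), i ≤ j → r j ≤ r i := by
      apply antitone_of_adjacent
      intro i hi
      have hin : i < n' := by omega
      have h1 := (hrs ⟨i, hin⟩).1
      have h2 := (hrs ⟨i, hin⟩).2
      have e1 : (⟨i, hin⟩ : Fin n').succ = (⟨i + 1, hi⟩ : Fin (n' + 1)) := by
        apply Fin.ext; simp
      have e2 : (⟨i, hin⟩ : Fin n').castSucc = (⟨i, Nat.lt_of_succ_lt hi⟩ : Fin (n' + 1)) := by
        apply Fin.ext; simp
      rw [e1] at h1
      rw [e2] at h2
      exact le_trans h1 h2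
    have hchar_gt : ∀ i : Fin (n' + 1), t < r i ↔ i.val < cgt f.roots t := by
      intro i
      rw [hfr]
      show _ ↔ i.val < Multiset.card (Multiset.filter (fun x => t < x) (Finset.univ.val.map r))
      exact antitone_count r hanti (fun x => t < x) (fun x y hxy hx => lt_of_lt_of_le hx hxy) i
    have hchar_ge : ∀ i : Fin (n' + 1), t ≤ r i ↔ i.val < cgt f.roots t + f.roots.count t := by
      intro i
      rw [← hcge, hfr]
      show _ ↔ i.val < Multiset.card (Multiset.filter (fun x => t ≤ x) (Finset.univ.val.map r))
      exact antitone_count r hanti (fun x => t ≤ x) (fun x y hxy hx => le_trans hx hxy) i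
    have hcge_le : cge f.roots t ≤ n' + 1 := by
      rw [hfr, cge_map_eq]
      exact le_trans (Finset.card_filter_le _ _) (by simp)
    have hMm_le : cgt f.roots t + f.roots.count t ≤ n' + 1 := by rw [← hcge]; exact hcge_le
    have hsucc_val : ∀ l : Fin n', (l.succ : Fin (n' + 1)).val = l.val + 1 := fun l => rfl
    have hcast_val : ∀ l : Fin n', (l.castSucc : Fin (n' + 1)).val = l.val := fun l => rfl
    have hlo : ∀ l : Fin n', l.val + 1 < cgt f.roots t + f.roots.count t → t ≤ sfn l := by
      intro l hl
      have hr : t ≤ r l.succ := by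
        rw [hchar_ge, hsucc_val]
        omega
      exact le_trans hr (hrs l).1
    have hup : ∀ l : Fin n', cgt f.roots t ≤ l.val → sfn l ≤ t := by
      intro l hl
      have hnlt : ¬ t < r l.castSucc := by rw [hchar_gt, hcast_val]; omega
      exact le_trans (hrs l).2 (not_lt.1 hnlt)
    have key := keyE t sfn hm1 hMm_le
      (fun l hl => by
        have hr : t < r l.succ := by
          rw [hchar_gt, hsucc_val]
          omega
        exact lt_of_lt_of_le hr (hrs l).1)
      hup
      (fun l hl => hlo l (by omega))
      (fun l hl1 hl2 => le_antisymm (hup l hl1) (hlo l (by omega)))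
    rw [hgr, cgt_map_eq, count_map_eq]
    exact key

end EFacts

section Build

lemma cge_mono (M : Multiset ℝ) {x y : ℝ} (h : x ≤ y) : cge M y ≤ cge M x :=
  Multiset.card_le_card (M.monotone_filter_right (fun a ha => le_trans h ha))

lemma cge_le_card (M : Multiset ℝ) (t : ℝ) : cge M t ≤ Multiset.card M :=
  Multiset.card_le_card (Multiset.filter_le _ M)

lemma rep_of_enum {p : Polynomial ℝ} {c : ℕ} {r : Fin c → ℝ} (hR : Multiset.card p.roots = p.natDegree)
    (hmap : Finset.univ.val.map r = p.roots) :
    p = Polynomial.C p.leadingCoeff * ∏ i, (Polynomial.X - Polynomial.C (r i)) := by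
  have hrep := Polynomial.C_leadingCoeff_mul_prod_multiset_X_sub_C hR
  have hprod : (∏ i, (Polynomial.X - Polynomial.C (r i)))
      = (p.roots.map (fun aa => Polynomial.X - Polynomial.C aa)).prod := by
    rw [← hmap, Multiset.map_map]
    rfl
  rw [hprod, hrep]

lemma enum_le_iff {c : ℕ} {M : Multiset ℝ} {r : Fin c → ℝ}
    (anti : ∀ i j : Fin c, i ≤ j → r j ≤ r i) (hmap : Finset.univ.val.map r = M)
    (t : ℝ) (i : Fin c) : t ≤ r i ↔ i.val < cge M t := by
  rw [← hmap]
  show _ ↔ i.val < Multiset.card (Multiset.filter (fun x => t ≤ x) (Finset.univ.val.map r))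
  exact antitone_count r anti (fun x => t ≤ x) (fun x y hxy hx => le_trans hx hxy) i

lemma build_prec {f F : Polynomial ℝ} (hfR : RealRooted f) (hFR : RealRooted F)
    (hlow : ∀ t : ℝ, cge f.roots t ≤ cge F.roots t)
    (hhigh : ∀ t : ℝ, cge F.roots t ≤ cge f.roots t + 1)
    (hdeg : F.natDegree = f.natDegree ∨ F.natDegree = f.natDegree + 1) :
    Prec f F := by
  classical
  obtain ⟨sfn, hsanti, hsmap⟩ := exists_antitone_enum f.roots f.natDegree hfR
  rcases hdeg with hdeg | hdeg
  · -- AltLeft f F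
    obtain ⟨rfn, hranti, hrmap⟩ := exists_antitone_enum F.roots f.natDegree (by rw [hFR, hdeg])
    left
    refine ⟨f.natDegree, rfn, sfn, rep_of_enum (by rw [hFR, hdeg]) hrmap, rep_of_enum hfR hsmap,
      ?_, ?_⟩
    · intro i
      have h1 : i.val < cge f.roots (sfn i) := (enum_le_iff hsanti hsmap (sfn i) i).1 (le_refl _)
      have h2 : i.val < cge F.roots (sfn i) := lt_of_lt_of_le h1 (hlow _)
      exact (enum_le_iff hranti hrmap (sfn i) i).2 h2
    · intro i hi
      have h1 : i + 1 < cge F.roots (rfn ⟨i + 1, hi⟩) :=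
        (enum_le_iff hranti hrmap _ ⟨i + 1, hi⟩).1 (le_refl _)
      have h2 := hhigh (rfn ⟨i + 1, hi⟩)
      have h3 : i < cge f.roots (rfn ⟨i + 1, hi⟩) := by omega
      exact (enum_le_iff hsanti hsmap _ ⟨i, Nat.lt_of_succ_lt hi⟩).2 h3
  · -- Interlaces f F
    obtain ⟨rfn, hranti, hrmap⟩ := exists_antitone_enum F.roots (f.natDegree + 1)
      (by rw [hFR, hdeg])
    right
    refine ⟨f.natDegree, rfn, sfn, rep_of_enum (by rw [hFR, hdeg]) hrmap, rep_of_enum hfR hsmap,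
      ?_⟩
    intro i
    constructor
    · have h1 : i.val + 1 < cge F.roots (rfn i.succ) :=
        (enum_le_iff hranti hrmap _ i.succ).1 (le_refl _)
      have h2 := hhigh (rfn i.succ)
      have h3 : i.val < cge f.roots (rfn i.succ) := by omega
      exact (enum_le_iff hsanti hsmap _ i).2 h3
    · have h1 : i.val < cge f.roots (sfn i) := (enum_le_iff hsanti hsmap (sfn i) i).1 (le_refl _)
      have h2 : i.val < cge F.roots (sfn i) := lt_of_lt_of_le h1 (hlow _)
      exact (enum_le_iff hranti hrmap (sfn i) i.castSucc).2 h2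

end Build

section Main

lemma parity_pow_eq {aN bN : ℕ} (h : aN % 2 = bN % 2) : ((-1 : ℝ)) ^ aN = (-1) ^ bN := by
  rcases Nat.even_or_odd aN with ha | ha
  · have hb : Even bN := by rw [Nat.even_iff] at *; omega
    rw [ha.neg_one_pow, hb.neg_one_pow]
  · have hb : Odd bN := by rw [Nat.odd_iff] at *; omega
    rw [ha.neg_one_pow, hb.neg_one_pow]

lemma main_lemma (k : ℕ) (F f a : Polynomial ℝ) (b g : Fin k → Polynomial ℝ)
    (hF : F = a * f + ∑ j, b j * g j)
    (hf : RealRooted f) (hgf : ∀ j, Prec (g j) f)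
    (hdeg : F.natDegree = f.natDegree ∨ F.natDegree = f.natDegree + 1)
    (hlcF : 0 < F.leadingCoeff) (hlcg : ∀ j, 0 < (g j).leadingCoeff)
    (hb : ∀ j, ∀ r : ℝ, f.IsRoot r → (b j).eval r ≤ 0) :
    RealRooted F ∧ Prec f F := by
  classical
  have hF0 : F ≠ 0 := Polynomial.leadingCoeff_ne_zero.1 (ne_of_gt hlcF)
  have hg0 : ∀ j, g j ≠ 0 := fun j => Polynomial.leadingCoeff_ne_zero.1 (ne_of_gt (hlcg j))
  set n := f.natDegree with hn
  set Rf := f.roots with hRf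
  set D := Rf.dedup with hD
  set Rh := Rf - D with hRh
  set h := ((Rh.map (fun aa => Polynomial.X - Polynomial.C aa)).prod : Polynomial ℝ) with hh
  have hDle : D ≤ Rf := Rf.dedup_le
  have hRhD : Rh + D = Rf := tsub_add_cancel_of_le hDle
  have hmonic : h.Monic := Polynomial.monic_multiset_prod_of_monic _ _
    (fun aa _ => Polynomial.monic_X_sub_C aa)
  have hh0 : h ≠ 0 := hmonic.ne_zero
  have hhroots : h.roots = Rh := Polynomial.roots_multiset_prod_X_sub_C Rh
  have hhdeg : h.natDegree = Multiset.card Rh := by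
    rw [hh, Polynomial.natDegree_multiset_prod_X_sub_C_eq_card]
  -- facts from E for each root of f
  have hfne_of_mem : ∀ t ∈ D, f ≠ 0 ∧ f.IsRoot t := by
    intro t ht
    rw [hD, Multiset.mem_dedup] at ht
    exact ⟨Polynomial.ne_zero_of_mem_roots ht, Polynomial.isRoot_of_mem_roots ht⟩
  have hE := fun (j : Fin k) {t : ℝ} (ht : t ∈ D) =>
    E_facts (hgf j) (hfne_of_mem t ht).1 (hg0 j) (hfne_of_mem t ht).2
  -- count of Rh
  have hRh_count : ∀ t : ℝ, Rh.count t = Rf.count t - (if t ∈ Rf then 1 else 0) := by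
    intro t
    rw [hRh, Multiset.count_sub, hD, Multiset.count_dedup]
  -- h divides each g j
  have hRh_le_g : ∀ j, Rh ≤ (g j).roots := by
    intro j
    rw [Multiset.le_iff_count]
    intro t
    rw [hRh_count]
    by_cases htR : t ∈ Rf
    · have htD : t ∈ D := by rw [hD, Multiset.mem_dedup]; exact htR
      have hE1 := (hE j htD).1
      simp only [← hRf] at hE1
      simp only [htR, if_true]
      omega
    · have : Rf.count t = 0 := Multiset.count_eq_zero.2 htR
      simp [htR, this]
  have hdvd_g : ∀ j, h ∣ g j := fun j =>
    (Multiset.prod_X_sub_C_dvd_iff_le_roots (hg0 j) Rh).2 (hRh_le_g j)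
  have hdvd_f : h ∣ f := by
    rcases eq_or_ne f 0 with hf0 | hf0
    · rw [hf0]; exact dvd_zero h
    · exact (Multiset.prod_X_sub_C_dvd_iff_le_roots hf0 Rh).2 (by rw [hRh]; exact tsub_le_self)
  obtain ⟨cf, hcf⟩ := hdvd_f
  choose cg hcg using hdvd_g
  set F' := a * cf + ∑ j, b j * cg j with hF'
  have hFfac : F = h * F' := by
    have hterm : ∀ j : Fin k, b j * g j = h * (b j * cg j) := fun j => by rw [hcg j]; ring
    calc F = a * (h * cf) + ∑ j, h * (b j * cg j) := by
          rw [hF, ← hcf]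
          congr 1
          exact Finset.sum_congr rfl (fun j _ => hterm j)
      _ = h * F' := by rw [hF', ← Finset.mul_sum]; ring
  have hF'0 : F' ≠ 0 := by
    intro hz
    rw [hz, mul_zero] at hFfac
    exact hF0 hFfac
  have hlcF' : F'.leadingCoeff = F.leadingCoeff := by
    rw [hFfac, Polynomial.leadingCoeff_mul, hmonic.leadingCoeff, one_mul]
  have hdegF : F.natDegree = Multiset.card Rh + F'.natDegree := by
    rw [hFfac, Polynomial.natDegree_mul hh0 hF'0, hhdeg]
  set p := Multiset.card D with hp
  have hcardRf : Multiset.card Rf = n := hf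
  have hpn : p ≤ n := by
    rw [hp, ← hcardRf]
    exact Multiset.card_le_card hDle
  have hRh_card : Multiset.card Rh = n - p := by
    rw [hRh, Multiset.card_sub hDle, hcardRf, hp]
  -- enumerate D
  obtain ⟨tl, htl_anti, htl_map⟩ := exists_antitone_enum D p rfl
  have htl_mem : ∀ i : Fin p, tl i ∈ D := by
    intro i
    rw [← htl_map]
    exact Multiset.mem_map_of_mem _ (Finset.mem_univ i : i ∈ Finset.univ)
  have htl_inj : ∀ i j : Fin p, tl i = tl j → i = j := by
    intro i j hij
    have hnodup : (Finset.univ.val.map tl).Nodup := by rw [htl_map, hD]; exact Rf.nodup_dedup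
    exact Multiset.inj_on_of_nodup_map hnodup i (by simp) j (by simp) hij
  have htl_strict : ∀ i j : Fin p, i < j → tl j < tl i := by
    intro i j hij
    rcases lt_or_eq_of_le (htl_anti i j (le_of_lt hij)) with hlt | heq
    · exact hlt
    · exact absurd (htl_inj j i heq) (by intro hh'; rw [hh'] at hij; exact lt_irrefl _ hij)
  have htl_cgtD : ∀ i : Fin p, cgt D (tl i) = i.val := by
    intro i
    rw [← htl_map]
    show Multiset.card (Multiset.filter (fun x => tl i < x) (Finset.univ.val.map tl)) = i.val
    rw [Multiset.filter_map, Multiset.card_map]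
    have hset : Multiset.filter ((fun x => tl i < x) ∘ tl) Finset.univ.val
        = (Finset.univ.filter (fun lδ : Fin p => lδ.val < i.val)).val := by
      rw [Finset.filter_val]
      apply Multiset.filter_congr
      intro lδ _
      show tl i < tl lδ ↔ lδ.val < i.val
      constructor
      · intro hlt
        by_contra hge
        push_neg at hge
        have : tl lδ ≤ tl i := htl_anti i lδ (by omega)
        linarith
      · intro hlt
        exact htl_strict lδ i (by omega)
    rw [hset]
    show (Finset.univ.filter (fun lδ : Fin p => lδ.val < i.val)).card = i.val
    exact card_val_lt i.val (by omega)
  have htl_cgeD : ∀ (t : ℝ) (i : Fin p), t ≤ tl i ↔ i.val < cge D t := fun t i =>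
    enum_le_iff htl_anti htl_map t i
  -- roots of cofactors
  have hcf_eval : ∀ i : Fin p, cf.eval (tl i) = 0 := by
    intro i
    have htD := htl_mem i
    have hf0 : f ≠ 0 := (hfne_of_mem _ htD).1
    have hcf0 : cf ≠ 0 := by
      intro hz
      rw [hz, mul_zero] at hcf
      exact hf0 hcf
    have hroots : Rf = Rh + cf.roots := by
      rw [hRf, hcf, Polynomial.roots_mul (by rw [← hcf]; exact hf0), hhroots]
    have hcfD : cf.roots = D := by
      have h2 : Rh + cf.roots = Rh + D := by rw [← hroots, hRhD]
      exact add_left_cancel h2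
    have : tl i ∈ cf.roots := by rw [hcfD]; exact htD
    exact Polynomial.isRoot_of_mem_roots this
  have hcg_roots : ∀ j, (cg j).roots = (g j).roots - Rh := by
    intro j
    have hcg0 : cg j ≠ 0 := by
      intro hz
      have hj := hcg j
      rw [hz, mul_zero] at hj
      exact hg0 j hj
    have hroots : (g j).roots = Rh + (cg j).roots := by
      rw [hcg j, Polynomial.roots_mul (by rw [← hcg j]; exact hg0 j), hhroots]
    rw [hroots, add_tsub_cancel_left]
  have hcg0 : ∀ j, cg j ≠ 0 := by
    intro j hz
    have hj := hcg j
    rw [hz, mul_zero] at hj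
    exact hg0 j hj
  have hlc_cg : ∀ j, (cg j).leadingCoeff = (g j).leadingCoeff := by
    intro j
    rw [hcg j, Polynomial.leadingCoeff_mul, hmonic.leadingCoeff, one_mul]
  -- sign of cg j at tl i
  have hGsign : ∀ (j : Fin k) (i : Fin p), 0 ≤ (cg j).eval (tl i) * (-1 : ℝ) ^ i.val := by
    intro j i
    rcases eq_or_ne ((cg j).eval (tl i)) 0 with he | he
    · rw [he, zero_mul]
    · have htD := htl_mem i
      have hEj := hE j htD
      have hbridge1 : cgt f.roots (tl i) = cgt Rf (tl i) := rfl
      have hbridge2 : Multiset.count (tl i) f.roots = Multiset.count (tl i) Rf := rfl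
      have hcountRh : Rh.count (tl i) = Rf.count (tl i) - 1 := by
        rw [hRh_count]
        have : tl i ∈ Rf := by rw [hD, Multiset.mem_dedup] at htD; exact htD
        simp [this]
      have hcgtRh : cgt Rh (tl i) = cgt Rf (tl i) - cgt D (tl i) := by
        rw [hRh]
        unfold cgt
        rw [Multiset.filter_sub, Multiset.card_sub (Multiset.filter_le_filter _ hDle)]
      have hcgt_cg : cgt (cg j).roots (tl i) = cgt (g j).roots (tl i) - cgt Rh (tl i) := by
        rw [hcg_roots j]
        unfold cgt
        rw [Multiset.filter_sub, Multiset.card_sub (Multiset.filter_le_filter _ (hRh_le_g j))]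
      have hcgtD_le : cgt D (tl i) ≤ cgt Rf (tl i) := Multiset.card_le_card
        (Multiset.filter_le_filter _ hDle)
      have hcgtRh_le : cgt Rh (tl i) ≤ cgt (g j).roots (tl i) := Multiset.card_le_card
        (Multiset.filter_le_filter _ (hRh_le_g j))
      have h6 := htl_cgtD i
      rcases hEj.2 with hA | ⟨hA, hcnt⟩
      · -- cgt (cg j).roots (tl i) = i.val
        have hval : cgt (cg j).roots (tl i) = i.val := by omega
        have hsg := eval_sign (cg j) (hcg0 j) (tl i) (fun hroot => he hroot)
        rw [hval] at hsg
        have hlcpos : 0 < (cg j).leadingCoeff := by rw [hlc_cg j]; exact hlcg j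
        nlinarith
      · -- tl i is a root of cg j : contradiction with he
        exfalso
        have hcount_cg : (cg j).roots.count (tl i) = (g j).roots.count (tl i) - Rh.count (tl i) := by
          rw [hcg_roots j, Multiset.count_sub]
        have hmemRf : tl i ∈ Rf := by rw [hD, Multiset.mem_dedup] at htD; exact htD
        have hm1 : 1 ≤ Rf.count (tl i) := Multiset.one_le_count_iff_mem.2 hmemRf
        have h1 : 1 ≤ (cg j).roots.count (tl i) := by omega
        have : tl i ∈ (cg j).roots := Multiset.one_le_count_iff_mem.1 h1
        exact he (Polynomial.isRoot_of_mem_roots this)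
  -- sign of F' at tl i
  have hFsign : ∀ i : Fin p,
      0 ≤ F'.eval (tl i) * F'.leadingCoeff * (-1 : ℝ) ^ (i.val + 1) := by
    intro i
    have hfroot : f.IsRoot (tl i) := (hfne_of_mem _ (htl_mem i)).2
    have heval : F'.eval (tl i) = ∑ j, (b j).eval (tl i) * (cg j).eval (tl i) := by
      rw [hF']
      rw [Polynomial.eval_add, Polynomial.eval_mul, hcf_eval i, mul_zero, zero_add,
        Polynomial.eval_finset_sum]
      exact Finset.sum_congr rfl (fun j _ => Polynomial.eval_mul)
    rw [heval, hlcF', Finset.sum_mul, Finset.sum_mul]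
    apply Finset.sum_nonneg
    intro j _
    have hbj : (b j).eval (tl i) ≤ 0 := hb j (tl i) hfroot
    have hgj := hGsign j i
    have hpow : ((-1 : ℝ)) ^ (i.val + 1) = -(-1 : ℝ) ^ i.val := by
      rw [pow_succ]; ring
    rw [hpow]
    have key : 0 ≤ (-((b j).eval (tl i))) * ((cg j).eval (tl i) * (-1 : ℝ) ^ i.val)
        * F.leadingCoeff :=
      mul_nonneg (mul_nonneg (neg_nonneg.2 hbj) hgj) (le_of_lt hlcF)
    have heq : (b j).eval (tl i) * (cg j).eval (tl i) * F.leadingCoeff * (-(-1 : ℝ) ^ i.val)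
        = (-((b j).eval (tl i))) * ((cg j).eval (tl i) * (-1 : ℝ) ^ i.val) * F.leadingCoeff := by
      ring
    rw [heq]
    exact key
  -- apply countUp
  set u : ℕ → ℝ := fun i => if hi : i < p then tl ⟨i, hi⟩ else 0 with hu
  have hcntUp : ∀ i, i < p → i + 1 ≤ cge F'.roots (u i) := by
    apply countUp F' hF'0 p u
    · intro i hi
      rw [hu]
      simp only [dif_pos hi, dif_pos (Nat.lt_of_succ_lt hi)]
      exact htl_strict ⟨i, Nat.lt_of_succ_lt hi⟩ ⟨i + 1, hi⟩ (by simp)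
    · intro i hi
      rw [hu]
      simp only [dif_pos hi]
      exact hFsign ⟨i, hi⟩
  -- real rootedness of F'
  obtain ⟨q, hq, hqdeg, hqroots⟩ := F'.exists_prod_multiset_X_sub_C_mul
  have hq0 : q ≠ 0 := by
    intro hz
    rw [hz, mul_zero] at hq
    exact hF'0 hq.symm
  have hqeven : Even q.natDegree := even_natDegree_of_noRoots q hqroots hq0
  have hcard_ge : p ≤ Multiset.card F'.roots := by
    rcases Nat.eq_zero_or_pos p with hp0 | hp0
    · omega
    · have := hcntUp (p - 1) (by omega)
      have h2 : cge F'.roots (u (p - 1)) ≤ Multiset.card F'.roots := cge_le_card _ _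
      omega
  have hdF' : F'.natDegree = p ∨ F'.natDegree = p + 1 := by
    rcases hdeg with hd | hd <;> [left; right] <;> omega
  have hF'R : Multiset.card F'.roots = F'.natDegree := by
    have hqd : q.natDegree = 0 := by
      rcases hqeven with ⟨w, hw⟩
      omega
    omega
  have hFroots : F.roots = Rh + F'.roots := by
    rw [hFfac, Polynomial.roots_mul (by rw [← hFfac]; exact hF0), hhroots]
  have hFR : RealRooted F := by
    show Multiset.card F.roots = F.natDegree
    rw [hFroots, Multiset.card_add, hF'R, hdegF]
  -- apply countLow
  set R := Multiset.card F'.roots with hR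
  set ε := F'.natDegree - p with hε
  have hRεp : R = p + ε := by omega
  have hεle : ε ≤ 1 := by omega
  set w : ℕ → ℝ := fun jj => if hj : p - 1 - jj < p then tl ⟨p - 1 - jj, hj⟩ else 0 with hw
  have hcntLow : ∀ jj, jj < p → jj + ε ≤ cle F'.roots (w jj) := by
    apply countLow F' hF'0 p ε hεle w
    · intro jj hjj
      rw [hw]
      have h1 : p - 1 - jj < p := by omega
      have h2 : p - 1 - (jj + 1) < p := by omega
      simp only [dif_pos h1, dif_pos h2]
      exact htl_strict ⟨p - 1 - (jj + 1), h2⟩ ⟨p - 1 - jj, h1⟩ (by simp; omega)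
    · intro jj hjj
      rw [hw]
      have h1 : p - 1 - jj < p := by omega
      simp only [dif_pos h1]
      have := hFsign ⟨p - 1 - jj, h1⟩
      have hpar : ((-1 : ℝ)) ^ (Multiset.card F'.roots + jj + ε)
          = (-1) ^ ((p - 1 - jj) + 1) := by
        apply parity_pow_eq
        omega
      rw [hpar]
      exact this
  have hUpper : ∀ i : Fin p, cgt F'.roots (tl i) ≤ i.val + 1 := by
    intro i
    have hiw : w (p - 1 - i.val) = tl i := by
      rw [hw]
      have h1 : p - 1 - (p - 1 - i.val) < p := by omega
      simp only [dif_pos h1]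
      congr 1
      apply Fin.ext
      simp
      omega
    have hlow := hcntLow (p - 1 - i.val) (by omega)
    rw [hiw] at hlow
    have htot := cgt_add_cle F'.roots (tl i)
    omega
  -- the count comparison
  have hRf_split : ∀ t : ℝ, cge Rf t = cge Rh t + cge D t := by
    intro t
    rw [← hRhD]
    unfold cge
    rw [Multiset.filter_add, Multiset.card_add]
  have hFroots_split : ∀ t : ℝ, cge F.roots t = cge Rh t + cge F'.roots t := by
    intro t
    rw [hFroots]
    unfold cge
    rw [Multiset.filter_add, Multiset.card_add]
  have hDcard_le : ∀ t : ℝ, cge D t ≤ p := fun t => cge_le_card D t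
  have hclaim1 : ∀ t : ℝ, cge D t ≤ cge F'.roots t := by
    intro t
    rcases Nat.eq_zero_or_pos (cge D t) with h0 | hpos
    · omega
    · have hip : cge D t - 1 < p := by
        have := hDcard_le t
        omega
      set i : Fin p := ⟨cge D t - 1, hip⟩ with hi
      have hival : i.val = cge D t - 1 := rfl
      have hti : t ≤ tl i := (htl_cgeD t i).2 (by omega)
      have h2 : cge F'.roots (tl i) ≤ cge F'.roots t := cge_mono _ hti
      have h3 := hcntUp (cge D t - 1) hip
      have h4 : u (cge D t - 1) = tl i := by
        rw [hu]
        simp only [dif_pos hip]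
        rfl
      rw [h4] at h3
      omega
  have hclaim2 : ∀ t : ℝ, cge F'.roots t ≤ cge D t + 1 := by
    intro t
    rcases eq_or_ne (cge D t) p with hDp | hDp
    · have := cge_le_card F'.roots t
      omega
    · have hip : cge D t < p := lt_of_le_of_ne (hDcard_le t) hDp
      set i : Fin p := ⟨cge D t, hip⟩ with hi
      have hival : i.val = cge D t := rfl
      have hnti : ¬ t ≤ tl i := by
        intro hcon
        have := (htl_cgeD t i).1 hcon
        omega
      push_neg at hnti
      have h2 : cge F'.roots t ≤ cgt F'.roots (tl i) := cge_le_cgt_of_lt _ hnti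
      have h3 := hUpper i
      omega
  refine ⟨hFR, build_prec hf hFR ?_ ?_ hdeg⟩
  · intro t
    have hb1 : cge f.roots t = cge Rf t := rfl
    have := hclaim1 t
    have := hRf_split t
    have := hFroots_split t
    omega
  · intro t
    have hb1 : cge f.roots t = cge Rf t := rfl
    have := hclaim2 t
    have := hRf_split t
    have := hFroots_split t
    omega

end Main

section Wrapper

lemma altLeft_neg_left {g f : Polynomial ℝ} (h : AltLeft g f) : AltLeft (-g) f := by
  obtain ⟨n, r, sfn, hf, hg, h1, h2⟩ := h
  exact ⟨n, r, sfn, hf, by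
    rw [Polynomial.leadingCoeff_neg, map_neg, neg_mul, ← hg], h1, h2⟩

lemma interlaces_neg_left {g f : Polynomial ℝ} (h : Interlaces g f) : Interlaces (-g) f := by
  obtain ⟨n, r, sfn, hf, hg, h1⟩ := h
  exact ⟨n, r, sfn, hf, by
    rw [Polynomial.leadingCoeff_neg, map_neg, neg_mul, ← hg], h1⟩

lemma prec_neg_left {g f : Polynomial ℝ} (h : Prec g f) : Prec (-g) f := by
  rcases h with h | h
  · exact Or.inl (altLeft_neg_left h)
  · exact Or.inr (interlaces_neg_left h)

lemma prec_neg_right {g f : Polynomial ℝ} (h : Prec g f) : Prec g (-f) := by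
  rcases h with ⟨n, r, sfn, hf, hg, h1, h2⟩ | ⟨n, r, sfn, hf, hg, h1⟩
  · exact Or.inl ⟨n, r, sfn, by
      rw [Polynomial.leadingCoeff_neg, map_neg, neg_mul, ← hf], hg, h1, h2⟩
  · exact Or.inr ⟨n, r, sfn, by
      rw [Polynomial.leadingCoeff_neg, map_neg, neg_mul, ← hf], hg, h1⟩

lemma realRooted_neg {f : Polynomial ℝ} (h : RealRooted (-f)) : RealRooted f := by
  unfold RealRooted at *
  rwa [Polynomial.roots_neg, Polynomial.natDegree_neg] at h

end Wrapper

end ThmAux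

theorem thm_Ffgk (k : ℕ) (F f a : Polynomial ℝ) (b g : Fin k → Polynomial ℝ)
    (hF : F = a * f + ∑ j, b j * g j)
    (hf : RealRooted f) (hg : ∀ j, RealRooted (g j)) (hgf : ∀ j, Prec (g j) f)
    (hdeg : F.natDegree = f.natDegree ∨ F.natDegree = f.natDegree + 1)
    (hsign : ∀ j, 0 < F.leadingCoeff * (g j).leadingCoeff)
    (hb : ∀ j, ∀ r : ℝ, f.IsRoot r → (b j).eval r ≤ 0) :
    RealRooted F ∧ Prec f F := by
  rcases lt_trichotomy F.leadingCoeff 0 with hlc | hlc | hlc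
  · -- negative leading coefficient : apply main lemma to -F
    have hlcg : ∀ j, 0 < (-(g j)).leadingCoeff := by
      intro j
      rw [Polynomial.leadingCoeff_neg]
      rcases mul_pos_iff.1 (hsign j) with ⟨h1, _⟩ | ⟨_, h2⟩
      · linarith
      · linarith
    have hFneg : -F = -a * f + ∑ j, b j * (-(g j)) := by
      have h1 : ∑ j, b j * (-(g j)) = -∑ j, b j * g j := by
        rw [← Finset.sum_neg_distrib]
        exact Finset.sum_congr rfl (fun j _ => by ring)
      rw [h1, hF]
      ring
    have hmain := ThmAux.main_lemma k (-F) f (-a) b (fun j => -(g j)) hFneg hf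
      (fun j => ThmAux.prec_neg_left (hgf j))
      (by rwa [Polynomial.natDegree_neg])
      (by rw [Polynomial.leadingCoeff_neg]; linarith)
      hlcg hb
    refine ⟨ThmAux.realRooted_neg hmain.1, ?_⟩
    have := ThmAux.prec_neg_right hmain.2
    rwa [neg_neg] at this
  · -- F = 0
    have hF0 : F = 0 := Polynomial.leadingCoeff_eq_zero.1 hlc
    subst hF0
    have hn0 : f.natDegree = 0 := by
      rcases hdeg with h | h <;> simp at h <;> omega
    have hlcf : f.leadingCoeff = f.coeff 0 := by
      rw [Polynomial.leadingCoeff, hn0]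
    constructor
    · show (0 : Polynomial ℝ).roots.card = (0 : Polynomial ℝ).natDegree
      simp
    · left
      refine ⟨0, fun i => i.elim0, fun i => i.elim0, by simp, ?_, fun i => i.elim0, ?_⟩
      · rw [Finset.univ_eq_empty, Finset.prod_empty, mul_one, hlcf]
        exact Polynomial.eq_C_of_natDegree_eq_zero hn0
      · intro i hi
        omega
  · -- positive leading coefficient
    have hlcg : ∀ j, 0 < (g j).leadingCoeff := by
      intro j
      rcases mul_pos_iff.1 (hsign j) with ⟨_, h2⟩ | ⟨h1, _⟩
      · exact h2
      · linarith
    exact ThmAux.main_lemma k F f a b g hF hf hgf hdeg hlc hlcg hb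
end

section
/- Let f and g be standard real-rooted polynomials with g ⪯ f, and let a, b, c, d ≥ 0 with ad ≥ bc. Then cf + dg ⪯ af + bg; in particular g ⪯ af + bg ⪯ f. -/
open Polynomial Finset

/-!
Write `f = lf ∏ (X - r i)` and `g = lg ∏ (X - s i)`. The relation `g ⪯ f` says exactly that for
every `x` the number of zeros of `f` above `x` lies between that of `g` and one more. For `A, B > 0`
the zeros of `A f + B g` lie weakly between those of `g` and those of `f`: a common zero of `f`
and `g` splits off as a common linear factor, and without common zeros the interleaving is strict,
so `A f + B g` has opposite signs at `s i < r i` and hence a zero in each gap, plus one to the left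
of the lowest zero of `f` (from the sign at `-∞`) when `deg f = deg g + 1`; by degree these are all
its zeros. This gives `g ⪯ a f + b g ⪯ f`, and since `a (c f + d g) = c (a f + b g) + (a d - b c) g`
is a nonnegative combination of `g ⪯ a f + b g`, also `c f + d g ⪯ a f + b g`.
-/

open Filter Asymptotics

noncomputable def numAbove (S : Multiset ℝ) (x : ℝ) : ℕ := Multiset.card (S.filter (x < ·))

def Interleave (s r : Multiset ℝ) : Prop :=
  ∀ x, numAbove s x ≤ numAbove r x ∧ numAbove r x ≤ numAbove s x + 1

lemma numAbove_cons (a : ℝ) (S : Multiset ℝ) (x : ℝ) :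
    numAbove (a ::ₘ S) x = numAbove S x + if x < a then 1 else 0 := by
  unfold numAbove
  split_ifs with h <;> simp [h]

lemma Interleave.refl (s : Multiset ℝ) : Interleave s s := fun _ => ⟨le_rfl, Nat.le_succ _⟩

lemma interleave_cons_iff {a : ℝ} {s r : Multiset ℝ} :
    Interleave (a ::ₘ s) (a ::ₘ r) ↔ Interleave s r := by
  refine forall_congr' fun x => ?_
  simp only [numAbove_cons]
  omega

def seqMultiset (k : ℕ) (u : ℕ → ℝ) : Multiset ℝ := (Multiset.range k).map u

lemma card_seqMultiset (k : ℕ) (u : ℕ → ℝ) : Multiset.card (seqMultiset k u) = k := by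
  simp [seqMultiset]

lemma mem_seqMultiset {k i : ℕ} (u : ℕ → ℝ) (hi : i < k) : u i ∈ seqMultiset k u :=
  Multiset.mem_map_of_mem u (Multiset.mem_range.2 hi)

lemma numAbove_seqMultiset (k : ℕ) (u : ℕ → ℝ) (x : ℝ) :
    numAbove (seqMultiset k u) x = #{i ∈ range k | x < u i} := by
  simp [numAbove, seqMultiset, Multiset.filter_map, Finset.card, Finset.filter_val]

lemma numAbove_seqMultiset_le_add {k₁ k₂ d : ℕ} {u v : ℕ → ℝ}
    (h : ∀ i, i + d < k₁ → i < k₂ ∧ u (i + d) ≤ v i) (x : ℝ) :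
    numAbove (seqMultiset k₁ u) x ≤ numAbove (seqMultiset k₂ v) x + d := by
  rw [numAbove_seqMultiset, numAbove_seqMultiset]
  calc #{j ∈ range k₁ | x < u j}
      ≤ #(range d ∪ {i ∈ range k₂ | x < v i}.image (· + d)) := by
        refine card_le_card fun j hj => ?_
        simp only [mem_filter, mem_range] at hj
        simp only [mem_union, mem_range, mem_image, mem_filter]
        by_cases hjd : j < d
        · exact Or.inl hjd
        · obtain ⟨i, rfl⟩ : ∃ i, j = i + d := ⟨j - d, by omega⟩
          exact Or.inr ⟨i, ⟨(h i hj.1).1, hj.2.trans_le (h i hj.1).2⟩, rfl⟩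
    _ ≤ d + #{i ∈ range k₂ | x < v i} :=
        (card_union_le _ _).trans (by rw [card_range]; exact Nat.add_le_add_left card_image_le d)
    _ = _ := add_comm _ _

lemma le_of_numAbove_seqMultiset_le_add {k₁ k₂ d : ℕ} {u v : ℕ → ℝ}
    (hu : AntitoneOn u (Set.Iio k₁)) (hv : AntitoneOn v (Set.Iio k₂))
    (h : ∀ x, numAbove (seqMultiset k₁ u) x ≤ numAbove (seqMultiset k₂ v) x + d) :
    ∀ i, i + d < k₁ → i < k₂ ∧ u (i + d) ≤ v i := by
  intro i hi
  by_contra hne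
  -- at least `i + d + 1` terms of `u` but at most `i` terms of `v` lie above `x`
  set x := if i < k₂ then v i else u (i + d) - 1 with hx_def
  have hx : x < u (i + d) := by
    rw [hx_def]
    split_ifs with hik
    · exact lt_of_not_ge fun hle => hne ⟨hik, hle⟩
    · linarith
  have hu_le : i + d + 1 ≤ numAbove (seqMultiset k₁ u) x := by
    rw [numAbove_seqMultiset, ← card_range (i + d + 1)]
    refine card_le_card fun j hj => ?_
    simp only [mem_range] at hj
    simp only [mem_filter, mem_range]
    exact ⟨by omega, hx.trans_le (hu (by simp; omega) (by simpa using hi) (by omega))⟩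
  have hv_le : numAbove (seqMultiset k₂ v) x ≤ i := by
    rw [numAbove_seqMultiset, ← card_range i]
    refine card_le_card fun j hj => ?_
    simp only [mem_filter, mem_range] at hj ⊢
    by_contra hji
    rw [hx_def] at hj
    split_ifs at hj with hik
    · exact absurd hj.2 (not_lt.2 (hv (by simpa using hik) (by simpa using hj.1) (by omega)))
    · omega
  have := h x
  omega

lemma interleave_seqMultiset {n m : ℕ} {u v : ℕ → ℝ}
    (h₀ : ∀ i, i < n → i < m ∧ u i ≤ v i) (h₁ : ∀ i, i + 1 < m → i < n ∧ v (i + 1) ≤ u i) :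
    Interleave (seqMultiset n u) (seqMultiset m v) :=
  fun x => ⟨numAbove_seqMultiset_le_add (d := 0) h₀ x, numAbove_seqMultiset_le_add h₁ x⟩

lemma le_of_interleave_seqMultiset {n m : ℕ} {u v : ℕ → ℝ}
    (hu : AntitoneOn u (Set.Iio n)) (hv : AntitoneOn v (Set.Iio m))
    (h : Interleave (seqMultiset n u) (seqMultiset m v)) :
    (∀ i, i < n → i < m ∧ u i ≤ v i) ∧ (∀ i, i + 1 < m → i < n ∧ v (i + 1) ≤ u i) :=
  ⟨le_of_numAbove_seqMultiset_le_add (d := 0) hu hv fun x => (h x).1,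
    le_of_numAbove_seqMultiset_le_add hv hu fun x => (h x).2⟩

lemma exists_antitoneOn_eq_seqMultiset (S : Multiset ℝ) :
    ∃ m v, AntitoneOn v (Set.Iio m) ∧ S = seqMultiset m v := by
  set l := S.sort (· ≥ ·)
  refine ⟨l.length, fun i => l.getD i 0, ?_, ?_⟩
  · intro i hi j hj hij
    simp only [Set.mem_Iio] at hi hj
    simp only [List.getD_eq_getElem _ _ hi, List.getD_eq_getElem _ _ hj]
    rcases hij.lt_or_eq with hij | rfl
    · exact List.pairwise_iff_getElem.1 (Multiset.pairwise_sort S _) i j hi hj hij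
    · exact le_rfl
  · conv_lhs => rw [← Multiset.sort_eq S (· ≥ ·)]
    simp only [seqMultiset, Multiset.range, Multiset.map_coe]
    congr 1
    refine List.ext_getElem (by simp [l]) fun i h₁ _ => ?_
    simp [l, List.getElem?_eq_getElem h₁]

noncomputable def rootPoly (S : Multiset ℝ) : ℝ[X] := (S.map fun a => X - C a).prod

lemma rootPoly_cons (a : ℝ) (S : Multiset ℝ) : rootPoly (a ::ₘ S) = (X - C a) * rootPoly S := by
  simp [rootPoly]

lemma monic_rootPoly (S : Multiset ℝ) : (rootPoly S).Monic :=
  monic_multiset_prod_of_monic _ _ fun a _ => monic_X_sub_C a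

lemma natDegree_rootPoly (S : Multiset ℝ) : (rootPoly S).natDegree = Multiset.card S :=
  natDegree_multiset_prod_X_sub_C_eq_card S

lemma leadingCoeff_C_mul_rootPoly (c : ℝ) (S : Multiset ℝ) : (C c * rootPoly S).leadingCoeff = c := by
  rw [leadingCoeff_mul_monic (monic_rootPoly S), leadingCoeff_C]

lemma eval_rootPoly_of_mem {S : Multiset ℝ} {x : ℝ} (hx : x ∈ S) : (rootPoly S).eval x = 0 := by
  obtain ⟨S', rfl⟩ := Multiset.exists_cons_of_mem hx
  simp [rootPoly_cons]

lemma rootPoly_seqMultiset (k : ℕ) (u : ℕ → ℝ) :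
    rootPoly (seqMultiset k u) = ∏ i : Fin k, (X - C (u i)) := by
  rw [Fin.prod_univ_eq_prod_range (fun i => X - C (u i))]
  simp [rootPoly, seqMultiset, Finset.prod_eq_multiset_prod]

lemma neg_one_pow_numAbove_mul_eval_rootPoly_pos {S : Multiset ℝ} {x : ℝ} (hx : x ∉ S) :
    0 < (-1) ^ numAbove S x * (rootPoly S).eval x := by
  induction S using Multiset.induction_on with
  | empty => simp [rootPoly, numAbove]
  | cons a S ih =>
    rw [Multiset.mem_cons, not_or] at hx
    have hS := ih hx.2
    rw [numAbove_cons, rootPoly_cons, eval_mul]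
    simp only [eval_sub, eval_X, eval_C]
    split_ifs with hxa
    · calc 0 < (-1) ^ numAbove S x * (rootPoly S).eval x * (a - x) := mul_pos hS (sub_pos.2 hxa)
        _ = _ := by ring
    · have hax : a < x := (not_lt.1 hxa).lt_of_ne (Ne.symm hx.1)
      calc 0 < (-1) ^ numAbove S x * (rootPoly S).eval x * (x - a) := mul_pos hS (sub_pos.2 hax)
        _ = _ := by ring

lemma eq_C_leadingCoeff_mul_rootPoly {p : ℝ[X]} {T : Multiset ℝ} (hp : p ≠ 0)
    (hdeg : p.natDegree ≤ Multiset.card T) (hT : T.Nodup) (hroots : ∀ x ∈ T, p.IsRoot x) :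
    p = C p.leadingCoeff * rootPoly T := by
  have hle : T ≤ p.roots := (Multiset.le_iff_subset hT).2 fun x hx => (mem_roots hp).2 (hroots x hx)
  obtain rfl : T = p.roots := Multiset.eq_of_le_of_card_le hle ((card_roots' p).trans hdeg)
  exact (C_leadingCoeff_mul_prod_multiset_X_sub_C (le_antisymm (card_roots' p) hdeg)).symm

lemma natDegree_C_mul_rootPoly_add {A B : ℝ} {R S : Multiset ℝ} (hA : 0 < A) (hB : 0 ≤ B)
    (hSR : Multiset.card S ≤ Multiset.card R) :
    (C A * rootPoly R + C B * rootPoly S).natDegree = Multiset.card R ∧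
      0 < (C A * rootPoly R + C B * rootPoly S).leadingCoeff := by
  set P := C A * rootPoly R + C B * rootPoly S
  have hdeg : P.natDegree ≤ Multiset.card R :=
    natDegree_add_le_of_degree_le ((natDegree_C_mul_le _ _).trans (natDegree_rootPoly R).le)
      ((natDegree_C_mul_le _ _).trans ((natDegree_rootPoly S).trans_le hSR))
  have hR : (rootPoly R).coeff (Multiset.card R) = 1 := by
    simpa [natDegree_rootPoly] using (monic_rootPoly R).coeff_natDegree
  have hS : 0 ≤ (rootPoly S).coeff (Multiset.card R) := by
    rcases hSR.eq_or_lt with h | h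
    · rw [← h, ← natDegree_rootPoly S, (monic_rootPoly S).coeff_natDegree]
      exact zero_le_one
    · rw [coeff_eq_zero_of_natDegree_lt ((natDegree_rootPoly S).trans_lt h)]
  have hcoeff : 0 < P.coeff (Multiset.card R) := by
    simp only [P, coeff_add, coeff_C_mul, hR]
    positivity
  have hnat := natDegree_eq_of_le_of_coeff_ne_zero hdeg hcoeff.ne'
  exact ⟨hnat, by rwa [leadingCoeff, hnat]⟩

lemma eventually_atBot_neg_one_pow_mul_eval_pos {p : ℝ[X]} (hp : 0 < p.leadingCoeff) :
    ∀ᶠ x in atBot, 0 < (-1) ^ p.natDegree * p.eval x := by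
  refine ((IsEquivalent.refl (u := fun _ : ℝ => (-1 : ℝ) ^ p.natDegree)).mul
    p.isEquivalent_atBot_lead).eventually_pos ?_
  filter_upwards [eventually_lt_atBot 0] with x hx
  have : 0 < (-x) ^ p.natDegree := pow_pos (by linarith) _
  calc 0 < p.leadingCoeff * (-x) ^ p.natDegree := mul_pos hp this
    _ = _ := by simp only [Pi.mul_apply, neg_pow x]; ring

lemma exists_isRoot_of_eval_mul_neg (p : ℝ[X]) {x y : ℝ} (hxy : x ≤ y)
    (h : p.eval x * p.eval y < 0) : ∃ z ∈ Set.Ioo x y, p.IsRoot z := by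
  have hcont : ContinuousOn (fun z => p.eval z) (Set.Icc x y) := p.continuous.continuousOn
  rcases mul_neg_iff.1 h with ⟨hx, hy⟩ | ⟨hx, hy⟩
  · exact intermediate_value_Ioo' hxy hcont ⟨hy, hx⟩
  · exact intermediate_value_Ioo hxy hcont ⟨hx, hy⟩

lemma mul_neg_of_neg_one_pow_mul_pos {a b : ℝ} {k : ℕ} (ha : 0 < (-1) ^ (k + 1) * a)
    (hb : 0 < (-1) ^ k * b) : a * b < 0 := by
  have e : (-1) ^ (k + 1) * a * ((-1) ^ k * b) = -((-1) ^ (k + k) * (a * b)) := by ring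
  rw [Even.neg_one_pow ⟨k, rfl⟩, one_mul] at e
  linarith [mul_pos ha hb]

lemma exists_isRoot_lt_of_neg_one_pow_mul_eval_pos {p : ℝ[X]} {k : ℕ} {y : ℝ}
    (hp : 0 < p.leadingCoeff) (hdeg : p.natDegree = k + 1) (hy : 0 < (-1) ^ k * p.eval y) :
    ∃ z < y, p.IsRoot z := by
  obtain ⟨w, hw_sign, hw⟩ :=
    ((eventually_atBot_neg_one_pow_mul_eval_pos hp).and (eventually_lt_atBot y)).exists
  rw [hdeg] at hw_sign
  obtain ⟨z, hz, hpz⟩ :=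
    exists_isRoot_of_eval_mul_neg p hw.le (mul_neg_of_neg_one_pow_mul_pos hw_sign hy)
  exact ⟨z, hz.2, hpz⟩

lemma neg_one_pow_mul_eval_rootPoly_seqMultiset_pos {k i : ℕ} {w : ℕ → ℝ} {x : ℝ} (hik : i ≤ k)
    (hlt : ∀ j < i, x < w j) (hgt : ∀ j < k, i ≤ j → w j < x) :
    0 < (-1) ^ i * (rootPoly (seqMultiset k w)).eval x := by
  have hx : x ∉ seqMultiset k w := by
    simp only [seqMultiset, Multiset.mem_map, Multiset.mem_range, not_exists, not_and]
    intro j hj hjx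
    rcases lt_or_ge j i with hji | hji
    · exact (hlt j hji).ne' hjx
    · exact (hgt j hj hji).ne hjx
  have hcount : numAbove (seqMultiset k w) x = i := by
    rw [numAbove_seqMultiset, ← card_range i]
    congr 1
    ext j
    simp only [mem_filter, mem_range]
    refine ⟨fun ⟨hj, hxj⟩ => ?_, fun hj => ⟨hj.trans_le hik, hlt j hj⟩⟩
    by_contra hji
    exact (hgt j hj (not_lt.1 hji)).not_gt hxj
  simpa [hcount] using neg_one_pow_numAbove_mul_eval_rootPoly_pos hx

section StrictInterleaving

variable {n m : ℕ} {u v : ℕ → ℝ} (hu : AntitoneOn u (Set.Iio n)) (hv : AntitoneOn v (Set.Iio m))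
  (h₀ : ∀ i, i < n → i < m ∧ u i < v i) (h₁ : ∀ i, i + 1 < m → i < n ∧ v (i + 1) < u i)
  {A B : ℝ} (hA : 0 < A) (hB : 0 < B)
include hu hv h₀ h₁ hA hB

lemma exists_roots_of_strict :
    ∃ t : ℕ → ℝ, (∀ i < m, (C A * rootPoly (seqMultiset m v) +
      C B * rootPoly (seqMultiset n u)).IsRoot (t i) ∧ t i < v i) ∧ ∀ i < n, u i < t i := by
  set P := C A * rootPoly (seqMultiset m v) + C B * rootPoly (seqMultiset n u)
  have hnm : n ≤ m := not_lt.1 fun h => lt_irrefl m (h₀ m h).1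
  have hmn : m ≤ n + 1 := not_lt.1 fun h => lt_irrefl n (h₁ n h).1
  have hv_sign : ∀ i < m, 0 < (-1) ^ i * P.eval (v i) := by
    intro i hi
    have hsign := neg_one_pow_mul_eval_rootPoly_seqMultiset_pos (k := n) (w := u) (x := v i)
      (by omega) (fun j hj => (hv (by simp; omega) (by simpa using hi) hj).trans_lt (h₁ j (by omega)).2)
      (fun j hj hij => (hu (by simp; omega) (by simpa using hj) hij).trans_lt (h₀ i (by omega)).2)
    have heval : P.eval (v i) = B * (rootPoly (seqMultiset n u)).eval (v i) := by
      simp [P, eval_rootPoly_of_mem (mem_seqMultiset v hi)]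
    rw [heval, mul_left_comm]
    exact mul_pos hB hsign
  have hu_sign : ∀ i < n, 0 < (-1) ^ (i + 1) * P.eval (u i) := by
    intro i hi
    have hsign := neg_one_pow_mul_eval_rootPoly_seqMultiset_pos (k := m) (w := v) (x := u i)
      (by omega) (fun j hj => (h₀ i hi).2.trans_le (hv (by simp; omega) (by simp; omega) (by omega)))
      (fun j hj hij => (hv (by simp; omega) (by simpa using hj) hij).trans_lt (h₁ i (by omega)).2)
    have heval : P.eval (u i) = A * (rootPoly (seqMultiset m v)).eval (u i) := by
      simp [P, eval_rootPoly_of_mem (mem_seqMultiset u hi)]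
    rw [heval, mul_left_comm]
    exact mul_pos hA hsign
  have hroot : ∀ i < m, ∃ z, P.IsRoot z ∧ z < v i ∧ (i < n → u i < z) := by
    intro i hi
    rcases lt_or_ge i n with hin | hin
    · obtain ⟨z, hz, hPz⟩ := exists_isRoot_of_eval_mul_neg P (h₀ i hin).2.le
        (mul_neg_of_neg_one_pow_mul_pos (hu_sign i hin) (hv_sign i hi))
      exact ⟨z, hPz, hz.2, fun _ => hz.1⟩
    · obtain ⟨hdeg, hlc⟩ := natDegree_C_mul_rootPoly_add (R := seqMultiset m v)
        (S := seqMultiset n u) hA hB.le (by rwa [card_seqMultiset, card_seqMultiset])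
      obtain ⟨z, hz, hPz⟩ := exists_isRoot_lt_of_neg_one_pow_mul_eval_pos hlc
        (by rw [hdeg, card_seqMultiset]; omega) (hv_sign i hi)
      exact ⟨z, hPz, hz, fun h => absurd h (not_lt.2 hin)⟩
  choose! t ht using hroot
  exact ⟨t, fun i hi => ⟨(ht i hi).1, (ht i hi).2.1⟩, fun i hi => (ht i (by omega)).2.2 hi⟩

lemma exists_add_eq_C_mul_rootPoly_of_strict :
    ∃ L T, C A * rootPoly (seqMultiset m v) + C B * rootPoly (seqMultiset n u) = C L * rootPoly T ∧
      Interleave (seqMultiset n u) T ∧ Interleave T (seqMultiset m v) := by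
  obtain ⟨t, ht, hut⟩ := exists_roots_of_strict hu hv h₀ h₁ hA hB
  have hnm : n ≤ m := not_lt.1 fun h => lt_irrefl m (h₀ m h).1
  obtain ⟨hdeg, hlc⟩ := natDegree_C_mul_rootPoly_add (R := seqMultiset m v) (S := seqMultiset n u)
    hA hB.le (by rwa [card_seqMultiset, card_seqMultiset])
  have hvu : ∀ i, i + 1 < m → v (i + 1) < u i := fun i hi => (h₁ i hi).2
  have htu : ∀ i, i + 1 < m → u i < t i := fun i hi => hut i (h₁ i hi).1
  have ht_anti : ∀ i < m, ∀ j < m, i < j → t j < t i := fun i _ j hj hij =>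
    calc t j < v j := (ht j hj).2
      _ ≤ v (i + 1) := hv (by simp; omega) (by simpa using hj) hij
      _ < t i := (hvu i (by omega)).trans (htu i (by omega))
  have hT : (seqMultiset m t).Nodup := by
    refine (Multiset.nodup_range m).map_on fun i hi j hj hij => ?_
    rw [Multiset.mem_range] at hi hj
    rcases lt_trichotomy i j with h | h | h
    · exact absurd hij (ht_anti i hi j hj h).ne'
    · exact h
    · exact absurd hij (ht_anti j hj i hi h).ne
  refine ⟨_, seqMultiset m t, eq_C_leadingCoeff_mul_rootPoly (leadingCoeff_ne_zero.1 hlc.ne')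
    (by rw [hdeg, card_seqMultiset, card_seqMultiset]) hT ?_, ?_, ?_⟩
  · simp only [seqMultiset, Multiset.mem_map, Multiset.mem_range]
    rintro _ ⟨i, hi, rfl⟩
    exact (ht i hi).1
  · exact interleave_seqMultiset (fun i hi => ⟨(h₀ i hi).1, (hut i hi).le⟩)
      fun i hi => ⟨(h₁ i hi).1, ((ht (i + 1) hi).2.trans (hvu i hi)).le⟩
  · exact interleave_seqMultiset (fun i hi => ⟨hi, (ht i hi).2.le⟩)
      fun i hi => ⟨by omega, ((hvu i hi).trans (htu i hi)).le⟩

end StrictInterleaving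

lemma Interleave.exists_add_of_disjoint {s r : Multiset ℝ} (hsr : Interleave s r)
    (hdisj : Disjoint s r) {A B : ℝ} (hA : 0 < A) (hB : 0 < B) :
    ∃ L T, C A * rootPoly r + C B * rootPoly s = C L * rootPoly T ∧
      Interleave s T ∧ Interleave T r := by
  obtain ⟨n, u, hu, rfl⟩ := exists_antitoneOn_eq_seqMultiset s
  obtain ⟨m, v, hv, rfl⟩ := exists_antitoneOn_eq_seqMultiset r
  obtain ⟨h₀, h₁⟩ := le_of_interleave_seqMultiset hu hv hsr
  have hne : ∀ i < n, ∀ j < m, u i ≠ v j := fun i hi j hj heq =>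
    Multiset.disjoint_left.1 hdisj (mem_seqMultiset u hi) (heq ▸ mem_seqMultiset v hj)
  exact exists_add_eq_C_mul_rootPoly_of_strict hu hv
    (fun i hi => ⟨(h₀ i hi).1, (h₀ i hi).2.lt_of_ne (hne i hi i (h₀ i hi).1)⟩)
    (fun i hi => ⟨(h₁ i hi).1, (h₁ i hi).2.lt_of_ne (hne i (h₁ i hi).1 (i + 1) hi).symm⟩) hA hB

theorem Interleave.exists_add {s r : Multiset ℝ} (hsr : Interleave s r) {A B : ℝ}
    (hA : 0 ≤ A) (hB : 0 ≤ B) :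
    ∃ L T, C A * rootPoly r + C B * rootPoly s = C L * rootPoly T ∧
      Interleave s T ∧ Interleave T r := by
  rcases hA.eq_or_lt with rfl | hA
  · exact ⟨B, s, by simp, .refl s, hsr⟩
  rcases hB.eq_or_lt with rfl | hB
  · exact ⟨A, r, by simp, hsr, .refl r⟩
  induction s using Multiset.strongInductionOn generalizing r with
  | ih s ih =>
    by_cases hdisj : Disjoint s r
    · exact hsr.exists_add_of_disjoint hdisj hA hB
    obtain ⟨a, has, har⟩ : ∃ a ∈ s, a ∈ r := by
      simpa [Multiset.disjoint_left] using hdisj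
    obtain ⟨s, rfl⟩ := Multiset.exists_cons_of_mem has
    obtain ⟨r, rfl⟩ := Multiset.exists_cons_of_mem har
    obtain ⟨L, T, hT, hsT, hTr⟩ :=
      ih s (Multiset.lt_cons_self s a) (interleave_cons_iff.1 hsr)
    refine ⟨L, a ::ₘ T, ?_, interleave_cons_iff.2 hsT, interleave_cons_iff.2 hTr⟩
    simp only [rootPoly_cons]
    linear_combination (X - C a) * hT

lemma standard_iff_leadingCoeff_nonneg {f : ℝ[X]} : Standard f ↔ 0 ≤ f.leadingCoeff := by
  refine ⟨?_, fun h => ?_⟩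
  · rintro (rfl | h)
    · simp
    · exact h.le
  · rcases h.eq_or_lt with h | h
    · exact Or.inl (leadingCoeff_eq_zero.1 h.symm)
    · exact Or.inr h

lemma Standard.C_mul {f : ℝ[X]} (hf : Standard f) {a : ℝ} (ha : 0 ≤ a) : Standard (C a * f) := by
  rw [standard_iff_leadingCoeff_nonneg] at hf ⊢
  rw [leadingCoeff_mul, leadingCoeff_C]
  exact mul_nonneg ha hf

lemma Standard.add {f g : ℝ[X]} (hf : Standard f) (hg : Standard g) : Standard (f + g) := by
  rw [standard_iff_leadingCoeff_nonneg] at hf hg ⊢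
  rcases lt_trichotomy f.degree g.degree with h | h | h
  · rwa [leadingCoeff_add_of_degree_lt h]
  · rcases eq_or_ne (f.leadingCoeff + g.leadingCoeff) 0 with hsum | hsum
    · rwa [leadingCoeff_eq_zero.1 (by linarith : f.leadingCoeff = 0), zero_add]
    · rw [leadingCoeff_add_of_degree_eq h hsum]
      linarith
  · rwa [leadingCoeff_add_of_degree_lt' h]

lemma Prec.exists_interleave {f g : ℝ[X]} (h : Prec g f) :
    ∃ lf lg s r, f = C lf * rootPoly r ∧ g = C lg * rootPoly s ∧ Interleave s r := by
  have hext {k : ℕ} (w : Fin k → ℝ) (i : ℕ) (hi : i < k) :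
      Function.extend Fin.val w 0 i = w ⟨i, hi⟩ :=
    Fin.val_injective.extend_apply w 0 ⟨i, hi⟩
  have hprod {k : ℕ} (w : Fin k → ℝ) :
      ∏ i, (X - C (w i)) = rootPoly (seqMultiset k (Function.extend Fin.val w 0)) := by
    simp [rootPoly_seqMultiset, Fin.val_injective.extend_apply]
  rcases h with ⟨n, r, s, hf, hg, h₀, h₁⟩ | ⟨n, r, s, hf, hg, h⟩
  · refine ⟨f.leadingCoeff, g.leadingCoeff, _, _, hf.trans (by rw [hprod r]),
      hg.trans (by rw [hprod s]), interleave_seqMultiset (fun i hi => ⟨hi, ?_⟩)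
        fun i hi => ⟨by omega, ?_⟩⟩
    · rw [hext s i hi, hext r i hi]
      exact h₀ ⟨i, hi⟩
    · rw [hext r (i + 1) hi, hext s i (by omega)]
      exact h₁ i hi
  · refine ⟨f.leadingCoeff, g.leadingCoeff, _, _, hf.trans (by rw [hprod r]),
      hg.trans (by rw [hprod s]), interleave_seqMultiset (fun i hi => ⟨by omega, ?_⟩)
        fun i hi => ⟨by omega, ?_⟩⟩
    · rw [hext s i hi, hext r i (by omega)]
      exact (h ⟨i, hi⟩).2
    · rw [hext r (i + 1) hi, hext s i (by omega)]
      exact (h ⟨i, by omega⟩).1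

lemma Interleave.prec {s r : Multiset ℝ} (hsr : Interleave s r) {a b : ℝ} :
    Prec (C b * rootPoly s) (C a * rootPoly r) := by
  obtain ⟨n, u, hu, rfl⟩ := exists_antitoneOn_eq_seqMultiset s
  obtain ⟨m, v, hv, rfl⟩ := exists_antitoneOn_eq_seqMultiset r
  obtain ⟨h₀, h₁⟩ := le_of_interleave_seqMultiset hu hv hsr
  have hfac {k : ℕ} (w : ℕ → ℝ) (c : ℝ) : C c * rootPoly (seqMultiset k w) =
      C (C c * rootPoly (seqMultiset k w)).leadingCoeff * ∏ i : Fin k, (X - C (w i)) := by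
    rw [leadingCoeff_C_mul_rootPoly, rootPoly_seqMultiset]
  have hnm : n ≤ m := not_lt.1 fun h => lt_irrefl m (h₀ m h).1
  have hmn : m ≤ n + 1 := not_lt.1 fun h => lt_irrefl n (h₁ n h).1
  obtain rfl | rfl : m = n ∨ m = n + 1 := by omega
  · exact Or.inl ⟨m, fun i => v i, fun i => u i, hfac v a, hfac u b, fun i => (h₀ i i.2).2,
      fun i hi => (h₁ i hi).2⟩
  · exact Or.inr ⟨n, fun i => v i, fun i => u i, hfac v a, hfac u b,
      fun i => ⟨(h₁ i (by omega)).2, (h₀ i i.2).2⟩⟩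

lemma Prec.C_mul_left {f g : ℝ[X]} (h : Prec g f) (c : ℝ) : Prec (C c * g) f := by
  obtain ⟨lf, lg, s, r, rfl, rfl, hsr⟩ := h.exists_interleave
  rw [← mul_assoc, ← C_mul]
  exact hsr.prec

lemma Prec.C_mul_right {f g : ℝ[X]} (h : Prec g f) (c : ℝ) : Prec g (C c * f) := by
  obtain ⟨lf, lg, s, r, rfl, rfl, hsr⟩ := h.exists_interleave
  rw [← mul_assoc, ← C_mul]
  exact hsr.prec

theorem Prec.add {f g : ℝ[X]} (h : Prec g f) (hf : Standard f) (hg : Standard g) {α β : ℝ}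
    (hα : 0 ≤ α) (hβ : 0 ≤ β) :
    Prec g (C α * f + C β * g) ∧ Prec (C α * f + C β * g) f := by
  obtain ⟨lf, lg, s, r, rfl, rfl, hsr⟩ := h.exists_interleave
  rw [standard_iff_leadingCoeff_nonneg, leadingCoeff_C_mul_rootPoly] at hf hg
  obtain ⟨L, T, hT, hsT, hTr⟩ := hsr.exists_add (mul_nonneg hα hf) (mul_nonneg hβ hg)
  have hcomb : C α * (C lf * rootPoly r) + C β * (C lg * rootPoly s) = C L * rootPoly T := by
    rw [← hT, C_mul, C_mul]
    ring
  rw [hcomb]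
  exact ⟨hsT.prec, hTr.prec⟩

theorem cor_abcd_i_general (f g : Polynomial ℝ) (a b c d : ℝ)
    (ha : 0 ≤ a) (hb : 0 ≤ b) (hc : 0 ≤ c) (hd : 0 ≤ d)
    (hfs : Standard f) (hgs : Standard g)
    (hgf : Prec g f)
    (h : b * c ≤ a * d) :
    Prec (Polynomial.C c * f + Polynomial.C d * g) (Polynomial.C a * f + Polynomial.C b * g) ∧
    Prec g (Polynomial.C a * f + Polynomial.C b * g) ∧
    Prec (Polynomial.C a * f + Polynomial.C b * g) f := by
  obtain ⟨hgh, hhf⟩ := hgf.add hfs hgs ha hb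
  refine ⟨?_, hgh, hhf⟩
  rcases ha.eq_or_lt with rfl | ha
  · rcases hb.eq_or_lt with rfl | hb
    · simpa using ((hgf.add hfs hgs hc hd).2.C_mul_right 0)
    · obtain rfl : c = 0 := by nlinarith
      simpa using hgh.C_mul_left d
  have hk : C c * f + C d * g =
      C a⁻¹ * (C c * (C a * f + C b * g) + C (a * d - b * c) * g) := by
    have hinv : C a⁻¹ * C a = (1 : ℝ[X]) := by rw [← C_mul, inv_mul_cancel₀ ha.ne', C_1]
    rw [map_sub, map_mul, map_mul]
    linear_combination (-(C c * f + C d * g)) * hinv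
  rw [hk]
  exact (hgh.add ((hfs.C_mul ha.le).add (hgs.C_mul hb)) hgs hc (sub_nonneg.2 h)).2.C_mul_left a⁻¹

theorem cor_abcd_i (f g : Polynomial ℝ) (a b c d : ℝ)
    (ha : 0 ≤ a) (hb : 0 ≤ b) (hc : 0 ≤ c) (hd : 0 ≤ d)
    (hfs : Standard f) (hgs : Standard g)
    (hf : RealRooted f) (hg : RealRooted g) (hgf : Prec g f)
    (h : b * c ≤ a * d) :
    Prec (Polynomial.C c * f + Polynomial.C d * g) (Polynomial.C a * f + Polynomial.C b * g) ∧
    Prec g (Polynomial.C a * f + Polynomial.C b * g) ∧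
    Prec (Polynomial.C a * f + Polynomial.C b * g) f :=
  cor_abcd_i_general f g a b c d ha hb hc hd hfs hgs hgf h
end
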